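/- arXiv:math/0609132 — 11 statements merged into one kernel-verified Lean document; each statement's English description precedes it below -/
import Mathlib

section
/- Let X = X_1 × ... × X_d be a product of finite sets (each |X_i| ≥ 2), and let B, C be proper boxes in X. Then B and C are dichotomous (i.e., there exists i with B_i = X_i \ C_i) if and only if their hats (the sets of tuples (A_1,...,A_d) of odd subsets meeting each factor oddly) are disjoint. -/
/-!
The hats of `B` and `C` meet iff every coordinate admits an odd set `A` meeting both `Bᵢ` and
`Cᵢ` oddly. If `Bᵢ = Cᵢᶜ`, then `#A = #(A ∩ Bᵢ) + #(A ∩ Cᵢ)` is even, so no such `A` exists.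
Otherwise a witness is a point of `Bᵢ ∩ Cᵢ` if there is one; if not, `Bᵢ ⊊ Cᵢᶜ` and
`{z, b, c}` works for `b ∈ Bᵢ`, `c ∈ Cᵢ` and `z` outside `Bᵢ ∪ Cᵢ`.
-/

open Finset

namespace Finset

variable {α : Type*} [Fintype α] [DecidableEq α]

lemma not_odd_card_inter_compl_and_odd_card_inter {A : Finset α} (hA : Odd #A) (C : Finset α) :
    ¬ (Odd #(A ∩ Cᶜ) ∧ Odd #(A ∩ C)) := by
  rintro ⟨hAC', hAC⟩
  have hsplit : #(A ∩ Cᶜ) + #(A ∩ C) = #A := by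
    rw [← sdiff_eq_inter_compl, card_sdiff_add_card_inter]
  exact Nat.not_even_iff_odd.2 hA (hsplit ▸ hAC'.add_odd hAC)

lemma exists_odd_card_inter_of_ne_compl {B C : Finset α} (hB : B.Nonempty) (hC : C.Nonempty)
    (hBC : B ≠ Cᶜ) : ∃ A : Finset α, Odd #A ∧ Odd #(A ∩ B) ∧ Odd #(A ∩ C) := by
  by_cases hmeet : (B ∩ C).Nonempty
  · obtain ⟨x, hx⟩ := hmeet
    rw [mem_inter] at hx
    exact ⟨{x}, by simp [hx.1, hx.2]⟩
  have hdisj : Disjoint B C := disjoint_iff_inter_eq_empty.2 (not_nonempty_iff_eq_empty.1 hmeet)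
  obtain ⟨z, hzC, hzB⟩ :=
    exists_of_ssubset ((subset_compl_iff_disjoint_right.2 hdisj).ssubset_of_ne hBC)
  rw [mem_compl] at hzC
  obtain ⟨b, hb⟩ := hB
  obtain ⟨c, hc⟩ := hC
  have hbC : b ∉ C := disjoint_left.1 hdisj hb
  have hcB : c ∉ B := disjoint_right.1 hdisj hc
  have hzb : z ≠ b := by rintro rfl; exact hzB hb
  have hzc : z ≠ c := by rintro rfl; exact hzC hc
  have hbc : b ≠ c := by rintro rfl; exact hbC hc
  have hcard : #({z, b, c} : Finset α) = 3 := card_eq_three.2 ⟨z, b, c, hzb, hzc, hbc, rfl⟩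
  have hinterB : ({z, b, c} : Finset α) ∩ B = {b} := by grind
  have hinterC : ({z, b, c} : Finset α) ∩ C = {c} := by grind
  exact ⟨{z, b, c}, by simp [hcard, hinterB, hinterC, Nat.odd_iff]⟩

lemma exists_odd_card_inter_iff_ne_compl {B C : Finset α} (hB : B.Nonempty) (hC : C.Nonempty) :
    (∃ A : Finset α, Odd #A ∧ Odd #(A ∩ B) ∧ Odd #(A ∩ C)) ↔ B ≠ Cᶜ := by
  refine ⟨?_, exists_odd_card_inter_of_ne_compl hB hC⟩
  rintro ⟨A, hA, hAB, hAC⟩ rfl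
  exact not_odd_card_inter_compl_and_odd_card_inter hA C ⟨hAB, hAC⟩

end Finset

theorem stmt_2_general {d : ℕ} (X : Fin d → Type*) [∀ i, Fintype (X i)] [∀ i, DecidableEq (X i)]
    (B C : ∀ i, Finset (X i))
    (hB : ∀ i, (B i).Nonempty ∧ B i ≠ Finset.univ)
    (hC : ∀ i, (C i).Nonempty ∧ C i ≠ Finset.univ) :
    (∃ i, B i = (C i)ᶜ) ↔
      ∀ A : ∀ i, Finset (X i),
        ¬ ((∀ i, Odd (A i).card ∧ Odd (A i ∩ B i).card) ∧
           (∀ i, Odd (A i).card ∧ Odd (A i ∩ C i).card)) := by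
  have hcoord i := exists_odd_card_inter_iff_ne_compl (hB i).1 (hC i).1
  constructor
  · rintro ⟨i, hi⟩ A ⟨hAB, hAC⟩
    exact (hcoord i).1 ⟨A i, (hAB i).1, (hAB i).2, (hAC i).2⟩ hi
  · intro hdisj
    by_contra! hne
    choose A hA using fun i => (hcoord i).2 (hne i)
    exact hdisj A ⟨fun i => ⟨(hA i).1, (hA i).2.1⟩, fun i => ⟨(hA i).1, (hA i).2.2⟩⟩

/-- Two proper boxes `B`, `C` in a `d`-box `X` are dichotomous
(some `Bᵢ = Xᵢ \ Cᵢ`) iff their hats are disjoint. -/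
theorem stmt_2 {d : ℕ} (X : Fin d → Type*) [∀ i, Fintype (X i)] [∀ i, DecidableEq (X i)]
    (hX : ∀ i, 2 ≤ Fintype.card (X i))
    (B C : ∀ i, Finset (X i))
    (hB : ∀ i, (B i).Nonempty ∧ B i ≠ Finset.univ)
    (hC : ∀ i, (C i).Nonempty ∧ C i ≠ Finset.univ) :
    (∃ i, B i = (C i)ᶜ) ↔
      ∀ A : ∀ i, Finset (X i),
        ¬ ((∀ i, Odd (A i).card ∧ Odd (A i ∩ B i).card) ∧
           (∀ i, Odd (A i).card ∧ Odd (A i ∩ C i).card)) :=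
  stmt_2_general X B C hB hC
end

section
/- Let F be a polybox in a d-box X. Then any two proper suits (partitions into pairwise dichotomous proper boxes) for F have the same cardinality, namely |Ĥ(F)| / 2^(|X_1|+...+|X_d|-2d), where Ĥ(F) is the set of tuples of odd subsets of the factors meeting F in a set of odd cardinality. -/
/-!
For a tuple `S` of odd sets, the box `S₁ × ⋯ × S_d` meets `F` in `∑_{A ∈ 𝓕} ∏ᵢ |Aᵢ ∩ Sᵢ|`
points. Two dichotomous boxes have complementary sides `Aᵢ = Bᵢᶜ`, and `|Sᵢ|` odd forces one of
`|Aᵢ ∩ Sᵢ|`, `|Bᵢ ∩ Sᵢ|` to be even, so at most one summand is odd. Hence `Ĥ(F)` is the disjoint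
union over `A ∈ 𝓕` of the products of `{T odd : |Aᵢ ∩ T| odd}`, each factor of size `2^(|Xᵢ|-2)`,
and `|Ĥ(F)| = |𝓕| · 2^(∑ |Xᵢ| - 2d)` whatever the suit.
-/

open Finset
open scoped symmDiff

namespace Finset

variable {α : Type*}

lemma two_mul_card_filter_eq_card_of_involutive {s : Finset α} {p : α → Prop} [DecidablePred p]
    {f : α → α} (hf : Function.Involutive f) (hs : ∀ x ∈ s, f x ∈ s)
    (hp : ∀ x ∈ s, p (f x) ↔ ¬p x) :
    2 * #{x ∈ s | p x} = #s := by
  have hswap : #{x ∈ s | p x} = #{x ∈ s | ¬p x} :=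
    card_nbij' f f (fun x hx => by simp_all) (fun x hx => by simp_all)
      (fun x _ => hf x) (fun x _ => hf x)
  rw [two_mul]
  nth_rewrite 2 [hswap]
  exact card_filter_add_card_filter_not p

variable [DecidableEq α]

lemma odd_card_symmDiff_singleton_iff {s : Finset α} {a : α} :
    Odd #(s ∆ {a}) ↔ ¬Odd #s := by
  by_cases ha : a ∈ s
  · have hs : 0 < #s := card_pos.2 ⟨a, ha⟩
    rw [symmDiff_comm, symmDiff_of_le (singleton_subset_iff.2 ha), card_sdiff_of_subset
      (singleton_subset_iff.2 ha), card_singleton, ← Nat.not_even_iff_odd, Nat.even_sub' hs]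
    simp
  · rw [(disjoint_singleton_right.2 ha).symmDiff_eq_sup, sup_eq_union, card_union_of_disjoint
      (disjoint_singleton_right.2 ha), card_singleton, Nat.odd_add_one]

lemma not_odd_card_compl_inter [Fintype α] {A S : Finset α} (hS : Odd #S) (hA : Odd #(A ∩ S)) :
    ¬Odd #(Aᶜ ∩ S) := by
  have hsplit : #(A ∩ S) + #(Aᶜ ∩ S) = #S := by
    rw [inter_comm, inter_comm Aᶜ, ← sdiff_eq_inter_compl, card_inter_add_card_sdiff]
  rw [← hsplit, Nat.odd_add] at hS
  exact Nat.not_odd_iff_even.2 (hS.1 hA)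

/-- Toggling a point of `A` flips the parity of `#(A ∩ S)`; toggling a point outside `A` flips
that of `#S` only. -/
lemma card_filter_odd_card_odd_inter [Fintype α] {A : Finset α} (hA : A.Nonempty)
    (hA' : A ≠ univ) :
    #{S : Finset α | Odd #S ∧ Odd #(A ∩ S)} = 2 ^ (Fintype.card α - 2) := by
  obtain ⟨a, ha⟩ := hA
  obtain ⟨b, -, hb⟩ := exists_of_ssubset (ssubset_univ_iff.2 hA')
  have hdistrib (S c : Finset α) : A ∩ S ∆ c = (A ∩ S) ∆ (A ∩ c) :=
    inf_symmDiff_distrib_left A S c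
  have hodd_inter : 2 * #{S : Finset α | Odd #(A ∩ S)} = 2 ^ Fintype.card α := by
    rw [two_mul_card_filter_eq_card_of_involutive
      (f := (· ∆ {a})) (fun S => symmDiff_symmDiff_cancel_right {a} S)
      (fun _ _ => mem_univ _), card_univ, Fintype.card_finset]
    intro S _
    rw [hdistrib, inter_singleton_of_mem ha, odd_card_symmDiff_singleton_iff]
  have hodd_card :
      2 * #{S ∈ {S : Finset α | Odd #(A ∩ S)} | Odd #S} = #{S : Finset α | Odd #(A ∩ S)} := by
    refine two_mul_card_filter_eq_card_of_involutive
      (f := (· ∆ {b})) (fun S => symmDiff_symmDiff_cancel_right {b} S) ?_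
      (fun _ _ => odd_card_symmDiff_singleton_iff)
    intro S hS
    simp only [mem_filter, mem_univ, true_and] at hS ⊢
    rwa [hdistrib, inter_singleton_of_notMem hb, ← bot_eq_empty, symmDiff_bot]
  have hcard : 2 ≤ Fintype.card α := Fintype.one_lt_card_iff.2 ⟨a, b, ne_of_mem_of_not_mem ha hb⟩
  have hpow : 2 ^ Fintype.card α = 2 * (2 * 2 ^ (Fintype.card α - 2)) := by
    rw [← pow_succ', ← pow_succ']; congr 1; omega
  rw [filter_filter] at hodd_card
  rw [filter_congr fun S _ => and_comm]
  omega

lemma odd_prod_iff {ι : Type*} (s : Finset ι) (f : ι → ℕ) :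
    Odd (∏ i ∈ s, f i) ↔ ∀ i ∈ s, Odd (f i) := by
  simp only [← Nat.not_even_iff_odd, even_iff_two_dvd, Nat.prime_two.prime.dvd_finsetProd_iff]
  push Not
  rfl

end Finset

section Suits

variable {ι : Type*} [Fintype ι] [DecidableEq ι] {X : ι → Type*} [∀ i, Fintype (X i)]
  [∀ i, DecidableEq (X i)]

def IsDichotomous (𝓕 : Finset (∀ i, Finset (X i))) : Prop :=
  ∀ A ∈ 𝓕, ∀ B ∈ 𝓕, A ≠ B → ∃ i, A i = (B i)ᶜ

/-- `Ĥ(F)`. -/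
def oddHits (F : Finset (∀ i, X i)) : Finset (∀ i, Finset (X i)) :=
  {S | (∀ i, Odd #(S i)) ∧ Odd #(F ∩ univ.filter fun x => ∀ i, x i ∈ S i)}

variable {F : Finset (∀ i, X i)} {𝓕 : Finset (∀ i, Finset (X i))}

lemma IsDichotomous.pairwiseDisjoint_piFinset (h𝓕 : IsDichotomous 𝓕) :
    (𝓕 : Set (∀ i, Finset (X i))).PairwiseDisjoint Fintype.piFinset := by
  intro A hA B hB hAB
  obtain ⟨i, hi⟩ := h𝓕 A hA B hB hAB
  refine disjoint_left.2 fun x hxA hxB => ?_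
  rw [Fintype.mem_piFinset] at hxA hxB
  exact (mem_compl.1 (hi ▸ hxA i)) (hxB i)

lemma card_inter_piFinset (h𝓕 : IsDichotomous 𝓕) (hF : ∀ x, x ∈ F ↔ ∃ A ∈ 𝓕, ∀ i, x i ∈ A i)
    (S : ∀ i, Finset (X i)) :
    #(F ∩ Fintype.piFinset S) = ∑ A ∈ 𝓕, ∏ i, #(A i ∩ S i) := by
  have hF' : F = 𝓕.biUnion Fintype.piFinset := by
    ext x
    simp [hF]
  rw [hF', biUnion_inter, card_biUnion
    (h𝓕.pairwiseDisjoint_piFinset.mono fun A => inter_subset_left)]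
  simp_rw [← Fintype.piFinset_inter, Fintype.card_piFinset]

lemma odd_card_inter_piFinset_iff (h𝓕 : IsDichotomous 𝓕)
    (hF : ∀ x, x ∈ F ↔ ∃ A ∈ 𝓕, ∀ i, x i ∈ A i) {S : ∀ i, Finset (X i)} (hS : ∀ i, Odd #(S i)) :
    Odd #(F ∩ Fintype.piFinset S) ↔ ∃ A ∈ 𝓕, ∀ i, Odd #(A i ∩ S i) := by
  have hunique : #{A ∈ 𝓕 | ∀ i, Odd #(A i ∩ S i)} ≤ 1 := by
    refine card_le_one.2 fun A hA B hB => by_contra fun hAB => ?_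
    rw [mem_filter] at hA hB
    obtain ⟨i, hi⟩ := h𝓕 A hA.1 B hB.1 hAB
    exact not_odd_card_compl_inter (hS i) (hB.2 i) (hi ▸ hA.2 i)
  simp only [card_inter_piFinset h𝓕 hF, odd_sum_iff_odd_card_odd, odd_prod_iff, mem_univ,
    true_imp_iff]
  rw [← filter_nonempty_iff, ← card_pos]
  constructor
  · exact Odd.pos
  · intro h
    rw [show #{A ∈ 𝓕 | ∀ i, Odd #(A i ∩ S i)} = 1 by omega]
    exact odd_one

lemma oddHits_eq_biUnion (h𝓕 : IsDichotomous 𝓕) (hF : ∀ x, x ∈ F ↔ ∃ A ∈ 𝓕, ∀ i, x i ∈ A i) :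
    oddHits F = 𝓕.biUnion fun A =>
      Fintype.piFinset fun i => {T : Finset (X i) | Odd #T ∧ Odd #(A i ∩ T)} := by
  ext S
  have hbox : univ.filter (fun x => ∀ i, x i ∈ S i) = Fintype.piFinset S := by
    ext x
    simp
  simp only [oddHits, hbox, mem_filter, mem_univ, true_and, mem_biUnion, Fintype.mem_piFinset,
    forall_and]
  constructor
  · rintro ⟨hS, hodd⟩
    obtain ⟨A, hA, hAS⟩ := (odd_card_inter_piFinset_iff h𝓕 hF hS).1 hodd
    exact ⟨A, hA, hS, hAS⟩
  · rintro ⟨A, hA, hS, hAS⟩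
    exact ⟨hS, (odd_card_inter_piFinset_iff h𝓕 hF hS).2 ⟨A, hA, hAS⟩⟩

lemma card_oddHits (h𝓕p : ∀ A ∈ 𝓕, ∀ i, (A i).Nonempty ∧ A i ≠ univ) (h𝓕 : IsDichotomous 𝓕)
    (hF : ∀ x, x ∈ F ↔ ∃ A ∈ 𝓕, ∀ i, x i ∈ A i) :
    #(oddHits F) = #𝓕 * 2 ^ ∑ i, (Fintype.card (X i) - 2) := by
  rw [oddHits_eq_biUnion h𝓕 hF, card_biUnion, sum_const_nat]
  · intro A hA
    rw [Fintype.card_piFinset, ← prod_pow_eq_pow_sum]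
    exact prod_congr rfl fun i _ => card_filter_odd_card_odd_inter (h𝓕p A hA i).1 (h𝓕p A hA i).2
  · intro A hA B hB hAB
    obtain ⟨i, hi⟩ := h𝓕 A hA B hB hAB
    refine disjoint_left.2 fun S hSA hSB => ?_
    simp only [Fintype.mem_piFinset, mem_filter, mem_univ, true_and] at hSA hSB
    exact not_odd_card_compl_inter (hSB i).1 (hSB i).2 (hi ▸ (hSA i).2)

end Suits

theorem stmt_5_general {d : ℕ} (X : Fin d → Type*) [∀ i, Fintype (X i)] [∀ i, DecidableEq (X i)]
    (hX : ∀ i, 2 ≤ Fintype.card (X i))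
    (F : Finset (∀ i, X i))
    (𝓕 𝓖 : Finset (∀ i, Finset (X i)))
    (h𝓕p : ∀ A ∈ 𝓕, ∀ i, (A i).Nonempty ∧ A i ≠ Finset.univ)
    (h𝓖p : ∀ A ∈ 𝓖, ∀ i, (A i).Nonempty ∧ A i ≠ Finset.univ)
    (h𝓕d : ∀ A ∈ 𝓕, ∀ B ∈ 𝓕, A ≠ B → ∃ i, A i = (B i)ᶜ)
    (h𝓖d : ∀ A ∈ 𝓖, ∀ B ∈ 𝓖, A ≠ B → ∃ i, A i = (B i)ᶜ)
    (h𝓕u : ∀ x, x ∈ F ↔ ∃ A ∈ 𝓕, ∀ i, x i ∈ A i)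
    (h𝓖u : ∀ x, x ∈ F ↔ ∃ A ∈ 𝓖, ∀ i, x i ∈ A i) :
    𝓕.card = 𝓖.card ∧
    𝓕.card = (Finset.univ.filter (fun A : ∀ i, Finset (X i) =>
        (∀ i, Odd (A i).card) ∧
        Odd ((F ∩ Finset.univ.filter (fun x => ∀ i, x i ∈ A i)).card))).card
      / 2 ^ ((∑ i, Fintype.card (X i)) - 2 * d) := by
  have hexp : ∑ i, (Fintype.card (X i) - 2) = ∑ i, Fintype.card (X i) - 2 * d := by
    rw [sum_tsub_distrib _ fun i _ => hX i]
    simp [mul_comm]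
  have h𝓕 := card_oddHits h𝓕p h𝓕d h𝓕u
  have h𝓖 := card_oddHits h𝓖p h𝓖d h𝓖u
  rw [hexp] at h𝓕 h𝓖
  have hpos : 0 < 2 ^ (∑ i, Fintype.card (X i) - 2 * d) := by positivity
  refine ⟨Nat.eq_of_mul_eq_mul_right hpos (h𝓕.symm.trans h𝓖), ?_⟩
  -- `∀ i : Fin d` is decided by a different instance here than in `oddHits`.
  convert (Nat.div_eq_of_eq_mul_left hpos h𝓕).symm using 3
  unfold oddHits
  congr!

/-- any two proper suits for a polybox `F` have the same cardinality,
namely `|Ĥ(F)| / 2^(|X₁|+⋯+|X_d|−2d)`. -/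
theorem stmt_5 {d : ℕ} (X : Fin d → Type*) [∀ i, Fintype (X i)] [∀ i, DecidableEq (X i)]
    (hX : ∀ i, 2 ≤ Fintype.card (X i))
    (F : Finset (∀ i, X i)) (hFne : F.Nonempty)
    (𝓕 𝓖 : Finset (∀ i, Finset (X i)))
    (h𝓕p : ∀ A ∈ 𝓕, ∀ i, (A i).Nonempty ∧ A i ≠ Finset.univ)
    (h𝓖p : ∀ A ∈ 𝓖, ∀ i, (A i).Nonempty ∧ A i ≠ Finset.univ)
    (h𝓕d : ∀ A ∈ 𝓕, ∀ B ∈ 𝓕, A ≠ B → ∃ i, A i = (B i)ᶜ)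
    (h𝓖d : ∀ A ∈ 𝓖, ∀ B ∈ 𝓖, A ≠ B → ∃ i, A i = (B i)ᶜ)
    (h𝓕u : ∀ x, x ∈ F ↔ ∃ A ∈ 𝓕, ∀ i, x i ∈ A i)
    (h𝓖u : ∀ x, x ∈ F ↔ ∃ A ∈ 𝓖, ∀ i, x i ∈ A i) :
    𝓕.card = 𝓖.card ∧
    𝓕.card = (Finset.univ.filter (fun A : ∀ i, Finset (X i) =>
        (∀ i, Odd (A i).card) ∧
        Odd ((F ∩ Finset.univ.filter (fun x => ∀ i, x i ∈ A i)).card))).card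
      / 2 ^ ((∑ i, Fintype.card (X i)) - 2 * d) :=
  stmt_5_general X hX F 𝓕 𝓖 h𝓕p h𝓖p h𝓕d h𝓖d h𝓕u h𝓖u
end

section
/- Let F be a polybox contained in a d-box X = X_1 × ... × X_d (finite factors, sizes ≥ 2). If F admits a proper suit (partition into pairwise dichotomous proper boxes) of size 2^d, then F = X. -/
/-!
Record, for a point `x` and a box `A`, in which factors `x i` lies in `A i`. If some factor of `A`
is the complement of the corresponding factor of `B`, then `x` lies in exactly one of them, so
dichotomous boxes have different records. A suit of `2 ^ d` boxes therefore realises all `2 ^ d`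
records, in particular the record "in every factor", which says that `x` lies in some box.
-/

section

variable {ι : Type*} {X : ι → Type*} [∀ i, Fintype (X i)] [∀ i, DecidableEq (X i)]

def memSignature (x : ∀ i, X i) (A : ∀ i, Finset (X i)) : ι → Bool :=
  fun i => decide (x i ∈ A i)

theorem injOn_memSignature {𝓕 : Set (∀ i, Finset (X i))}
    (h𝓕d : ∀ A ∈ 𝓕, ∀ B ∈ 𝓕, A ≠ B → ∃ i, A i = (B i)ᶜ) (x : ∀ i, X i) :
    Set.InjOn (memSignature x) 𝓕 := by
  intro A hA B hB hAB
  by_contra hne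
  obtain ⟨i, hi⟩ := h𝓕d A hA B hB hne
  have := congrFun hAB i
  simp only [memSignature, hi, Finset.mem_compl, decide_eq_decide] at this
  exact (iff_not_self this.symm).elim

theorem exists_mem_box_of_card_eq [Fintype ι] [DecidableEq ι] {𝓕 : Finset (∀ i, Finset (X i))}
    (h𝓕d : ∀ A ∈ 𝓕, ∀ B ∈ 𝓕, A ≠ B → ∃ i, A i = (B i)ᶜ)
    (hcard : 𝓕.card = 2 ^ Fintype.card ι) (x : ∀ i, X i) :
    ∃ A ∈ 𝓕, ∀ i, x i ∈ A i := by
  have himage : 𝓕.image (memSignature x) = Finset.univ := by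
    apply Finset.eq_univ_of_card
    rw [Finset.card_image_of_injOn (injOn_memSignature h𝓕d x), hcard]
    simp
  obtain ⟨A, hA, hsig⟩ := Finset.mem_image.mp (himage ▸ Finset.mem_univ (fun _ => true))
  exact ⟨A, hA, fun i => by simpa [memSignature] using congrFun hsig i⟩

end

theorem stmt_6_general {d : ℕ} (X : Fin d → Type*) [∀ i, Fintype (X i)] [∀ i, DecidableEq (X i)]
    (F : Set (∀ i, X i))
    (𝓕 : Finset (∀ i, Finset (X i)))
    (h𝓕d : ∀ A ∈ 𝓕, ∀ B ∈ 𝓕, A ≠ B → ∃ i, A i = (B i)ᶜ)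
    (h𝓕u : F = {x | ∃ A ∈ 𝓕, ∀ i, x i ∈ A i})
    (hcard : 𝓕.card = 2 ^ d) :
    F = Set.univ := by
  subst h𝓕u
  exact Set.eq_univ_of_forall
    (exists_mem_box_of_card_eq h𝓕d (by rwa [Fintype.card_fin]))

/-- if a polybox `F` in a `d`-box `X` admits a proper suit of size `2^d`,
then `F = X`. -/
theorem stmt_6 {d : ℕ} (X : Fin d → Type*) [∀ i, Fintype (X i)] [∀ i, DecidableEq (X i)]
    (hX : ∀ i, 2 ≤ Fintype.card (X i))
    (F : Set (∀ i, X i))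
    (𝓕 : Finset (∀ i, Finset (X i)))
    (h𝓕p : ∀ A ∈ 𝓕, ∀ i, (A i).Nonempty ∧ A i ≠ Finset.univ)
    (h𝓕d : ∀ A ∈ 𝓕, ∀ B ∈ 𝓕, A ≠ B → ∃ i, A i = (B i)ᶜ)
    (h𝓕u : F = {x | ∃ A ∈ 𝓕, ∀ i, x i ∈ A i})
    (hcard : 𝓕.card = 2 ^ d) :
    F = Set.univ :=
  stmt_6_general X F 𝓕 h𝓕d h𝓕u hcard
end

section
/- Let F and G be disjoint polyboxes in a d-box X. Suppose there exist proper suits F' for F and G' for G such that F' ∪ G' is a suit (all boxes pairwise dichotomous). Then for every pair of proper suits F'' for F and G'' for G, the union F'' ∪ G'' is also a suit for F ∪ G. -/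
/-- A proper suit for `F`: a family of pairwise dichotomous proper boxes whose union is `F`. -/
def IsProperSuitFor {d : ℕ} (X : Fin d → Type*) [∀ i, Fintype (X i)] [∀ i, DecidableEq (X i)]
    (F : Set (∀ i, X i)) (𝓕 : Finset (∀ i, Finset (X i))) : Prop :=
  (∀ A ∈ 𝓕, ∀ i, (A i).Nonempty ∧ A i ≠ Finset.univ) ∧
  (∀ A ∈ 𝓕, ∀ B ∈ 𝓕, A ≠ B → ∃ i, A i = (B i)ᶜ) ∧
  F = {x | ∃ A ∈ 𝓕, ∀ i, x i ∈ A i}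

section Aux

variable {d : ℕ} {X : Fin d → Type*} [∀ i, Fintype (X i)] [∀ i, DecidableEq (X i)]

/-- Summing a product weight over a polybox equals the sum over the suit of the
box-products of coordinate weight sums. -/
lemma suit_sum (F : Set (∀ i, X i)) (𝓕 : Finset (∀ i, Finset (X i)))
    (hd : ∀ A ∈ 𝓕, ∀ B ∈ 𝓕, A ≠ B → ∃ i, A i = (B i)ᶜ)
    (hcov : F = {x | ∃ A ∈ 𝓕, ∀ i, x i ∈ A i})
    (μ : ∀ i, X i → ℤ) :
    ∑ x : ∀ i, X i, F.indicator (fun x => ∏ i, μ i (x i)) x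
      = ∑ A ∈ 𝓕, ∏ i, ∑ t ∈ A i, μ i t := by
  classical
  have hrhs : ∀ A : ∀ i, Finset (X i), (∏ i, ∑ t ∈ A i, μ i t)
      = ∑ x : ∀ i, X i, if (∀ i, x i ∈ A i) then ∏ i, μ i (x i) else 0 := by
    intro A
    rw [Finset.prod_univ_sum]
    rw [← Finset.sum_filter]
    apply Finset.sum_congr
    · ext x
      simp [Fintype.mem_piFinset]
    · intros; rfl
  rw [Finset.sum_congr rfl fun A _ => hrhs A, Finset.sum_comm]
  apply Finset.sum_congr rfl
  intro x _
  by_cases hx : x ∈ F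
  · obtain ⟨A₀, hA₀, hxA₀⟩ := (hcov ▸ hx : x ∈ {x | ∃ A ∈ 𝓕, ∀ i, x i ∈ A i})
    rw [Set.indicator_of_mem hx]
    rw [Finset.sum_eq_single_of_mem A₀ hA₀]
    · rw [if_pos hxA₀]
    · intro B hB hBne
      rw [if_neg]
      intro hxB
      obtain ⟨j, hj⟩ := hd B hB A₀ hA₀ hBne
      have := hxB j
      rw [hj, Finset.mem_compl] at this
      exact this (hxA₀ j)
  · rw [Set.indicator_of_notMem hx]
    symm
    apply Finset.sum_eq_zero
    intro A hA
    rw [if_neg]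
    intro hxA
    exact hx (hcov ▸ (⟨A, hA, hxA⟩ : ∃ A ∈ 𝓕, ∀ i, x i ∈ A i))

/-- Key lemma: if a proper box `B` is dichotomous to every box of some proper suit of `F`,
then it is dichotomous to every box of every proper suit of `F`. -/
lemma dich_transfer (F : Set (∀ i, X i)) (𝓕₀ 𝓕 : Finset (∀ i, Finset (X i)))
    (h₀ : IsProperSuitFor X F 𝓕₀) (h : IsProperSuitFor X F 𝓕)
    (B : ∀ i, Finset (X i)) (hBne : ∀ i, (B i).Nonempty)
    (hdich : ∀ C ∈ 𝓕₀, ∃ i, C i = (B i)ᶜ)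
    (A : ∀ i, Finset (X i)) (hA : A ∈ 𝓕) :
    ∃ i, A i = (B i)ᶜ := by
  classical
  by_contra hcon
  push_neg at hcon
  have hchoice : ∀ i, ∃ μi : X i → ℤ,
      (∑ t ∈ A i, μi t = 1) ∧ (∑ t ∈ (A i)ᶜ, μi t = 0) ∧ (∑ t ∈ (B i)ᶜ, μi t = 0) := by
    intro i
    by_cases hi : (A i ∩ B i).Nonempty
    · obtain ⟨p, hp⟩ := hi
      rw [Finset.mem_inter] at hp
      refine ⟨fun t => if t = p then 1 else 0, ?_, ?_, ?_⟩
      · rw [Finset.sum_ite_eq' (A i) p (fun _ => (1 : ℤ)), if_pos hp.1]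
      · rw [Finset.sum_ite_eq' (A i)ᶜ p (fun _ => (1 : ℤ)), if_neg (by simp [hp.1])]
      · rw [Finset.sum_ite_eq' (B i)ᶜ p (fun _ => (1 : ℤ)), if_neg (by simp [hp.2])]
    · -- A i and B i are disjoint, and A i ≠ (B i)ᶜ, so A i ⊊ (B i)ᶜ
      have hsub : A i ⊆ (B i)ᶜ := by
        intro t ht
        rw [Finset.mem_compl]
        intro htB
        exact hi ⟨t, Finset.mem_inter.2 ⟨ht, htB⟩⟩
      obtain ⟨c, hcB, hcA⟩ := Finset.exists_of_ssubset (lt_of_le_of_ne hsub (hcon i))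
      obtain ⟨a, ha⟩ := (h.1 A hA i).1
      obtain ⟨b, hb⟩ := hBne i
      have hbA : b ∉ A i := fun hbA => hi ⟨b, Finset.mem_inter.2 ⟨hbA, hb⟩⟩
      have haB : a ∈ (B i)ᶜ := hsub ha
      have hbB : b ∉ (B i)ᶜ := by simp [hb]
      refine ⟨fun t => (if t = a then 1 else 0) + (if t = b then 1 else 0)
        - (if t = c then 1 else 0), ?_, ?_, ?_⟩
      · simp only [Finset.sum_sub_distrib, Finset.sum_add_distrib,
          Finset.sum_ite_eq' _ a (fun _ => (1 : ℤ)),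
          Finset.sum_ite_eq' _ b (fun _ => (1 : ℤ)),
          Finset.sum_ite_eq' _ c (fun _ => (1 : ℤ))]
        rw [if_pos ha, if_neg hbA, if_neg hcA]
        ring
      · simp only [Finset.sum_sub_distrib, Finset.sum_add_distrib,
          Finset.sum_ite_eq' _ a (fun _ => (1 : ℤ)),
          Finset.sum_ite_eq' _ b (fun _ => (1 : ℤ)),
          Finset.sum_ite_eq' _ c (fun _ => (1 : ℤ))]
        rw [if_neg (by simp [ha]), if_pos (Finset.mem_compl.2 hbA),
          if_pos (Finset.mem_compl.2 hcA)]
        ring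
      · simp only [Finset.sum_sub_distrib, Finset.sum_add_distrib,
          Finset.sum_ite_eq' _ a (fun _ => (1 : ℤ)),
          Finset.sum_ite_eq' _ b (fun _ => (1 : ℤ)),
          Finset.sum_ite_eq' _ c (fun _ => (1 : ℤ))]
        rw [if_pos haB, if_neg hbB, if_pos hcB]
        ring
  choose μ hμ1 hμ2 hμ3 using hchoice
  have e₀ := suit_sum F 𝓕₀ h₀.2.1 h₀.2.2 μ
  have e := suit_sum F 𝓕 h.2.1 h.2.2 μ
  -- via 𝓕₀ the sum is 0
  have z₀ : ∑ C ∈ 𝓕₀, ∏ i, ∑ t ∈ C i, μ i t = 0 := by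
    apply Finset.sum_eq_zero
    intro C hC
    obtain ⟨j, hj⟩ := hdich C hC
    apply Finset.prod_eq_zero (Finset.mem_univ j)
    rw [hj]; exact hμ3 j
  -- via 𝓕 the sum is 1
  have z : ∑ C ∈ 𝓕, ∏ i, ∑ t ∈ C i, μ i t = 1 := by
    rw [Finset.sum_eq_single_of_mem A hA]
    · exact Finset.prod_eq_one fun i _ => hμ1 i
    · intro C hC hCne
      obtain ⟨j, hj⟩ := h.2.1 C hC A hA hCne
      apply Finset.prod_eq_zero (Finset.mem_univ j)
      rw [hj]; exact hμ2 j
  rw [z₀] at e₀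
  rw [z] at e
  rw [e₀] at e
  exact one_ne_zero e.symm

/-- a proper box (all coordinates nonempty) contains a point -/
lemma box_nonempty (A : ∀ i, Finset (X i)) (hne : ∀ i, (A i).Nonempty) :
    ∃ x : ∀ i, X i, ∀ i, x i ∈ A i := by
  choose x hx using hne
  exact ⟨x, hx⟩

end Aux

/-- if `F`, `G` are disjoint polyboxes having proper suits `𝓕₀`, `𝓖₀`
whose union is a suit, then for every pair of proper suits `𝓕`, `𝓖` for `F` and `G`,
the union `𝓕 ∪ 𝓖` is a suit for `F ∪ G`. -/
theorem stmt_7 {d : ℕ} (X : Fin d → Type*) [∀ i, Fintype (X i)] [∀ i, DecidableEq (X i)]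
    (hX : ∀ i, 2 ≤ Fintype.card (X i))
    (F G : Set (∀ i, X i)) (hFne : F.Nonempty) (hGne : G.Nonempty)
    (hdisj : Disjoint F G)
    (𝓕₀ 𝓖₀ : Finset (∀ i, Finset (X i)))
    (h𝓕₀ : IsProperSuitFor X F 𝓕₀) (h𝓖₀ : IsProperSuitFor X G 𝓖₀)
    (h0 : ∀ A ∈ 𝓕₀ ∪ 𝓖₀, ∀ B ∈ 𝓕₀ ∪ 𝓖₀, A ≠ B → ∃ i, A i = (B i)ᶜ) :
    ∀ 𝓕 𝓖 : Finset (∀ i, Finset (X i)),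
      IsProperSuitFor X F 𝓕 → IsProperSuitFor X G 𝓖 →
      IsProperSuitFor X (F ∪ G) (𝓕 ∪ 𝓖) := by
  intro 𝓕 𝓖 h𝓕 h𝓖
  classical
  -- boxes of 𝓕₀ and 𝓖₀ are distinct (they lie in disjoint nonempty parts)
  have hne₀ : ∀ C ∈ 𝓕₀, ∀ D ∈ 𝓖₀, C ≠ D := by
    intro C hC D hD hCD
    obtain ⟨x, hx⟩ := box_nonempty C (fun i => (h𝓕₀.1 C hC i).1)
    have hxF : x ∈ F := h𝓕₀.2.2 ▸ ⟨C, hC, hx⟩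
    have hxG : x ∈ G := h𝓖₀.2.2 ▸ ⟨D, hD, fun i => hCD ▸ hx i⟩
    exact Set.disjoint_left.mp hdisj hxF hxG
  -- every box of 𝓕 is dichotomous to every box of 𝓖₀
  have step1 : ∀ A ∈ 𝓕, ∀ D ∈ 𝓖₀, ∃ i, A i = (D i)ᶜ := by
    intro A hA D hD
    exact dich_transfer F 𝓕₀ 𝓕 h𝓕₀ h𝓕 D (fun i => (h𝓖₀.1 D hD i).1)
      (fun C hC => h0 C (Finset.mem_union_left _ hC) D (Finset.mem_union_right _ hD)
        (hne₀ C hC D hD)) A hA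
  -- every box of 𝓕 is dichotomous to every box of 𝓖
  have step2 : ∀ A ∈ 𝓕, ∀ B ∈ 𝓖, ∃ i, B i = (A i)ᶜ := by
    intro A hA B hB
    refine dich_transfer G 𝓖₀ 𝓖 h𝓖₀ h𝓖 A (fun i => (h𝓕.1 A hA i).1) ?_ B hB
    intro D hD
    obtain ⟨i, hi⟩ := step1 A hA D hD
    exact ⟨i, by rw [hi, compl_compl]⟩
  refine ⟨?_, ?_, ?_⟩
  · intro A hA i
    rcases Finset.mem_union.mp hA with h' | h'
    · exact h𝓕.1 A h' i
    · exact h𝓖.1 A h' i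
  · intro A hA B hB hAB
    rcases Finset.mem_union.mp hA with hA' | hA' <;>
      rcases Finset.mem_union.mp hB with hB' | hB'
    · exact h𝓕.2.1 A hA' B hB' hAB
    · obtain ⟨i, hi⟩ := step2 A hA' B hB'
      exact ⟨i, by rw [hi, compl_compl]⟩
    · exact step2 B hB' A hA'
    · exact h𝓖.2.1 A hA' B hB' hAB
  · rw [h𝓕.2.2, h𝓖.2.2]
    ext x
    simp only [Set.mem_union, Set.mem_setOf_eq, Finset.mem_union]
    constructor
    · rintro (⟨A, hA, hx⟩ | ⟨A, hA, hx⟩)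
      · exact ⟨A, Or.inl hA, hx⟩
      · exact ⟨A, Or.inr hA, hx⟩
    · rintro ⟨A, hA | hA, hx⟩
      · exact Or.inl ⟨A, hA, hx⟩
      · exact Or.inr ⟨A, hA, hx⟩
end

section
/- Let X be a finite set, |X| ≥ 2. For each odd-cardinality subset B ⊆ X, define η_B on nonempty proper subsets A of X by η_B(A) = [|A ∩ B| is odd]. Then {η_B : B ⊆ X, |B| odd} is a basis of the real vector space of additive functions on proper subsets of X (functions g with g(A)+g(X\A) constant); in particular that space has dimension 2^(|X|−1). -/
/-- The nonempty proper subsets of a finite set `X`. -/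
abbrev PSub (X : Type) [Fintype X] [DecidableEq X] :=
  {A : Finset X // A.Nonempty ∧ A ≠ Finset.univ}

/-- Complementation on nonempty proper subsets. -/
def pcompl {X : Type} [Fintype X] [DecidableEq X] (A : PSub X) : PSub X :=
  ⟨(A.1)ᶜ, by
    obtain ⟨hne, hnu⟩ := A.2
    refine ⟨?_, ?_⟩
    · rw [Finset.nonempty_iff_ne_empty]
      simpa using hnu
    · intro h
      rw [Finset.compl_eq_univ_iff] at h
      exact Finset.nonempty_iff_ne_empty.mp hne h⟩

/-- A function on proper subsets is additive iff `g A + g (X \ A)` is constant. -/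
def IsAdditive1 {X : Type} [Fintype X] [DecidableEq X] (g : PSub X → ℝ) : Prop :=
  ∃ s : ℝ, ∀ A : PSub X, g A + g (pcompl A) = s

/-- The function `η_B(A) = [|A ∩ B| is odd]` on proper subsets. -/
def eta {X : Type} [Fintype X] [DecidableEq X] (B : Finset X) : PSub X → ℝ :=
  fun A => if Odd (A.1 ∩ B).card then 1 else 0


set_option linter.unusedSectionVars false
section Aux
variable {X : Type} [Fintype X] [DecidableEq X]


lemma sum_prod_eq (f : X → ℝ) : ∑ A : Finset X, ∏ x ∈ A, f x = ∏ x : X, (f x + 1) := by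
  rw [Finset.prod_add, Finset.powerset_univ]
  simp

noncomputable def chi (B A : Finset X) : ℝ := ∏ x ∈ A, (if x ∈ B then (-1:ℝ) else 1)

set_option linter.unusedSectionVars false

lemma chi_eq_pow (B A : Finset X) : chi B A = (-1 : ℝ) ^ (A ∩ B).card := by
  rw [chi, Finset.prod_ite, Finset.prod_const, Finset.prod_const, Finset.filter_mem_eq_inter]
  simp

lemma sum_chi (B : Finset X) :
    ∑ A : Finset X, chi B A = if B = ∅ then (2:ℝ) ^ Fintype.card X else 0 := by
  rw [show (∑ A : Finset X, chi B A) = ∑ A : Finset X, ∏ x ∈ A, (if x ∈ B then (-1:ℝ) else 1) from rfl,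
    sum_prod_eq]
  by_cases hB : B = ∅
  · subst hB; simp [Finset.prod_const]; norm_num
  · rw [if_neg hB]
    obtain ⟨x, hx⟩ := Finset.nonempty_iff_ne_empty.mpr hB
    exact Finset.prod_eq_zero (Finset.mem_univ x) (by simp [hx])

lemma sum_chi_mul (B B' : Finset X) :
    ∑ A : Finset X, chi B A * chi B' A = if B = B' then (2:ℝ) ^ Fintype.card X else 0 := by
  have : ∀ A : Finset X, chi B A * chi B' A
      = ∏ x ∈ A, ((if x ∈ B then (-1:ℝ) else 1) * (if x ∈ B' then (-1:ℝ) else 1)) := by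
    intro A; rw [chi, chi, ← Finset.prod_mul_distrib]
  simp_rw [this]
  rw [sum_prod_eq]
  by_cases hB : B = B'
  · subst hB
    rw [if_pos rfl]
    rw [show (∏ x : X, ((if x ∈ B then (-1:ℝ) else 1) * (if x ∈ B then (-1:ℝ) else 1) + 1)) = ∏ _x : X, (2:ℝ) from Finset.prod_congr rfl (fun x _ => by by_cases h : x ∈ B <;> simp [h] <;> norm_num)]
    simp [Finset.prod_const]
  · rw [if_neg hB]
    have : ∃ x, ¬ (x ∈ B ↔ x ∈ B') := by
      by_contra h
      push_neg at h
      exact hB (Finset.ext fun x => (h x))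
    obtain ⟨x, hx⟩ := this
    refine Finset.prod_eq_zero (Finset.mem_univ x) ?_
    by_cases h1 : x ∈ B <;> by_cases h2 : x ∈ B' <;> simp [h1, h2] at hx ⊢

noncomputable def etahat (B A : Finset X) : ℝ := if Odd (A ∩ B).card then 1 else 0

lemma etahat_eq (B A : Finset X) : etahat B A = (1 - chi B A) / 2 := by
  rw [etahat, chi_eq_pow]
  by_cases h : Odd (A ∩ B).card
  · rw [if_pos h, h.neg_one_pow]; norm_num
  · rw [if_neg h, (Nat.not_odd_iff_even.mp h).neg_one_pow]; norm_num

lemma sum_etahat_chi (B B₀ : Finset X) :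
    ∑ A : Finset X, etahat B A * chi B₀ A =
      ((if B₀ = ∅ then (2:ℝ) ^ Fintype.card X else 0)
        - (if B = B₀ then (2:ℝ) ^ Fintype.card X else 0)) / 2 := by
  simp_rw [etahat_eq, div_mul_eq_mul_div, sub_mul, one_mul]
  rw [← Finset.sum_div, Finset.sum_sub_distrib, sum_chi, sum_chi_mul]

lemma lin_indep (h2 : 2 ≤ Fintype.card X) :
    LinearIndependent ℝ (fun B : {B : Finset X // Odd B.card} => eta B.1) := by
  rw [Fintype.linearIndependent_iff]
  intro g hg
  set S : ℝ := ∑ B : {B : Finset X // Odd B.card}, g B with hS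
  have h_eq : ∀ A : Finset X,
      (∑ B : {B : Finset X // Odd B.card}, g B * etahat B.1 A) = if A = Finset.univ then S else 0 := by
    intro A
    by_cases hu : A = Finset.univ
    · subst hu
      rw [if_pos rfl, hS]
      refine Finset.sum_congr rfl fun B _ => ?_
      rw [etahat, Finset.univ_inter, if_pos B.2, mul_one]
    · rw [if_neg hu]
      by_cases hne : A.Nonempty
      · have h0 := congrFun hg ⟨A, hne, hu⟩
        rw [Finset.sum_apply] at h0
        simpa [eta, etahat] using h0
      · rw [Finset.not_nonempty_iff_eq_empty] at hne
        subst hne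
        simp [etahat, Nat.not_odd_iff_even]
  have key : ∀ B₀ : Finset X, S * chi B₀ Finset.univ =
      ∑ B : {B : Finset X // Odd B.card}, g B *
        (((if B₀ = ∅ then (2:ℝ) ^ Fintype.card X else 0)
          - (if B.1 = B₀ then (2:ℝ) ^ Fintype.card X else 0)) / 2) := by
    intro B₀
    have lhs : ∑ A : Finset X,
        (∑ B : {B : Finset X // Odd B.card}, g B * etahat B.1 A) * chi B₀ A
        = S * chi B₀ Finset.univ := by
      simp_rw [h_eq, ite_mul, zero_mul]
      rw [Finset.sum_ite_eq' Finset.univ Finset.univ (fun A => S * chi B₀ A)]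
      simp
    rw [← lhs]
    simp_rw [Finset.sum_mul]
    rw [Finset.sum_comm]
    simp_rw [mul_assoc]
    simp_rw [← Finset.mul_sum, sum_etahat_chi]
  -- Step 1: S = 0
  have hS0 : S = 0 := by
    have k := key ∅
    have hchi1 : chi (∅ : Finset X) Finset.univ = 1 := by
      simp [chi]
    rw [hchi1, mul_one, if_pos rfl] at k
    have hBne : ∀ B : {B : Finset X // Odd B.card}, (B.1 = (∅ : Finset X)) = False := by
      intro B
      simp only [eq_iff_iff, iff_false]
      intro h
      have := B.2
      rw [h] at this
      simp at this
    simp only [hBne, if_false] at k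
    have k2 : S * ((2:ℝ) ^ Fintype.card X / 2) = S := by
      conv_rhs => rw [k]
      rw [hS, Finset.sum_mul]
      exact Finset.sum_congr rfl fun B _ => by ring
    have h4 : (4:ℝ) ≤ (2:ℝ) ^ Fintype.card X := by
      calc (4:ℝ) = 2^2 := by norm_num
      _ ≤ 2 ^ Fintype.card X := pow_le_pow_right₀ (by norm_num) h2
    nlinarith [k2]
  -- Step 2: each coefficient vanishes
  intro Bc
  have k := key Bc.1
  have hchiu : chi Bc.1 Finset.univ = -1 := by
    rw [chi_eq_pow, Finset.univ_inter, Bc.2.neg_one_pow]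
  have hBone : (Bc.1 = (∅ : Finset X)) = False := by
    simp only [eq_iff_iff, iff_false]
    intro h
    have := Bc.2
    rw [h] at this
    simp at this
  rw [hchiu, hS0, zero_mul] at k
  simp only [hBone, if_false] at k
  have : ∀ B : {B : Finset X // Odd B.card}, (B.1 = Bc.1) = (B = Bc) := by
    intro B; simp [Subtype.ext_iff]
  simp only [this, zero_sub] at k
  have k2 : (0:ℝ) = g Bc * (-((2:ℝ) ^ Fintype.card X) / 2) := by
    rw [k]
    rw [Finset.sum_eq_single Bc]
    · rw [if_pos rfl]
    · intro B _ hB; rw [if_neg hB]; ring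
    · intro h; exact absurd (Finset.mem_univ Bc) h
  have h2n : (2:ℝ) ^ Fintype.card X ≠ 0 := by positivity
  have := mul_eq_zero.mp k2.symm
  rcases this with h | h
  · exact h
  · exfalso
    apply h2n
    have : -((2:ℝ) ^ Fintype.card X) / 2 = 0 := h
    linarith



def flipx (x₀ : X) : Finset X ≃ Finset X where
  toFun A := if x₀ ∈ A then A.erase x₀ else insert x₀ A
  invFun A := if x₀ ∈ A then A.erase x₀ else insert x₀ A
  left_inv A := by
    by_cases h : x₀ ∈ A
    · simp [h, Finset.notMem_erase, Finset.insert_erase h]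
    · simp [h, Finset.erase_insert h]
  right_inv A := by
    by_cases h : x₀ ∈ A
    · simp [h, Finset.notMem_erase, Finset.insert_erase h]
    · simp [h, Finset.erase_insert h]

lemma half_card {p : Finset X → Prop} [DecidablePred p] (x₀ : X)
    (hp : ∀ A, p A ↔ ¬ p (flipx x₀ A)) :
    2 * Fintype.card {A : Finset X // p A} = 2 ^ Fintype.card X := by
  have e : {A : Finset X // p A} ≃ {A : Finset X // ¬ p A} :=
    (flipx x₀).subtypeEquiv (fun A => by rw [hp A])
  have hc : Fintype.card {A : Finset X // p A} = Fintype.card {A : Finset X // ¬ p A} :=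
    Fintype.card_congr e
  have hcompl := Fintype.card_subtype_compl p
  have hle : Fintype.card {A : Finset X // p A} ≤ Fintype.card (Finset X) :=
    Fintype.card_subtype_le _
  rw [Fintype.card_finset] at hcompl hle
  omega

lemma parity_flip (x₀ : X) (A : Finset X) : Odd A.card ↔ ¬ Odd ((flipx x₀ A).card) := by
  by_cases h : x₀ ∈ A
  · have : (flipx x₀ A) = A.erase x₀ := by simp [flipx, h]
    rw [this]
    have hc : (A.erase x₀).card + 1 = A.card := Finset.card_erase_add_one h
    rw [← hc, Nat.odd_add_one]
  · have : (flipx x₀ A) = insert x₀ A := by simp [flipx, h]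
    rw [this, Finset.card_insert_of_notMem h, Nat.odd_add_one]
    tauto

lemma mem_flip (x₀ : X) (A : Finset X) : x₀ ∈ A ↔ ¬ (x₀ ∈ flipx x₀ A) := by
  by_cases h : x₀ ∈ A <;> simp [flipx, h]

lemma card_odd_subsets (h1 : 0 < Fintype.card X) :
    Fintype.card {B : Finset X // Odd B.card} = 2 ^ (Fintype.card X - 1) := by
  obtain ⟨x₀⟩ := Fintype.card_pos_iff.mp h1
  have := half_card x₀ (parity_flip x₀)
  have hpow : 2 ^ Fintype.card X = 2 * 2 ^ (Fintype.card X - 1) := by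
    rw [← pow_succ']
    congr 1
    omega
  omega

lemma card_mem_subsets (x₀ : X) :
    Fintype.card {A : Finset X // x₀ ∈ A} = 2 ^ (Fintype.card X - 1) := by
  have h1 : 0 < Fintype.card X := Fintype.card_pos_iff.mpr ⟨x₀⟩
  have := half_card x₀ (mem_flip x₀)
  have hpow : 2 ^ Fintype.card X = 2 * 2 ^ (Fintype.card X - 1) := by
    rw [← pow_succ']
    congr 1
    omega
  omega



lemma eta_additive {B : Finset X} (hB : Odd B.card) (A : PSub X) :
    eta B A + eta B (pcompl A) = 1 := by
  rw [eta, eta]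
  have hcard : (A.1 ∩ B).card + ((pcompl A).1 ∩ B).card = B.card := by
    show (A.1 ∩ B).card + ((A.1)ᶜ ∩ B).card = B.card
    rw [Finset.inter_comm A.1 B, Finset.inter_comm (A.1)ᶜ B,
      show B ∩ (A.1)ᶜ = B \ A.1 by rw [sdiff_eq, Finset.inf_eq_inter]]
    exact Finset.card_inter_add_card_sdiff B A.1
  have hodd : Odd ((A.1 ∩ B).card + ((pcompl A).1 ∩ B).card) := hcard ▸ hB
  rw [Nat.odd_add] at hodd
  by_cases h1 : Odd (A.1 ∩ B).card
  · rw [if_pos h1, if_neg (Nat.not_odd_iff_even.mpr (hodd.mp h1))]; norm_num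
  · rw [if_neg h1, if_pos (Nat.not_even_iff_odd.mp (fun he => h1 (hodd.mpr he)))]; norm_num

/-- The submodule of additive functions. -/
def addW (X : Type) [Fintype X] [DecidableEq X] : Submodule ℝ (PSub X → ℝ) where
  carrier := {g | IsAdditive1 g}
  add_mem' := by
    rintro a b ⟨s, hs⟩ ⟨t, ht⟩
    exact ⟨s + t, fun A => by have := hs A; have := ht A; simp only [Pi.add_apply]; linarith⟩
  zero_mem' := ⟨0, by simp⟩
  smul_mem' := by
    rintro c a ⟨s, hs⟩
    refine ⟨c * s, fun A => ?_⟩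
    simp only [Pi.smul_apply, smul_eq_mul]
    rw [← hs A]
    ring

lemma mem_addW {g : PSub X → ℝ} : g ∈ addW X ↔ IsAdditive1 g := Iff.rfl

lemma eta_mem_addW {B : Finset X} (hB : Odd B.card) : eta B ∈ addW X :=
  ⟨1, fun A => eta_additive hB A⟩

/-- singleton as a proper subset -/
def psingle (h2 : 2 ≤ Fintype.card X) (x₀ : X) : PSub X :=
  ⟨{x₀}, ⟨Finset.singleton_nonempty x₀, by
    intro h
    have := congrArg Finset.card h
    rw [Finset.card_singleton, Finset.card_univ] at this
    omega⟩⟩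

noncomputable def Phi (h2 : 2 ≤ Fintype.card X) (x₀ : X) :
    addW X →ₗ[ℝ] (Option {A : PSub X // x₀ ∈ A.1} → ℝ) where
  toFun g o := o.elim (g.1 (pcompl (psingle h2 x₀))) (fun A => g.1 A.1)
  map_add' g h := by funext o; cases o <;> rfl
  map_smul' c g := by funext o; cases o <;> rfl

lemma Phi_inj (h2 : 2 ≤ Fintype.card X) (x₀ : X) :
    Function.Injective (Phi (X := X) h2 x₀) := by
  rw [injective_iff_map_eq_zero]
  intro g hg
  obtain ⟨s, hs⟩ := g.2
  have hsome : ∀ A : PSub X, x₀ ∈ A.1 → g.1 A = 0 := by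
    intro A hA
    exact congrFun hg (some ⟨A, hA⟩)
  have hnone : g.1 (pcompl (psingle h2 x₀)) = 0 := congrFun hg none
  have hx : x₀ ∈ (psingle h2 x₀).1 := Finset.mem_singleton_self x₀
  have hs0 : s = 0 := by
    have := hs (psingle h2 x₀)
    rw [hsome _ hx, hnone] at this
    linarith
  have : ∀ A : PSub X, g.1 A = 0 := by
    intro A
    by_cases hA : x₀ ∈ A.1
    · exact hsome A hA
    · have hA' : x₀ ∈ (pcompl A).1 := Finset.mem_compl.mpr hA
      have := hs A
      rw [hsome _ hA', hs0] at this
      linarith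
  exact Subtype.ext (funext this)

def eopt (x₀ : X) : Option {A : PSub X // x₀ ∈ A.1} ≃ {A : Finset X // x₀ ∈ A} where
  toFun o := o.elim ⟨Finset.univ, Finset.mem_univ x₀⟩ (fun A => ⟨A.1.1, A.2⟩)
  invFun A := if h : A.1 = Finset.univ then none else some ⟨⟨A.1, ⟨⟨x₀, A.2⟩, h⟩⟩, A.2⟩
  left_inv o := by
    cases o with
    | none => simp
    | some A =>
      have : A.1.1 ≠ Finset.univ := A.1.2.2
      simp [this]
  right_inv A := by
    by_cases h : A.1 = Finset.univ
    · simp only [h, dif_pos]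
      exact Subtype.ext h.symm
    · simp [h]

end Aux

/-- the functions `η_B`, for `B` ranging over odd-cardinality subsets
of `X`, form a basis of the space of additive functions on proper subsets of `X`;
in particular that space has dimension `2^(|X|−1)`. -/
theorem stmt_9 (X : Type) [Fintype X] [DecidableEq X] (h2 : 2 ≤ Fintype.card X) :
    LinearIndependent ℝ (fun B : {B : Finset X // Odd B.card} => eta B.1) ∧
    (Submodule.span ℝ (Set.range (fun B : {B : Finset X // Odd B.card} => eta B.1))
        : Set (PSub X → ℝ)) = {g | IsAdditive1 g} ∧
    Fintype.card {B : Finset X // Odd B.card} = 2 ^ (Fintype.card X - 1) := by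
  have hLI := lin_indep (X := X) h2
  have hcardodd := card_odd_subsets (X := X) (by omega)
  obtain ⟨x₀⟩ := Fintype.card_pos_iff.mp (show 0 < Fintype.card X by omega)
  refine ⟨hLI, ?_, hcardodd⟩
  have hle : Submodule.span ℝ (Set.range fun B : {B : Finset X // Odd B.card} => eta B.1)
      ≤ addW X := by
    rw [Submodule.span_le]
    rintro _ ⟨B, rfl⟩
    exact eta_mem_addW B.2
  have hfr_span : Module.finrank ℝ
      (Submodule.span ℝ (Set.range fun B : {B : Finset X // Odd B.card} => eta B.1))
      = Fintype.card {B : Finset X // Odd B.card} := finrank_span_eq_card hLI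
  have hfrW : Module.finrank ℝ (addW X) ≤ 2 ^ (Fintype.card X - 1) := by
    have hinj := LinearMap.finrank_le_finrank_of_injective (Phi_inj h2 x₀)
    rwa [Module.finrank_pi, Fintype.card_congr (eopt x₀), card_mem_subsets x₀] at hinj
  have heq : Submodule.span ℝ (Set.range fun B : {B : Finset X // Odd B.card} => eta B.1)
      = addW X :=
    Submodule.eq_of_le_of_finrank_le hle (by rw [hfr_span, hcardodd]; exact hfrW)
  rw [heq]
  rfl
end

section
/- Let X = X_1 × ... × X_d be a d-box with finite factors of size ≥ 2. Every real-valued additive function f on proper boxes of X (meaning: whenever twin pairs A,B and C,D satisfy A∪B = C∪D, f(A)+f(B) = f(C)+f(D)) lies in the tensor product of the spaces of one-dimensional additive functions; that is, the space A(X,ℝ) of additive functions equals the span of functions of the form (C_1,...,C_d) ↦ f_1(C_1)···f_d(C_d) where each f_i is additive on proper subsets of X_i. -/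
/-- A real-valued function on proper boxes of a `d`-box is additive: whenever twin
pairs `A, A^i` and `C, C^i` (flipping the `i`-th factor) have the same union, the
corresponding sums of values agree. -/
def IsAdditiveBox {d : ℕ} {X : Fin d → Type} [∀ i, Fintype (X i)] [∀ i, DecidableEq (X i)]
    (f : (∀ i, PSub (X i)) → ℝ) : Prop :=
  ∀ (i : Fin d) (A C : ∀ i, PSub (X i)), (∀ j, j ≠ i → A j = C j) →
    f A + f (Function.update A i (pcompl (A i)))
      = f C + f (Function.update C i (pcompl (C i)))

lemma pcompl_pcompl {Y : Type} [Fintype Y] [DecidableEq Y] (A : PSub Y) :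
    pcompl (pcompl A) = A := by
  simp [pcompl]

lemma pcompl_involutive {Y : Type} [Fintype Y] [DecidableEq Y] :
    Function.Involutive (pcompl (X := Y)) := pcompl_pcompl

lemma pcompl_eq_iff {Y : Type} [Fintype Y] [DecidableEq Y] {A B : PSub Y} :
    pcompl A = B ↔ A = pcompl B := by
  constructor <;> rintro rfl <;> simp [pcompl_pcompl]

section Aux
variable {d : ℕ} {X : Fin d → Type} [∀ i, Fintype (X i)] [∀ i, DecidableEq (X i)]

def bflip (i : Fin d) (C : ∀ i, PSub (X i)) : ∀ i, PSub (X i) :=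
  Function.update C i (pcompl (C i))

lemma bflip_apply_same (i : Fin d) (C : ∀ i, PSub (X i)) : bflip i C i = pcompl (C i) := by
  simp [bflip]

lemma bflip_apply_ne {i j : Fin d} (h : j ≠ i) (C : ∀ i, PSub (X i)) : bflip i C j = C j := by
  simp [bflip, Function.update_of_ne h]

lemma bflip_bflip (i : Fin d) (C : ∀ i, PSub (X i)) : bflip i (bflip i C) = C := by
  funext j
  by_cases h : j = i
  · subst h; simp [bflip, pcompl_pcompl]
  · simp [bflip, Function.update_of_ne h]

lemma bflip_update (i : Fin d) (C : ∀ i, PSub (X i)) (B : PSub (X i)) :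
    bflip i (Function.update C i B) = Function.update C i (pcompl B) := by
  funext j
  by_cases h : j = i
  · subst h; simp [bflip]
  · simp [bflip, Function.update_of_ne h]

lemma bflip_update_ne {i j : Fin d} (h : j ≠ i) (C : ∀ i, PSub (X i)) (B : PSub (X j)) :
    bflip i (Function.update C j B) = Function.update (bflip i C) j B := by
  funext k
  by_cases hk : k = i
  · subst hk
    simp [bflip, Function.update_of_ne (Ne.symm h), Function.update_of_ne h]
  · by_cases hk2 : k = j
    · subst hk2; simp [bflip, Function.update_of_ne hk]
    · simp [bflip, Function.update_of_ne hk, Function.update_of_ne hk2]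

end Aux

section Aux2
variable {d : ℕ} {X : Fin d → Type} [∀ i, Fintype (X i)] [∀ i, DecidableEq (X i)]

lemma isAdditiveBox_iff (f : (∀ i, PSub (X i)) → ℝ) :
    IsAdditiveBox f ↔ ∀ (i : Fin d) (A C : ∀ i, PSub (X i)), (∀ j, j ≠ i → A j = C j) →
      f A + f (bflip i A) = f C + f (bflip i C) := Iff.rfl

lemma bflip_comm {i j : Fin d} (h : i ≠ j) (C : ∀ i, PSub (X i)) :
    bflip i (bflip j C) = bflip j (bflip i C) := by
  show bflip i (Function.update C j (pcompl (C j))) = _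
  rw [bflip_update_ne h.symm]
  have : C j = bflip i C j := (bflip_apply_ne h.symm C).symm
  rw [this]
  rfl

end Aux2

section Aux3
variable {d : ℕ} {X : Fin d → Type} [∀ i, Fintype (X i)] [∀ i, DecidableEq (X i)]

noncomputable def Ei (i : Fin d) (f : (∀ i, PSub (X i)) → ℝ) : (∀ i, PSub (X i)) → ℝ :=
  fun C => (f C + f (bflip i C)) / 2

noncomputable def Mi (i : Fin d) (f : (∀ i, PSub (X i)) → ℝ) : (∀ i, PSub (X i)) → ℝ :=
  fun C => (f C - f (bflip i C)) / 2

lemma Ei_add_Mi (i : Fin d) (f : (∀ i, PSub (X i)) → ℝ) (C : ∀ i, PSub (X i)) :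
    Ei i f C + Mi i f C = f C := by
  unfold Ei Mi; ring

def Dep (S : Finset (Fin d)) (f : (∀ i, PSub (X i)) → ℝ) : Prop :=
  ∀ C C' : (∀ i, PSub (X i)), (∀ j ∈ S, C j = C' j) → f C = f C'

lemma update_agree {i : Fin d} {A C : ∀ i, PSub (X i)} (h : ∀ j, j ≠ i → A j = C j) :
    Function.update C i (A i) = A := by
  funext j
  by_cases hj : j = i
  · subst hj; simp
  · rw [Function.update_of_ne hj, h j hj]

lemma Ei_update (i : Fin d) {f : (∀ i, PSub (X i)) → ℝ} (hf : IsAdditiveBox f)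
    (C : ∀ i, PSub (X i)) (B : PSub (X i)) :
    Ei i f (Function.update C i B) = Ei i f C := by
  unfold Ei
  have := hf i (Function.update C i B) C (fun j hj => Function.update_of_ne hj _ _)
  rw [div_left_inj' (by norm_num : (2:ℝ) ≠ 0)]
  exact this

lemma Ei_eq_of_agree (i : Fin d) {f : (∀ i, PSub (X i)) → ℝ} (hf : IsAdditiveBox f)
    {A C : ∀ i, PSub (X i)} (h : ∀ j, j ≠ i → A j = C j) : Ei i f A = Ei i f C := by
  rw [← update_agree h, Ei_update i hf]

lemma Ei_bflip (i : Fin d) {f : (∀ i, PSub (X i)) → ℝ} (hf : IsAdditiveBox f)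
    (C : ∀ i, PSub (X i)) : Ei i f (bflip i C) = Ei i f C :=
  Ei_update i hf C (pcompl (C i))

lemma Mi_bflip (i : Fin d) (f : (∀ i, PSub (X i)) → ℝ)
    (C : ∀ i, PSub (X i)) : Mi i f (bflip i C) = - Mi i f C := by
  unfold Mi
  rw [bflip_bflip]
  ring

lemma isAdditiveBox_Ei (i : Fin d) {f : (∀ i, PSub (X i)) → ℝ} (hf : IsAdditiveBox f) :
    IsAdditiveBox (Ei i f) := by
  rw [isAdditiveBox_iff]
  intro j A C h
  by_cases hj : j = i
  · subst hj
    rw [Ei_bflip j hf A, Ei_bflip j hf C, Ei_eq_of_agree j hf h]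
  · have h1 : f A + f (bflip j A) = f C + f (bflip j C) := hf j A C h
    have h2 : f (bflip i A) + f (bflip j (bflip i A)) = f (bflip i C) + f (bflip j (bflip i C)) := by
      refine hf j (bflip i A) (bflip i C) (fun k hk => ?_)
      by_cases hki : k = i
      · subst hki
        rw [bflip_apply_same, bflip_apply_same, h k (fun hc => hj (hc ▸ rfl))]
      · rw [bflip_apply_ne hki, bflip_apply_ne hki, h k hk]
    show (f A + f (bflip i A)) / 2 + (f (bflip j A) + f (bflip i (bflip j A))) / 2
        = (f C + f (bflip i C)) / 2 + (f (bflip j C) + f (bflip i (bflip j C))) / 2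
    rw [bflip_comm (fun hij => hj hij.symm) A, bflip_comm (fun hij => hj hij.symm) C]
    linarith

lemma isAdditiveBox_Mi (i : Fin d) {f : (∀ i, PSub (X i)) → ℝ} (hf : IsAdditiveBox f) :
    IsAdditiveBox (Mi i f) := by
  rw [isAdditiveBox_iff]
  intro j A C h
  by_cases hj : j = i
  · subst hj
    rw [Mi_bflip j f A, Mi_bflip j f C]
    ring
  · have h1 : f A + f (bflip j A) = f C + f (bflip j C) := hf j A C h
    have h2 : f (bflip i A) + f (bflip j (bflip i A)) = f (bflip i C) + f (bflip j (bflip i C)) := by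
      refine hf j (bflip i A) (bflip i C) (fun k hk => ?_)
      by_cases hki : k = i
      · subst hki
        rw [bflip_apply_same, bflip_apply_same, h k (fun hc => hj (hc ▸ rfl))]
      · rw [bflip_apply_ne hki, bflip_apply_ne hki, h k hk]
    show (f A - f (bflip i A)) / 2 + (f (bflip j A) - f (bflip i (bflip j A))) / 2
        = (f C - f (bflip i C)) / 2 + (f (bflip j C) - f (bflip i (bflip j C))) / 2
    rw [bflip_comm (fun hij => hj hij.symm) A, bflip_comm (fun hij => hj hij.symm) C]
    linarith

end Aux3

section Aux4
variable {d : ℕ} {X : Fin d → Type} [∀ i, Fintype (X i)] [∀ i, DecidableEq (X i)]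

lemma dep_bflip {S : Finset (Fin d)} {f : (∀ i, PSub (X i)) → ℝ} (hd : Dep S f) (i : Fin d) :
    Dep S (fun C => f (bflip i C)) := by
  intro C C' h
  refine hd _ _ (fun j hj => ?_)
  by_cases hji : j = i
  · subst hji; rw [bflip_apply_same, bflip_apply_same, h j hj]
  · rw [bflip_apply_ne hji, bflip_apply_ne hji, h j hj]

lemma dep_Ei {S : Finset (Fin d)} {f : (∀ i, PSub (X i)) → ℝ} (hd : Dep S f) (i : Fin d) :
    Dep S (Ei i f) := by
  intro C C' h
  have h2 : f (bflip i C) = f (bflip i C') := dep_bflip hd i C C' h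
  unfold Ei
  rw [hd C C' h, h2]

lemma dep_Mi {S : Finset (Fin d)} {f : (∀ i, PSub (X i)) → ℝ} (hd : Dep S f) (i : Fin d) :
    Dep S (Mi i f) := by
  intro C C' h
  have h2 : f (bflip i C) = f (bflip i C') := dep_bflip hd i C C' h
  unfold Mi
  rw [hd C C' h, h2]

lemma dep_Ei_erase {S : Finset (Fin d)} {f : (∀ i, PSub (X i)) → ℝ} (hf : IsAdditiveBox f)
    (hd : Dep S f) (i : Fin d) : Dep (S.erase i) (Ei i f) := by
  intro C C' h
  calc Ei i f C = Ei i f (Function.update C i (C' i)) := (Ei_update i hf C (C' i)).symm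
    _ = Ei i f C' := by
        refine dep_Ei hd i _ _ (fun j hj => ?_)
        by_cases hji : j = i
        · subst hji; simp
        · rw [Function.update_of_ne hji, h j (Finset.mem_erase.mpr ⟨hji, hj⟩)]

lemma dep_mB {S : Finset (Fin d)} {f : (∀ i, PSub (X i)) → ℝ}
    (hd : Dep S f) (i : Fin d) (B : PSub (X i)) :
    Dep (S.erase i) (fun C => Mi i f (Function.update C i B)) := by
  intro C C' h
  refine dep_Mi hd i _ _ (fun j hj => ?_)
  by_cases hji : j = i
  · subst hji; simp
  · rw [Function.update_of_ne hji, Function.update_of_ne hji,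
      h j (Finset.mem_erase.mpr ⟨hji, hj⟩)]

lemma isAdditiveBox_mB {f : (∀ i, PSub (X i)) → ℝ} (hf : IsAdditiveBox f)
    (i : Fin d) (B : PSub (X i)) :
    IsAdditiveBox (fun C => Mi i f (Function.update C i B)) := by
  rw [isAdditiveBox_iff]
  intro j A C h
  by_cases hj : j = i
  · subst hj
    have e1 : Function.update (bflip j A) j B = Function.update A j B := by
      show Function.update (Function.update A j (pcompl (A j))) j B = _
      rw [Function.update_idem]
    have e2 : Function.update (bflip j C) j B = Function.update C j B := by
      show Function.update (Function.update C j (pcompl (C j))) j B = _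
      rw [Function.update_idem]
    have e3 : Function.update A j B = Function.update C j B := by
      funext k
      by_cases hk : k = j
      · subst hk; simp
      · rw [Function.update_of_ne hk, Function.update_of_ne hk, h k hk]
    simp only [e1, e2, e3]
  · have hMi := isAdditiveBox_Mi i hf
    have e1 : Function.update (bflip j A) i B = bflip j (Function.update A i B) :=
      (bflip_update_ne (fun hc : i = j => hj hc.symm) A B).symm
    have e2 : Function.update (bflip j C) i B = bflip j (Function.update C i B) :=
      (bflip_update_ne (fun hc : i = j => hj hc.symm) C B).symm
    simp only [e1, e2]
    refine hMi j (Function.update A i B) (Function.update C i B) (fun k hk => ?_)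
    by_cases hki : k = i
    · subst hki; simp
    · rw [Function.update_of_ne hki, Function.update_of_ne hki, h k hk]

end Aux4

section Aux5
variable {d : ℕ} {X : Fin d → Type} [∀ i, Fintype (X i)] [∀ i, DecidableEq (X i)]

noncomputable def hfun {Y : Type} [Fintype Y] [DecidableEq Y] (B : PSub Y) : PSub Y → ℝ :=
  fun c => ((if c = B then (1:ℝ) else 0) - (if c = pcompl B then 1 else 0)) / 2

lemma isAdditive1_hfun {Y : Type} [Fintype Y] [DecidableEq Y] (B : PSub Y) :
    IsAdditive1 (hfun B) := by
  refine ⟨0, fun A => ?_⟩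
  unfold hfun
  have e1 : (pcompl A = B) ↔ (A = pcompl B) := by
    constructor <;> rintro rfl <;> simp [pcompl_pcompl]
  have e2 : (pcompl A = pcompl B) ↔ (A = B) := pcompl_involutive.injective.eq_iff
  rw [if_congr e1 rfl rfl, if_congr e2 rfl rfl]
  ring

lemma isAdditive1_one {Y : Type} [Fintype Y] [DecidableEq Y] :
    IsAdditive1 (fun _ : PSub Y => (1:ℝ)) := ⟨2, fun _ => by norm_num⟩

lemma Mi_expand (i : Fin d) (f : (∀ i, PSub (X i)) → ℝ) (C : ∀ i, PSub (X i)) :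
    Mi i f C = ∑ B : PSub (X i), hfun B (C i) * Mi i f (Function.update C i B) := by
  have key : ∀ B : PSub (X i), hfun B (C i) * Mi i f (Function.update C i B)
      = ((if C i = B then (1:ℝ) else 0) * Mi i f (Function.update C i B)
        - (if pcompl (C i) = B then 1 else 0) * Mi i f (Function.update C i B)) / 2 := by
    intro B
    unfold hfun
    have e1 : (C i = pcompl B) ↔ (pcompl (C i) = B) := by
      constructor
      · intro h2; rw [h2, pcompl_pcompl]
      · intro h2; rw [← h2, pcompl_pcompl]
    rw [if_congr e1 rfl rfl]
    ring
  rw [Finset.sum_congr rfl (fun B _ => key B)]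
  rw [← Finset.sum_div, Finset.sum_sub_distrib]
  simp only [ite_mul, one_mul, zero_mul]
  rw [Finset.sum_ite_eq Finset.univ (C i) (fun B => Mi i f (Function.update C i B)),
      Finset.sum_ite_eq Finset.univ (pcompl (C i)) (fun B => Mi i f (Function.update C i B))]
  simp only [Finset.mem_univ, if_true, Function.update_eq_self]
  have : Function.update C i (pcompl (C i)) = bflip i C := rfl
  rw [this, Mi_bflip]
  ring

end Aux5

section Aux6
variable {d : ℕ} {X : Fin d → Type} [∀ i, Fintype (X i)] [∀ i, DecidableEq (X i)]

lemma psub_nonempty {Y : Type} [Fintype Y] [DecidableEq Y] (hY : 2 ≤ Fintype.card Y) :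
    Nonempty (PSub Y) := by
  have h1 : 0 < Fintype.card Y := by omega
  obtain ⟨y⟩ := Fintype.card_pos_iff.mp h1
  refine ⟨⟨{y}, Finset.singleton_nonempty y, fun h => ?_⟩⟩
  have := congrArg Finset.card h
  rw [Finset.card_singleton, Finset.card_univ] at this
  omega

lemma isAdditiveBox_prod (g : ∀ i, PSub (X i) → ℝ) (hg : ∀ i, IsAdditive1 (g i)) :
    IsAdditiveBox (fun C => ∏ i, g i (C i)) := by
  rw [isAdditiveBox_iff]
  intro i A C h
  obtain ⟨s, hs⟩ := hg i
  have key : ∀ D : ∀ i, PSub (X i), (∏ j, g j (D j)) + (∏ j, g j (bflip i D j))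
      = s * ∏ j ∈ Finset.univ.erase i, g j (D j) := by
    intro D
    rw [← Finset.mul_prod_erase Finset.univ (fun j => g j (D j)) (Finset.mem_univ i),
        ← Finset.mul_prod_erase Finset.univ (fun j => g j (bflip i D j)) (Finset.mem_univ i)]
    have e : ∏ j ∈ Finset.univ.erase i, g j (bflip i D j)
        = ∏ j ∈ Finset.univ.erase i, g j (D j) := by
      refine Finset.prod_congr rfl (fun j hj => ?_)
      rw [bflip_apply_ne (Finset.ne_of_mem_erase hj)]
    rw [e, bflip_apply_same, ← add_mul, hs]
  show (∏ j, g j (A j)) + (∏ j, g j (bflip i A j)) = (∏ j, g j (C j)) + (∏ j, g j (bflip i C j))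
  rw [key A, key C]
  congr 1
  refine Finset.prod_congr rfl (fun j hj => ?_)
  rw [h j (Finset.ne_of_mem_erase hj)]

end Aux6

section Main
variable {d : ℕ} {X : Fin d → Type} [∀ i, Fintype (X i)] [∀ i, DecidableEq (X i)]

def genSet (X : Fin d → Type) [∀ i, Fintype (X i)] [∀ i, DecidableEq (X i)] :
    Set ((∀ i, PSub (X i)) → ℝ) :=
  {f | ∃ g : ∀ i, PSub (X i) → ℝ, (∀ i, IsAdditive1 (g i)) ∧ f = fun C => ∏ i, g i (C i)}

lemma main_base (hne : Nonempty (∀ i, PSub (X i)))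
    (g : (∀ i, PSub (X i)) → ℝ) (hd : Dep (∅ : Finset (Fin d)) g)
    (a : ∀ i, PSub (X i) → ℝ) (ha : ∀ i, IsAdditive1 (a i)) :
    (fun C => (∏ j, a j (C j)) * g C) ∈ Submodule.span ℝ (genSet X) := by
  obtain ⟨C₀⟩ := hne
  have hconst : ∀ C, g C = g C₀ := fun C => hd C C₀ (by simp)
  have e : (fun C => (∏ j, a j (C j)) * g C) = g C₀ • (fun C => ∏ i, a i (C i)) := by
    funext C
    rw [Pi.smul_apply, smul_eq_mul, hconst C]
    ring
  rw [e]
  exact Submodule.smul_mem _ _ (Submodule.subset_span ⟨a, ha, rfl⟩)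

lemma main_induction (hne : Nonempty (∀ i, PSub (X i))) :
    ∀ (k : ℕ) (S : Finset (Fin d)), Sᶜ.card ≤ k →
    ∀ (g : (∀ i, PSub (X i)) → ℝ), IsAdditiveBox g → Dep Sᶜ g →
    ∀ (a : ∀ i, PSub (X i) → ℝ), (∀ i, IsAdditive1 (a i)) →
    (fun C => (∏ j ∈ S, a j (C j)) * g C) ∈ Submodule.span ℝ (genSet X) := by
  intro k
  induction k with
  | zero =>
    intro S hS g hg hd a ha
    have hSc : Sᶜ = ∅ := Finset.card_eq_zero.mp (Nat.le_zero.mp hS)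
    have hSu : S = Finset.univ := by
      rwa [Finset.compl_eq_empty_iff] at hSc
    subst hSu
    rw [hSc] at hd
    exact main_base hne g hd a ha
  | succ k ih =>
    intro S hS g hg hd a ha
    rcases Finset.eq_empty_or_nonempty Sᶜ with hSc | ⟨i, hi⟩
    · have hSu : S = Finset.univ := by rwa [Finset.compl_eq_empty_iff] at hSc
      subst hSu
      rw [hSc] at hd
      exact main_base hne g hd a ha
    · have hiS : i ∉ S := Finset.mem_compl.mp hi
      have hS'c : (insert i S)ᶜ = Sᶜ.erase i := Finset.compl_insert
      have hcard : ((insert i S)ᶜ).card ≤ k := by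
        rw [hS'c, Finset.card_erase_of_mem hi]
        omega
      -- part 1 : even part
      have ha1 : ∀ j, IsAdditive1 (Function.update a i (fun _ => (1:ℝ)) j) := by
        intro j
        by_cases hj : j = i
        · subst hj; rw [Function.update_self]; exact isAdditive1_one
        · rw [Function.update_of_ne hj]; exact ha j
      have h1 := ih (insert i S) hcard (Ei i g) (isAdditiveBox_Ei i hg)
        (by rw [hS'c]; exact dep_Ei_erase hg hd i)
        (Function.update a i (fun _ => (1:ℝ))) ha1
      have e1 : (fun C => (∏ j ∈ insert i S, Function.update a i (fun _ => (1:ℝ)) j (C j))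
            * Ei i g C)
          = (fun C => (∏ j ∈ S, a j (C j)) * Ei i g C) := by
        funext C
        rw [Finset.prod_insert hiS, Function.update_self, one_mul]
        congr 1
        exact Finset.prod_congr rfl fun j hj => by
          rw [Function.update_of_ne (ne_of_mem_of_not_mem hj hiS)]
      rw [e1] at h1
      -- part 2 : odd parts
      have h2 : ∀ B : PSub (X i),
          (fun C => hfun B (C i) * ((∏ j ∈ S, a j (C j))
            * Mi i g (Function.update C i B))) ∈ Submodule.span ℝ (genSet X) := by
        intro B
        have ha2 : ∀ j, IsAdditive1 (Function.update a i (hfun B) j) := by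
          intro j
          by_cases hj : j = i
          · subst hj; rw [Function.update_self]; exact isAdditive1_hfun B
          · rw [Function.update_of_ne hj]; exact ha j
        have h2' := ih (insert i S) hcard (fun C => Mi i g (Function.update C i B))
          (isAdditiveBox_mB hg i B)
          (by rw [hS'c]; exact dep_mB hd i B)
          (Function.update a i (hfun B)) ha2
        have e2 : (fun C => (∏ j ∈ insert i S, Function.update a i (hfun B) j (C j))
              * Mi i g (Function.update C i B))
            = (fun C => hfun B (C i) * ((∏ j ∈ S, a j (C j))
              * Mi i g (Function.update C i B))) := by
          funext C
          rw [Finset.prod_insert hiS, Function.update_self, mul_assoc]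
          congr 2
          exact Finset.prod_congr rfl fun j hj => by
            rw [Function.update_of_ne (ne_of_mem_of_not_mem hj hiS)]
        rw [e2] at h2'
        exact h2'
      -- assembly
      have final : (fun C => (∏ j ∈ S, a j (C j)) * g C)
          = (fun C => (∏ j ∈ S, a j (C j)) * Ei i g C)
            + ∑ B : PSub (X i), (fun C => hfun B (C i) * ((∏ j ∈ S, a j (C j))
              * Mi i g (Function.update C i B))) := by
        funext C
        rw [Pi.add_apply, Finset.sum_apply]
        have e3 : ∑ B : PSub (X i), hfun B (C i) * ((∏ j ∈ S, a j (C j))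
              * Mi i g (Function.update C i B))
            = (∏ j ∈ S, a j (C j))
              * ∑ B : PSub (X i), hfun B (C i) * Mi i g (Function.update C i B) := by
          rw [Finset.mul_sum]
          exact Finset.sum_congr rfl fun B _ => by ring
        rw [e3, ← Mi_expand, ← mul_add, Ei_add_Mi]
      rw [final]
      exact Submodule.add_mem _ h1 (Submodule.sum_mem _ fun B _ => h2 B)

end Main

lemma isAdditiveBox_zero {d : ℕ} {X : Fin d → Type} [∀ i, Fintype (X i)]
    [∀ i, DecidableEq (X i)] : IsAdditiveBox (0 : (∀ i, PSub (X i)) → ℝ) := by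
  intro i A C h; simp

lemma isAdditiveBox_add {d : ℕ} {X : Fin d → Type} [∀ i, Fintype (X i)]
    [∀ i, DecidableEq (X i)] {f g : (∀ i, PSub (X i)) → ℝ}
    (hf : IsAdditiveBox f) (hg : IsAdditiveBox g) : IsAdditiveBox (f + g) := by
  intro i A C h
  have h1 := hf i A C h
  have h2 := hg i A C h
  simp only [Pi.add_apply]
  linarith

lemma isAdditiveBox_smul {d : ℕ} {X : Fin d → Type} [∀ i, Fintype (X i)]
    [∀ i, DecidableEq (X i)] (r : ℝ) {f : (∀ i, PSub (X i)) → ℝ}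
    (hf : IsAdditiveBox f) : IsAdditiveBox (r • f) := by
  intro i A C h
  have h1 := hf i A C h
  simp only [Pi.smul_apply, smul_eq_mul]
  linear_combination r * h1


/-- the space of additive functions on proper boxes of a `d`-box equals
the span of the product functions `C ↦ f₁(C₁)⋯f_d(C_d)` with each `fᵢ` additive on
proper subsets of `Xᵢ` (i.e. it is the tensor product of the one-dimensional spaces). -/
theorem stmt_11 {d : ℕ} (X : Fin d → Type) [∀ i, Fintype (X i)] [∀ i, DecidableEq (X i)]
    (hX : ∀ i, 2 ≤ Fintype.card (X i)) :
    {f : (∀ i, PSub (X i)) → ℝ | IsAdditiveBox f}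
      = (Submodule.span ℝ {f : (∀ i, PSub (X i)) → ℝ |
          ∃ g : ∀ i, PSub (X i) → ℝ, (∀ i, IsAdditive1 (g i)) ∧
            f = fun C => ∏ i, g i (C i)} : Set ((∀ i, PSub (X i)) → ℝ)) := by
  --

  have hne : Nonempty (∀ i, PSub (X i)) :=
    ⟨fun i => Classical.choice (psub_nonempty (hX i))⟩
  ext f
  simp only [Set.mem_setOf_eq, SetLike.mem_coe]
  constructor
  · intro hf
    have hdep : Dep (∅ : Finset (Fin d))ᶜ f := by
      intro C C' h
      congr 1
      funext j
      exact h j (by simp)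
    have key := main_induction hne (Finset.univ : Finset (Fin d)).card ∅
      (by rw [Finset.compl_empty]) f hf hdep
      (fun i _ => (1:ℝ)) (fun i => isAdditive1_one)
    have e : (fun C : ∀ i, PSub (X i) =>
        (∏ j ∈ (∅ : Finset (Fin d)), (fun i _ => (1:ℝ)) j (C j)) * f C) = f := by
      funext C
      simp
    rw [e] at key
    exact key
  · intro hf
    induction hf using Submodule.span_induction with
    | mem x hx =>
      obtain ⟨g, hg, rfl⟩ := hx
      exact isAdditiveBox_prod g hg
    | zero => exact isAdditiveBox_zero
    | add x y hx hy hpx hpy => exact isAdditiveBox_add hpx hpy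
    | smul r x hx hpx => exact isAdditiveBox_smul r hpx
end

section
/- Let X be a d-box with finite factors of size ≥ 2. Then the functions η_B, for B ranging over boxes B_1 × ... × B_d with each |B_i| odd, form a basis of the space of real-valued additive functions on proper boxes of X, where η_B(A) = Π_i [|A_i ∩ B_i| is odd]. -/
/-- `η_B(A) = ∏ᵢ [|Aᵢ ∩ Bᵢ| is odd]` for a box `B` with all factors of odd size. -/
def etaBox {d : ℕ} {X : Fin d → Type} [∀ i, Fintype (X i)] [∀ i, DecidableEq (X i)]
    (B : ∀ i, Finset (X i)) : (∀ i, PSub (X i)) → ℝ :=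
  fun A => ∏ i, (if Odd ((A i).1 ∩ B i).card then (1 : ℝ) else 0)

/-!
Each `η_B` is additive because, for `|B_i|` odd, exactly one of `A_i`, `A_iᶜ` meets `B_i` in an
odd number of points. With the Walsh characters `χ_B(a) = (-1)^|a ∩ B|`, the factor of `η_B` is
`(1 - χ_B)/2`, and orthogonality of characters summed over proper subsets gives weights `w_B` with
`∑_A w_B(A) η_{B'}(A) = [B = B']`; hence the `η_B` are independent. They span because the
additive functions have dimension at most the number of odd boxes: an additive function is
determined by its values on boxes whose factors lie in a set containing one member of each
complementary pair plus one full pair, and such a set of size `2^(n-1)` is the image of the odd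
subsets under `B ↦ insert x B` (with `univ` replaced by `{x}ᶜ`).
-/

open Finset Function Module
open scoped symmDiff

section OneFactor

variable {Y : Type} [DecidableEq Y]

lemma exists_odd_card_insert_eq {x : Y} {c : Finset Y} (hx : x ∈ c) :
    ∃ B, Odd #B ∧ insert x B = c := by
  by_cases hc : Odd #c
  · exact ⟨c, hc, insert_eq_of_mem hx⟩
  refine ⟨c.erase x, ?_, insert_erase hx⟩
  rw [card_erase_of_mem hx]
  exact Nat.Even.sub_odd (card_pos.2 ⟨x, hx⟩) (Nat.not_odd_iff_even.1 hc) odd_one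

lemma neg_one_pow_card_symmDiff (u v : Finset Y) :
    (-1 : ℝ) ^ #(u ∆ v) = (-1) ^ #u * (-1) ^ #v := by
  have hcard : #(u ∆ v) + 2 * #(u ∩ v) = #u + #v := by
    have := card_le_card (inter_subset_union (s := u) (t := v))
    rw [symmDiff_eq_sup_sdiff_inf, sup_eq_union, inf_eq_inter,
      card_sdiff_of_subset inter_subset_union, ← card_union_add_card_inter]
    omega
  rw [← pow_add, ← hcard, pow_add, pow_mul, neg_one_sq, one_pow, mul_one]

/-- The characters of the group `(Finset Y, ∆) ≅ (ℤ/2)^Y`. -/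
def walshChar (T a : Finset Y) : ℝ := (-1) ^ #(a ∩ T)

lemma walshChar_symmDiff_left (T a b : Finset Y) :
    walshChar T (a ∆ b) = walshChar T a * walshChar T b := by
  have hdist : (a ∆ b) ∩ T = (a ∩ T) ∆ (b ∩ T) := inf_symmDiff_distrib_right a b T
  rw [walshChar, hdist, neg_one_pow_card_symmDiff]; rfl

lemma walshChar_symmDiff_right (S T a : Finset Y) :
    walshChar (S ∆ T) a = walshChar S a * walshChar T a := by
  have hdist : a ∩ (S ∆ T) = (a ∩ S) ∆ (a ∩ T) := inf_symmDiff_distrib_left a S T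
  rw [walshChar, hdist, neg_one_pow_card_symmDiff]; rfl

variable [Fintype Y]

lemma sum_walshChar (T : Finset Y) :
    ∑ a, walshChar T a = if T = ∅ then 2 ^ Fintype.card Y else 0 := by
  split_ifs with hT
  · subst hT
    simp only [walshChar, inter_empty, card_empty, pow_zero, sum_const, card_univ,
      Fintype.card_finset, nsmul_eq_mul, mul_one]
    push_cast; rfl
  obtain ⟨x, hx⟩ := nonempty_iff_ne_empty.2 hT
  have hflip : ∑ a, walshChar T (a ∆ {x}) = ∑ a, walshChar T a :=
    (symmDiff_left_involutive ({x} : Finset Y)).bijective.sum_comp (walshChar T)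
  have hx1 : walshChar T {x} = -1 := by
    rw [walshChar, singleton_inter_of_mem hx, card_singleton, pow_one]
  simp only [walshChar_symmDiff_left, hx1, mul_neg_one, sum_neg_distrib] at hflip
  linarith

lemma sum_psub [Nonempty Y] (g : Finset Y → ℝ) :
    ∑ a : PSub Y, g a.1 = ∑ a, g a - g ∅ - g univ := by
  have hs : ∀ a : Finset Y, a ∈ univ \ {∅, univ} ↔ a.Nonempty ∧ a ≠ univ := by
    simp [nonempty_iff_ne_empty]
  rw [← sum_subtype _ hs, ← sum_sdiff (subset_univ {∅, univ}) (f := g),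
    sum_pair univ_nonempty.ne_empty.symm]
  ring

lemma sum_psub_walshChar [Nonempty Y] (T : Finset Y) :
    ∑ a : PSub Y, walshChar T a.1
      = (if T = ∅ then 2 ^ Fintype.card Y else 0) - 1 - (-1) ^ #T := by
  rw [sum_psub, sum_walshChar]
  simp [walshChar]

def etaFactor (B : Finset Y) (a : PSub Y) : ℝ := if Odd #(a.1 ∩ B) then 1 else 0

lemma etaFactor_eq (B : Finset Y) (a : PSub Y) : etaFactor B a = (1 - walshChar B a.1) / 2 := by
  rw [etaFactor, walshChar]
  rcases Nat.even_or_odd #(a.1 ∩ B) with h | h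
  · rw [if_neg (Nat.not_odd_iff_even.2 h), h.neg_one_pow]; norm_num
  · rw [if_pos h, h.neg_one_pow]; norm_num

lemma etaFactor_add_etaFactor_pcompl {B : Finset Y} (hB : Odd #B) (a : PSub Y) :
    etaFactor B a + etaFactor B (pcompl a) = 1 := by
  have hcompl : (pcompl a).1 = a.1 ∆ univ := (symmDiff_top a.1).symm
  have huniv : walshChar B univ = -1 := by rw [walshChar, univ_inter, hB.neg_one_pow]
  rw [etaFactor_eq, etaFactor_eq, hcompl, walshChar_symmDiff_left, huniv]
  ring

variable [Nontrivial Y]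

def singletonPSub (x : Y) : PSub Y := ⟨{x}, singleton_nonempty x, singleton_ne_univ x⟩

def insertRep (x : Y) (B : Finset Y) : PSub Y :=
  if h : insert x B = univ then pcompl (singletonPSub x) else ⟨insert x B, insert_nonempty x B, h⟩

lemma exists_odd_insertRep_eq {x : Y} {a : PSub Y} (hx : x ∈ a.1) :
    ∃ B, Odd #B ∧ insertRep x B = a := by
  obtain ⟨B, hB, hins⟩ := exists_odd_card_insert_eq hx
  refine ⟨B, hB, ?_⟩
  rw [insertRep, dif_neg (hins ▸ a.2.2)]
  exact Subtype.ext hins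

lemma exists_odd_insertRep_eq_pcompl (x : Y) :
    ∃ B, Odd #B ∧ insertRep x B = pcompl (singletonPSub x) := by
  obtain ⟨B, hB, hins⟩ := exists_odd_card_insert_eq (mem_univ x)
  exact ⟨B, hB, by rw [insertRep, dif_pos hins]⟩

noncomputable def dualWeight (B : Finset Y) (a : PSub Y) : ℝ :=
  (2 / (2 ^ Fintype.card Y - 2) - walshChar B a.1) * (2 / 2 ^ Fintype.card Y)

lemma sum_dualWeight_mul_etaFactor {B S : Finset Y} (hB : Odd #B) (hS : Odd #S) :
    ∑ a, dualWeight B a * etaFactor S a = if B = S then 1 else 0 := by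
  have hc : (2 : ℝ) ^ Fintype.card Y - 2 ≠ 0 := by
    have : (2 : ℝ) ^ 1 < 2 ^ Fintype.card Y := pow_lt_pow_right₀ (by norm_num) Fintype.one_lt_card
    linarith
  have hsum_one : ∑ a : PSub Y, walshChar ∅ a.1 = 2 ^ Fintype.card Y - 2 := by
    rw [sum_psub_walshChar]; simp; ring
  have hsum_odd : ∀ {T : Finset Y}, Odd #T → ∑ a : PSub Y, walshChar T a.1 = 0 := by
    intro T hT
    rw [sum_psub_walshChar, if_neg (by rintro rfl; simp at hT), hT.neg_one_pow]; ring
  have hsum_symmDiff : ∑ a : PSub Y, walshChar (B ∆ S) a.1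
      = (if B = S then 2 ^ Fintype.card Y else 0) - 2 := by
    simp only [sum_psub_walshChar, neg_one_pow_card_symmDiff, hB.neg_one_pow, hS.neg_one_pow,
      symmDiff_eq_empty]
    ring
  have hterm : ∀ a : PSub Y, dualWeight B a * etaFactor S a
      = (2 / (2 ^ Fintype.card Y - 2) * walshChar ∅ a.1
          - 2 / (2 ^ Fintype.card Y - 2) * walshChar S a.1 - walshChar B a.1
          + walshChar (B ∆ S) a.1) / 2 ^ Fintype.card Y := by
    intro a
    rw [dualWeight, etaFactor_eq, walshChar_symmDiff_right]
    simp only [walshChar, inter_empty, card_empty, pow_zero]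
    field_simp
    ring
  rw [sum_congr rfl fun a _ => hterm a, ← sum_div, sum_add_distrib, sum_sub_distrib,
    sum_sub_distrib, ← mul_sum, ← mul_sum, hsum_one, hsum_odd hB, hsum_odd hS, hsum_symmDiff]
  split_ifs <;> field_simp <;> ring

end OneFactor

section Boxes

variable {d : ℕ} {X : Fin d → Type} [∀ i, Fintype (X i)] [∀ i, DecidableEq (X i)]

lemma etaBox_apply (B : ∀ i, Finset (X i)) (A : ∀ i, PSub (X i)) :
    etaBox B A = ∏ i, etaFactor (B i) (A i) := rfl

lemma etaBox_update (B : ∀ i, Finset (X i)) (A : ∀ i, PSub (X i)) (i : Fin d) (c : PSub (X i)) :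
    etaBox B (update A i c) = etaFactor (B i) c * ∏ j ∈ univ.erase i, etaFactor (B j) (A j) := by
  rw [etaBox_apply, ← mul_prod_erase univ _ (mem_univ i), update_self]
  congr 1
  exact prod_congr rfl fun j hj => by rw [update_of_ne (ne_of_mem_erase hj)]

lemma isAdditiveBox_etaBox {B : ∀ i, Finset (X i)} (hB : ∀ i, Odd #(B i)) :
    IsAdditiveBox (etaBox B) := by
  intro i A C hAC
  have htwins : ∀ D : ∀ i, PSub (X i), etaBox B D + etaBox B (update D i (pcompl (D i)))
      = ∏ j ∈ univ.erase i, etaFactor (B j) (D j) := by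
    intro D
    have hD := etaBox_update B D i (D i)
    rw [update_eq_self] at hD
    rw [hD, etaBox_update, ← add_mul, etaFactor_add_etaFactor_pcompl (hB i), one_mul]
  rw [htwins, htwins]
  exact prod_congr rfl fun j hj => by rw [hAC j (ne_of_mem_erase hj)]

variable (X) in
def additiveSubmodule : Submodule ℝ ((∀ i, PSub (X i)) → ℝ) where
  carrier := {f | IsAdditiveBox f}
  add_mem' {f g} hf hg i A C hAC := by
    simp only [Pi.add_apply]
    linarith [hf i A C hAC, hg i A C hAC]
  zero_mem' _ _ _ _ := by simp
  smul_mem' r f hf i A C hAC := by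
    simp only [Pi.smul_apply, smul_eq_mul]
    linear_combination r * hf i A C hAC

variable (X) in
abbrev OddBox := {B : ∀ i, Finset (X i) // ∀ i, Odd #(B i)}

section Dual

variable [∀ i, Nontrivial (X i)]

noncomputable def boxDual (B : ∀ i, Finset (X i)) (A : ∀ i, PSub (X i)) : ℝ :=
  ∏ i, dualWeight (B i) (A i)

lemma boxDual_dotProduct_etaBox {B B' : ∀ i, Finset (X i)} (hB : ∀ i, Odd #(B i))
    (hB' : ∀ i, Odd #(B' i)) : boxDual B ⬝ᵥ etaBox B' = if B = B' then 1 else 0 := by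
  simp only [dotProduct, boxDual, etaBox_apply, ← prod_mul_distrib]
  rw [← Fintype.prod_sum (fun i a => dualWeight (B i) a * etaFactor (B' i) a)]
  simp only [sum_dualWeight_mul_etaFactor (hB _) (hB' _), Fintype.prod_boole, funext_iff]
  congr

lemma linearIndependent_etaBox : LinearIndependent ℝ (fun B : OddBox X => etaBox B.1) := by
  rw [Fintype.linearIndependent_iff]
  intro g hg B₀
  have hpair := congrArg (boxDual B₀.1 ⬝ᵥ ·) hg
  simp only [dotProduct_sum, dotProduct_smul, dotProduct_zero, smul_eq_mul] at hpair
  rw [sum_congr rfl fun B _ => by rw [boxDual_dotProduct_etaBox B₀.2 B.2]] at hpair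
  simpa [← Subtype.ext_iff, eq_comm] using hpair

end Dual

/-- Complementing the coordinates outside `S` one at a time reduces to boxes in `∏ i, S i`. -/
lemma IsAdditiveBox.eq_zero_of_forall_mem {f : (∀ i, PSub (X i)) → ℝ} (hf : IsAdditiveBox f)
    (S : ∀ i, Set (PSub (X i))) (hcover : ∀ i a, a ∈ S i ∨ pcompl a ∈ S i)
    (hpair : ∀ i, ∃ a ∈ S i, pcompl a ∈ S i) (hS : ∀ A, (∀ i, A i ∈ S i) → f A = 0) :
    f = 0 := by
  suffices h : ∀ s : Finset (Fin d), ∀ A, (∀ i ∉ s, A i ∈ S i) → f A = 0 from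
    funext fun A => h univ A fun i hi => absurd (mem_univ i) hi
  intro s
  induction s using Finset.induction_on with
  | empty => exact fun A hA => hS A fun i => hA i (notMem_empty i)
  | insert i s hi ih =>
    intro A hA
    have hupdate : ∀ b ∈ S i, f (update A i b) = 0 := fun b hb => ih _ fun j hj => by
      rcases eq_or_ne j i with rfl | hji
      · simpa using hb
      · rw [update_of_ne hji]; exact hA j (by simp [hji, hj])
    obtain ⟨a, ha, hca⟩ := hpair i
    have htwins := hf i A (update A i a) fun j hj => (update_of_ne hj a A).symm
    simp only [update_self, update_idem] at htwins
    rcases hcover i (A i) with hAi | hAi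
    · simpa using hupdate _ hAi
    · linarith [hupdate _ hAi, hupdate a ha, hupdate _ hca]

lemma finrank_additiveSubmodule_le [∀ i, Nontrivial (X i)] :
    finrank ℝ (additiveSubmodule X) ≤ Fintype.card (OddBox X) := by
  obtain ⟨x⟩ : Nonempty (∀ i, X i) := inferInstance
  let restrict : additiveSubmodule X →ₗ[ℝ] OddBox X → ℝ :=
    (LinearMap.funLeft ℝ ℝ fun B i => insertRep (x i) (B.1 i)).comp (additiveSubmodule X).subtype
  have hinj : Injective restrict := by
    rw [← LinearMap.ker_eq_bot, LinearMap.ker_eq_bot']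
    intro f hf
    refine Subtype.ext (f.2.eq_zero_of_forall_mem (fun i => insertRep (x i) '' {B | Odd #B})
      (fun i a => ?_) (fun i => ?_) fun A hA => ?_)
    · by_cases h : x i ∈ a.1
      · exact .inl (exists_odd_insertRep_eq h)
      · exact .inr (exists_odd_insertRep_eq (mem_compl.2 h))
    · exact ⟨_, exists_odd_insertRep_eq (mem_singleton_self (x i)),
        exists_odd_insertRep_eq_pcompl (x i)⟩
    · choose B hB hBA using hA
      simpa [restrict, hBA] using congrFun hf ⟨B, hB⟩
  calc finrank ℝ (additiveSubmodule X) ≤ finrank ℝ (OddBox X → ℝ) :=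
        restrict.finrank_le_finrank_of_injective hinj
    _ = Fintype.card (OddBox X) := finrank_fintype_fun_eq_card ℝ

end Boxes

/-- the functions `η_B`, for `B` ranging over boxes with all factors of
odd cardinality, form a basis of the space of additive functions on proper boxes. -/
theorem stmt_12 {d : ℕ} (X : Fin d → Type) [∀ i, Fintype (X i)] [∀ i, DecidableEq (X i)]
    (hX : ∀ i, 2 ≤ Fintype.card (X i)) :
    LinearIndependent ℝ
      (fun B : {B : ∀ i, Finset (X i) // ∀ i, Odd (B i).card} => etaBox B.1) ∧
    (Submodule.span ℝ
        (Set.range (fun B : {B : ∀ i, Finset (X i) // ∀ i, Odd (B i).card} => etaBox B.1))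
        : Set ((∀ i, PSub (X i)) → ℝ))
      = {f | IsAdditiveBox f} := by
  have : ∀ i, Nontrivial (X i) := fun i => Fintype.one_lt_card_iff_nontrivial.1 (hX i)
  have hli : LinearIndependent ℝ (fun B : OddBox X => etaBox B.1) := linearIndependent_etaBox
  have hle : Submodule.span ℝ (Set.range fun B : OddBox X => etaBox B.1) ≤ additiveSubmodule X :=
    Submodule.span_le.2 (Set.range_subset_iff.2 fun B => isAdditiveBox_etaBox B.2)
  have heq := Submodule.eq_of_le_of_finrank_le hle
    (by rw [finrank_span_eq_card hli]; exact finrank_additiveSubmodule_le)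
  exact ⟨hli, congrArg SetLike.coe heq⟩
end

section
/- Let X be a d-box, F a polybox in X, and F, G two proper suits for F. Then for every real-valued additive function f on proper boxes of X, Σ_{A ∈ F} f(A) = Σ_{A ∈ G} f(A). -/
/-!
Call `ε = (εᵢ)` a selection if each `εᵢ` picks one set out of every pair `{S, Sᶜ}`. Two boxes of
a suit are complementary in some coordinate, so at most one of them has all its sides selected;
and whether a suit has such a box depends only on its union, by induction on the number of
coordinates, each step being a question about at most two complementary sets on a line. Hence
`∑_{A ∈ 𝓕} ∏ᵢ 𝟙[εᵢ(Aᵢ)]` does not depend on the suit.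

Fix a point `x₀`. By additivity, an additive function is determined on proper boxes by its values
on the boxes with each side containing `x₀ i` or equal to `{x₀ i}ᶜ`, and on these boxes each point
mass is a product `∏ᵢ (aᵢ 𝟙[pᵢ] + bᵢ 𝟙[qᵢ])` for selections `p`, `q`. Such a product is additive
and expands into a combination of selection indicators, so every additive function agrees on
proper boxes with a combination of functions whose sums over suits do not depend on the suit.
-/

open Finset Function

section Selection

variable {α : Type*} [Fintype α] [DecidableEq α]

def IsSelection (ε : Finset α → Bool) : Prop :=
  ∀ S, ε Sᶜ = !ε S

theorem IsSelection.indicator_add_indicator_compl {ε : Finset α → Bool} (hε : IsSelection ε)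
    (S : Finset α) : ((if ε S then 1 else 0) + if ε Sᶜ then 1 else 0 : ℝ) = 1 := by
  rw [hε S]
  cases ε S <;> simp

theorem IsSelection.exists_of_cover_eq {ε : Finset α → Bool} (hε : IsSelection ε)
    {𝒜 𝒝 : Set (Finset α)} (h𝒜 : ∀ S ∈ 𝒜, S.Nonempty) (h𝒝 : ∀ T ∈ 𝒝, T ≠ univ)
    (h𝒜c : 𝒜.Pairwise fun S T => S = Tᶜ) (h𝒝c : 𝒝.Pairwise fun S T => S = Tᶜ)
    (hcover : ∀ y, (∃ S ∈ 𝒜, y ∈ S) ↔ ∃ T ∈ 𝒝, y ∈ T) (h : ∃ S ∈ 𝒜, ε S) :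
    ∃ T ∈ 𝒝, ε T := by
  -- Otherwise `𝒝` is a single set `T₀ ≠ univ`; a point outside `T₀` is outside `S` and `Sᶜ`,
  -- so `𝒜 = {S}` and then `T₀ = S` is selected.
  obtain ⟨S, hS, hεS⟩ := h
  by_contra! hno
  have h𝒝sub : 𝒝.Subsingleton := by
    intro T hT T' hT'
    by_contra hne
    have hT'no := hno T' hT'
    have hTno := hno T hT
    rw [h𝒝c hT hT' hne, hε] at hTno
    simp_all
  obtain ⟨y, hy⟩ := h𝒜 S hS
  obtain ⟨T₀, hT₀, -⟩ := (hcover y).1 ⟨S, hS, hy⟩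
  obtain ⟨z, hz⟩ : ∃ z, z ∉ T₀ := by
    by_contra! h
    exact h𝒝 T₀ hT₀ (eq_univ_iff_forall.2 h)
  have hz𝒜 : ∀ S' ∈ 𝒜, z ∉ S' := fun S' hS' hzS' => by
    obtain ⟨T, hT, hzT⟩ := (hcover z).1 ⟨S', hS', hzS'⟩
    exact hz (h𝒝sub hT hT₀ ▸ hzT)
  have h𝒜S : ∀ S' ∈ 𝒜, S' = S := fun S' hS' => by
    by_contra hne
    have hS'c := h𝒜c hS' hS hne
    by_cases hzS : z ∈ S
    · exact hz𝒜 S hS hzS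
    · exact hz𝒜 S' hS' (hS'c ▸ mem_compl.2 hzS)
  have hT₀S : T₀ = S := by
    ext w
    constructor
    · intro hw
      obtain ⟨S', hS', hwS'⟩ := (hcover w).2 ⟨T₀, hT₀, hw⟩
      exact h𝒜S S' hS' ▸ hwS'
    · intro hw
      obtain ⟨T, hT, hwT⟩ := (hcover w).1 ⟨S, hS, hw⟩
      exact h𝒝sub hT hT₀ ▸ hwT
  exact hno T₀ hT₀ (hT₀S ▸ hεS)

theorem IsSelection.exists_iff_of_cover_eq {ε : Finset α → Bool} (hε : IsSelection ε)
    {𝒜 𝒝 : Set (Finset α)} (h𝒜 : ∀ S ∈ 𝒜, S.Nonempty ∧ S ≠ univ)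
    (h𝒝 : ∀ T ∈ 𝒝, T.Nonempty ∧ T ≠ univ)
    (h𝒜c : 𝒜.Pairwise fun S T => S = Tᶜ) (h𝒝c : 𝒝.Pairwise fun S T => S = Tᶜ)
    (hcover : ∀ y, (∃ S ∈ 𝒜, y ∈ S) ↔ ∃ T ∈ 𝒝, y ∈ T) :
    (∃ S ∈ 𝒜, ε S) ↔ ∃ T ∈ 𝒝, ε T :=
  ⟨hε.exists_of_cover_eq (fun S hS => (h𝒜 S hS).1) (fun T hT => (h𝒝 T hT).2) h𝒜c h𝒝c hcover,
    hε.exists_of_cover_eq (fun T hT => (h𝒝 T hT).1) (fun S hS => (h𝒜 S hS).2) h𝒝c h𝒜c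
      fun y => (hcover y).symm⟩

def selectionOf (x : α) (P : Finset α → Prop) [DecidablePred P] (S : Finset α) : Bool :=
  if x ∈ S then decide (P S) else !decide (P Sᶜ)

theorem isSelection_selectionOf (x : α) (P : Finset α → Prop) [DecidablePred P] :
    IsSelection (selectionOf x P) := by
  intro S
  by_cases hx : x ∈ S <;> simp [selectionOf, hx]

theorem isSelection_notMem (x : α) : IsSelection fun S => decide (x ∉ S) := by
  intro S
  simp [mem_compl]

def IsBasic (x : α) (S : Finset α) : Prop :=
  x ∈ S ∨ S = {x}ᶜ

instance (x : α) : DecidablePred (IsBasic x) :=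
  fun S => inferInstanceAs (Decidable (x ∈ S ∨ S = {x}ᶜ))

/-- The second term cancels the value `1` that the first one takes at `{x}ᶜ` when
`x ∈ W ≠ {x}`. -/
noncomputable def basicDelta (x : α) (W S : Finset α) : ℝ :=
  (if selectionOf x (· = W) S then 1 else 0) -
    (if x ∈ W ∧ W ≠ {x} then 1 else 0) * if x ∉ S then 1 else 0

theorem basicDelta_of_isBasic {x : α} {W S : Finset α} (hW : IsBasic x W) (hS : IsBasic x S) :
    basicDelta x W S = if S = W then 1 else 0 := by
  have hx : x ∉ ({x}ᶜ : Finset α) := by simp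
  have hne : ({x} : Finset α) ≠ {x}ᶜ := fun h => hx (h ▸ mem_singleton_self x)
  rcases hS with hS | rfl <;> rcases hW with hW | rfl
  · by_cases hWx : W = {x} <;> simp [basicDelta, selectionOf, hS, hW, hWx]
  · simp [basicDelta, selectionOf, hS, hx, show S ≠ {x}ᶜ from fun h => hx (h ▸ hS)]
  · have hW' : {x}ᶜ ≠ W := fun h => hx (h ▸ hW)
    by_cases hWx : W = {x}
    · simp [basicDelta, selectionOf, hWx, hne.symm]
    · simp [basicDelta, selectionOf, hx, hW, hWx, hW', Ne.symm hWx]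
  · simp [basicDelta, selectionOf, hx, hne]

theorem basicDelta_add_basicDelta_compl (x : α) (W S : Finset α) :
    basicDelta x W S + basicDelta x W Sᶜ = 1 - if x ∈ W ∧ W ≠ {x} then 1 else 0 := by
  have hsel := (isSelection_selectionOf x (· = W)).indicator_add_indicator_compl S
  have hx : ((if x ∉ S then 1 else 0) + if x ∉ Sᶜ then 1 else 0 : ℝ) = 1 := by
    by_cases h : x ∈ S <;> simp [h]
  simp only [basicDelta]
  linear_combination hsel - (if x ∈ W ∧ W ≠ {x} then 1 else 0 : ℝ) * hx

end Selection

section Boxes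

variable {d : ℕ} {X : Fin d → Type*}

def SelectsOn (ε : ∀ i, Finset (X i) → Bool) (𝓕 : Finset (∀ i, Finset (X i)))
    (J : Finset (Fin d)) (x : ∀ i, X i) : Prop :=
  ∃ A ∈ 𝓕, (∀ i ∈ J, ε i (A i)) ∧ ∀ i ∉ J, x i ∈ A i

def selectionSlice (ε : ∀ i, Finset (X i) → Bool) (𝓕 : Finset (∀ i, Finset (X i)))
    (J : Finset (Fin d)) (j : Fin d) (x : ∀ i, X i) : Set (Finset (X j)) :=
  {S | ∃ A ∈ 𝓕, A j = S ∧ (∀ i ∈ J, ε i (A i)) ∧ ∀ i ∉ insert j J, x i ∈ A i}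

section

variable {ε : ∀ i, Finset (X i) → Bool} {𝓕 : Finset (∀ i, Finset (X i))}

theorem exists_mem_selectionSlice_iff {J : Finset (Fin d)} {j : Fin d} (hj : j ∉ J)
    (x : ∀ i, X i) (y : X j) :
    (∃ S ∈ selectionSlice ε 𝓕 J j x, y ∈ S) ↔ SelectsOn ε 𝓕 J (update x j y) := by
  constructor
  · rintro ⟨_, ⟨A, hA, rfl, hAJ, hAx⟩, hy⟩
    refine ⟨A, hA, hAJ, fun i hi => ?_⟩
    by_cases hij : i = j
    · subst hij
      simpa using hy
    · rw [update_of_ne hij]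
      exact hAx i (by simp [hij, hi])
  · rintro ⟨A, hA, hAJ, hAx⟩
    refine ⟨A j, ⟨A, hA, rfl, hAJ, fun i hi => ?_⟩, by simpa using hAx j hj⟩
    rw [mem_insert, not_or] at hi
    simpa [update_of_ne hi.1] using hAx i hi.2

theorem selectsOn_insert_iff (J : Finset (Fin d)) (j : Fin d) (x : ∀ i, X i) :
    SelectsOn ε 𝓕 (insert j J) x ↔ ∃ S ∈ selectionSlice ε 𝓕 J j x, ε j S := by
  constructor
  · rintro ⟨A, hA, hAJ, hAx⟩
    exact ⟨A j, ⟨A, hA, rfl, fun i hi => hAJ i (mem_insert_of_mem hi), hAx⟩,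
      hAJ j (mem_insert_self j J)⟩
  · rintro ⟨_, ⟨A, hA, rfl, hAJ, hAx⟩, hAj⟩
    refine ⟨A, hA, fun i hi => ?_, hAx⟩
    rcases mem_insert.1 hi with rfl | hi
    · exact hAj
    · exact hAJ i hi

end

variable [∀ i, Fintype (X i)]

def IsProperBox (A : ∀ i, Finset (X i)) : Prop :=
  ∀ i, (A i).Nonempty ∧ A i ≠ univ

theorem IsProperBox.nonempty_pi {A : ∀ i, Finset (X i)} (hA : IsProperBox A) :
    Nonempty (∀ i, X i) :=
  ⟨fun i => (hA i).1.choose⟩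

theorem IsProperBox.update {A : ∀ i, Finset (X i)} (hA : IsProperBox A) {j : Fin d}
    {S : Finset (X j)} (hS : S.Nonempty ∧ S ≠ univ) : IsProperBox (update A j S) := by
  intro i
  rcases eq_or_ne i j with rfl | hij
  · simpa using hS
  · simpa [update_of_ne hij] using hA i

variable [∀ i, DecidableEq (X i)]

def AreDichotomous (A B : ∀ i, Finset (X i)) : Prop :=
  ∃ i, A i = (B i)ᶜ

structure IsProperSuit (𝓕 : Finset (∀ i, Finset (X i))) : Prop where
  isProperBox : ∀ A ∈ 𝓕, IsProperBox A
  pairwise_dichotomous : (𝓕 : Set (∀ i, Finset (X i))).Pairwise AreDichotomous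

def boxUnion (𝓕 : Finset (∀ i, Finset (X i))) : Set (∀ i, X i) :=
  {x | ∃ A ∈ 𝓕, ∀ i, x i ∈ A i}

variable {ε : ∀ i, Finset (X i) → Bool} {𝓕 𝓖 : Finset (∀ i, Finset (X i))}

theorem selectionSlice_pairwise_compl (hε : ∀ i, IsSelection (ε i))
    (h𝓕 : (𝓕 : Set (∀ i, Finset (X i))).Pairwise AreDichotomous) (J : Finset (Fin d)) (j : Fin d)
    (x : ∀ i, X i) : (selectionSlice ε 𝓕 J j x).Pairwise fun S T => S = Tᶜ := by
  rintro _ ⟨A, hA, rfl, hAJ, hAx⟩ _ ⟨B, hB, rfl, hBJ, hBx⟩ hAB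
  obtain ⟨k, hk⟩ := h𝓕 hA hB fun h => hAB (h ▸ rfl)
  by_cases hkJ : k ∈ J
  · have hflip := hε k (B k)
    rw [← hk, hAJ k hkJ, hBJ k hkJ] at hflip
    simp at hflip
  by_cases hkj : k = j
  · exact hkj ▸ hk
  have hk' : k ∉ insert j J := by simp [hkj, hkJ]
  have hxA := hAx k hk'
  rw [hk, mem_compl] at hxA
  exact absurd (hBx k hk') hxA

theorem IsProperSuit.selectionSlice_proper (h𝓕 : IsProperSuit 𝓕) (J : Finset (Fin d))
    (j : Fin d) (x : ∀ i, X i) : ∀ S ∈ selectionSlice ε 𝓕 J j x, S.Nonempty ∧ S ≠ univ := by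
  rintro _ ⟨A, hA, rfl, -⟩
  exact h𝓕.isProperBox A hA j

theorem selectsOn_iff_of_boxUnion_eq (hε : ∀ i, IsSelection (ε i)) (h𝓕 : IsProperSuit 𝓕)
    (h𝓖 : IsProperSuit 𝓖) (hu : boxUnion 𝓕 = boxUnion 𝓖) (J : Finset (Fin d)) :
    ∀ x, SelectsOn ε 𝓕 J x ↔ SelectsOn ε 𝓖 J x := by
  induction J using Finset.induction_on with
  | empty =>
    intro x
    simpa [SelectsOn, boxUnion] using Set.ext_iff.1 hu x
  | insert j J hj ih =>
    intro x
    rw [selectsOn_insert_iff, selectsOn_insert_iff]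
    exact (hε j).exists_iff_of_cover_eq (h𝓕.selectionSlice_proper J j x)
      (h𝓖.selectionSlice_proper J j x)
      (selectionSlice_pairwise_compl hε h𝓕.pairwise_dichotomous J j x)
      (selectionSlice_pairwise_compl hε h𝓖.pairwise_dichotomous J j x)
      fun y => by rw [exists_mem_selectionSlice_iff hj, exists_mem_selectionSlice_iff hj, ih]

theorem exists_selected_iff_of_boxUnion_eq (hε : ∀ i, IsSelection (ε i))
    (h𝓕 : IsProperSuit 𝓕) (h𝓖 : IsProperSuit 𝓖) (hu : boxUnion 𝓕 = boxUnion 𝓖) :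
    (∃ A ∈ 𝓕, ∀ i, ε i (A i)) ↔ ∃ A ∈ 𝓖, ∀ i, ε i (A i) := by
  have hsel (𝓗 : Finset (∀ i, Finset (X i))) (x : ∀ i, X i) :
      SelectsOn ε 𝓗 univ x ↔ ∃ A ∈ 𝓗, ∀ i, ε i (A i) := by
    simp [SelectsOn]
  constructor
  · rintro ⟨A, hA, hAsel⟩
    obtain ⟨x⟩ := (h𝓕.isProperBox A hA).nonempty_pi
    exact (hsel 𝓖 x).1 <| (selectsOn_iff_of_boxUnion_eq hε h𝓕 h𝓖 hu univ x).1 <|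
      (hsel 𝓕 x).2 ⟨A, hA, hAsel⟩
  · rintro ⟨A, hA, hAsel⟩
    obtain ⟨x⟩ := (h𝓖.isProperBox A hA).nonempty_pi
    exact (hsel 𝓕 x).1 <| (selectsOn_iff_of_boxUnion_eq hε h𝓕 h𝓖 hu univ x).2 <|
      (hsel 𝓖 x).2 ⟨A, hA, hAsel⟩

end Boxes

section Sums

variable {d : ℕ} {X : Fin d → Type*} [∀ i, Fintype (X i)] [∀ i, DecidableEq (X i)]
  {𝓕 𝓖 : Finset (∀ i, Finset (X i))}

theorem sum_prod_indicator_eq_ite {ε : ∀ i, Finset (X i) → Bool} (hε : ∀ i, IsSelection (ε i))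
    (h𝓕 : (𝓕 : Set (∀ i, Finset (X i))).Pairwise AreDichotomous) :
    ∑ A ∈ 𝓕, ∏ i, (if ε i (A i) then (1 : ℝ) else 0) =
      if ∃ A ∈ 𝓕, ∀ i, ε i (A i) then 1 else 0 := by
  simp only [prod_boole, mem_univ, true_implies]
  split_ifs with h
  · obtain ⟨A, hA, hAsel⟩ := h
    rw [sum_eq_single A (fun B hB hBA => if_neg fun hBsel => ?_) (fun h => absurd hA h),
      if_pos hAsel]
    obtain ⟨k, hk⟩ := h𝓕 hB hA hBA
    have hflip := hε k (A k)
    rw [← hk, hBsel k, hAsel k] at hflip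
    simp at hflip
  · exact sum_eq_zero fun A hA => if_neg fun hAsel => h ⟨A, hA, hAsel⟩

theorem sum_prod_eq_of_boxUnion_eq (h𝓕 : IsProperSuit 𝓕) (h𝓖 : IsProperSuit 𝓖)
    (hu : boxUnion 𝓕 = boxUnion 𝓖) {φ : ∀ i, Finset (X i) → ℝ} {a b : Fin d → ℝ}
    {p q : ∀ i, Finset (X i) → Bool} (hp : ∀ i, IsSelection (p i)) (hq : ∀ i, IsSelection (q i))
    (hφ : ∀ i S, φ i S = a i * (if p i S then 1 else 0) + b i * if q i S then 1 else 0) :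
    ∑ A ∈ 𝓕, ∏ i, φ i (A i) = ∑ A ∈ 𝓖, ∏ i, φ i (A i) := by
  let ε (τ : Fin d → Bool) (i : Fin d) : Finset (X i) → Bool := if τ i then p i else q i
  have hε (τ : Fin d → Bool) (i : Fin d) : IsSelection (ε τ i) := by
    unfold ε
    split_ifs
    exacts [hp i, hq i]
  have hexpand (A : ∀ i, Finset (X i)) : ∏ i, φ i (A i) = ∑ τ : Fin d → Bool,
      (∏ i, if τ i then a i else b i) * ∏ i, if ε τ i (A i) then (1 : ℝ) else 0 := by
    calc ∏ i, φ i (A i)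
        = ∏ i, ∑ t : Bool, (if t then a i else b i) *
            if (if t then p i else q i) (A i) then 1 else 0 :=
          prod_congr rfl fun i _ => by rw [hφ, Fintype.sum_bool]; rfl
      _ = _ := by rw [Fintype.prod_sum]; exact sum_congr rfl fun τ _ => prod_mul_distrib
  simp_rw [hexpand]
  rw [sum_comm, sum_comm (s := 𝓖)]
  refine sum_congr rfl fun τ _ => ?_
  simp only [← mul_sum, sum_prod_indicator_eq_ite (hε τ) h𝓕.pairwise_dichotomous,
    sum_prod_indicator_eq_ite (hε τ) h𝓖.pairwise_dichotomous,
    exists_selected_iff_of_boxUnion_eq (hε τ) h𝓕 h𝓖 hu]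

theorem sum_prod_basicDelta_eq_of_boxUnion_eq (h𝓕 : IsProperSuit 𝓕) (h𝓖 : IsProperSuit 𝓖)
    (hu : boxUnion 𝓕 = boxUnion 𝓖) (x₀ : ∀ i, X i) (B₀ : ∀ i, Finset (X i)) :
    ∑ A ∈ 𝓕, ∏ i, basicDelta (x₀ i) (B₀ i) (A i) =
      ∑ A ∈ 𝓖, ∏ i, basicDelta (x₀ i) (B₀ i) (A i) :=
  sum_prod_eq_of_boxUnion_eq h𝓕 h𝓖 hu (a := fun _ => 1)
    (b := fun i => -if x₀ i ∈ B₀ i ∧ B₀ i ≠ {x₀ i} then 1 else 0)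
    (fun i => isSelection_selectionOf (x₀ i) (· = B₀ i)) (fun i => isSelection_notMem (x₀ i))
    fun i S => by
      simp only [basicDelta, decide_eq_true_eq, one_mul]
      ring

end Sums

section Additive

variable {d : ℕ} {X : Fin d → Type*} [∀ i, Fintype (X i)] [∀ i, DecidableEq (X i)]

def IsAdditive (f : (∀ i, Finset (X i)) → ℝ) : Prop :=
  ∀ (i : Fin d) (A C : ∀ i, Finset (X i)), IsProperBox A → IsProperBox C →
    (∀ j, j ≠ i → A j = C j) → f A + f (update A i (A i)ᶜ) = f C + f (update C i (C i)ᶜ)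

variable (X) in
def additiveFunctions : Submodule ℝ ((∀ i, Finset (X i)) → ℝ) where
  carrier := {f | IsAdditive f}
  add_mem' {f g} hf hg i A C hA hC hAC := by
    simp only [Pi.add_apply]
    linarith [hf i A C hA hC hAC, hg i A C hA hC hAC]
  zero_mem' _ _ _ _ _ _ := by simp
  smul_mem' c f hf i A C hA hC hAC := by
    simp only [Pi.smul_apply, smul_eq_mul, ← mul_add, hf i A C hA hC hAC]

theorem isAdditive_prod {φ : ∀ i, Finset (X i) → ℝ} {κ : Fin d → ℝ}
    (hφ : ∀ i S, φ i S + φ i Sᶜ = κ i) : IsAdditive fun A => ∏ i, φ i (A i) := by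
  have key (i : Fin d) (A : ∀ i, Finset (X i)) :
      ∏ j, φ j (A j) + ∏ j, φ j (update A i (A i)ᶜ j) = κ i * ∏ j ∈ {i}ᶜ, φ j (A j) := by
    rw [Fintype.prod_eq_mul_prod_compl i, Fintype.prod_eq_mul_prod_compl i, update_self,
      ← hφ i (A i), add_mul]
    congr 2
    exact prod_congr rfl fun j hj => by rw [update_of_ne (by simpa using hj)]
  intro i A C _ _ hAC
  dsimp only
  rw [key i A, key i C]
  congr 1
  exact prod_congr rfl fun j hj => by rw [hAC j (by simpa using hj)]

/-- Induct on the set of coordinates where `A` may fail to be basic: by additivity at such a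
coordinate `j`, `g A = g A[{x₀ j}] + g A[{x₀ j}ᶜ] - g A[(A j)ᶜ]`, three boxes basic at `j`. -/
theorem IsAdditive.eq_zero_of_forall_isBasic {g : (∀ i, Finset (X i)) → ℝ} (hg : IsAdditive g)
    (x₀ : ∀ i, X i) (h₀ : ∀ B, IsProperBox B → (∀ i, IsBasic (x₀ i) (B i)) → g B = 0)
    {A : ∀ i, Finset (X i)} (hA : IsProperBox A) : g A = 0 := by
  suffices H : ∀ J : Finset (Fin d), ∀ A, IsProperBox A → (∀ i ∉ J, IsBasic (x₀ i) (A i)) →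
      g A = 0 from H univ A hA (by simp)
  intro J
  induction J using Finset.induction_on with
  | empty => exact fun A hA hbasic => h₀ A hA fun i => hbasic i (notMem_empty i)
  | insert j J _ ih =>
    intro A hA hbasic
    have hupdate (S : Finset (X j)) (hS : S.Nonempty ∧ S ≠ univ) (hSb : IsBasic (x₀ j) S) :
        g (update A j S) = 0 := by
      refine ih _ (hA.update hS) fun i hi => ?_
      rcases eq_or_ne i j with rfl | hij
      · simpa using hSb
      · simpa [update_of_ne hij] using hbasic i (by simp [hij, hi])
    by_cases hAj : IsBasic (x₀ j) (A j)
    · simpa using hupdate (A j) (hA j) hAj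
    obtain ⟨y, hy⟩ := (hA j).1
    have hx : x₀ j ∉ A j := fun h => hAj (Or.inl h)
    have hyx : y ≠ x₀ j := fun h => hx (h ▸ hy)
    have proper_of (S : Finset (X j)) (a b : X j) (ha : a ∈ S) (hb : b ∉ S) :
        S.Nonempty ∧ S ≠ univ := ⟨⟨a, ha⟩, fun h => hb (h ▸ mem_univ b)⟩
    have hsingle := proper_of {x₀ j} (x₀ j) y (mem_singleton_self _) (by simpa using hyx)
    have hadd := hg j A (update A j {x₀ j}) hA (hA.update hsingle)
      fun k hk => (update_of_ne hk _ _).symm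
    rw [update_idem, update_self,
      hupdate _ (proper_of _ (x₀ j) y (mem_compl.2 hx) (by simpa using hy))
        (Or.inl (mem_compl.2 hx)),
      hupdate _ hsingle (Or.inl (mem_singleton_self _)),
      hupdate _ (proper_of _ y (x₀ j) (by simpa using hyx) (by simp)) (Or.inr rfl)] at hadd
    linarith

def basicBoxes (x₀ : ∀ i, X i) : Finset (∀ i, Finset (X i)) :=
  univ.filter fun B => ∀ i, IsBasic (x₀ i) (B i)

theorem prod_basicDelta_of_isBasic {x₀ : ∀ i, X i} {B₀ B : ∀ i, Finset (X i)}
    (hB₀ : ∀ i, IsBasic (x₀ i) (B₀ i)) (hB : ∀ i, IsBasic (x₀ i) (B i)) :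
    ∏ i, basicDelta (x₀ i) (B₀ i) (B i) = if B = B₀ then 1 else 0 := by
  simp only [basicDelta_of_isBasic (hB₀ _) (hB _), prod_boole, mem_univ, true_implies, funext_iff]

theorem IsAdditive.eq_sum_basicBoxes {f : (∀ i, Finset (X i)) → ℝ} (hf : IsAdditive f)
    (x₀ : ∀ i, X i) {A : ∀ i, Finset (X i)} (hA : IsProperBox A) :
    f A = ∑ B₀ ∈ basicBoxes x₀, f B₀ * ∏ i, basicDelta (x₀ i) (B₀ i) (A i) := by
  let g := f - ∑ B₀ ∈ basicBoxes x₀, f B₀ • fun A => ∏ i, basicDelta (x₀ i) (B₀ i) (A i)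
  have hg : g ∈ additiveFunctions X := sub_mem hf <| sum_mem fun B₀ _ =>
    Submodule.smul_mem _ _ <|
      isAdditive_prod fun i => basicDelta_add_basicDelta_compl (x₀ i) (B₀ i)
  have hgA := IsAdditive.eq_zero_of_forall_isBasic hg x₀ (fun B _ hB => ?_) hA
  · simpa [g, sub_eq_zero] using hgA
  · have hBmem : B ∈ basicBoxes x₀ := by simpa [basicBoxes] using hB
    simp only [g, Pi.sub_apply, Finset.sum_apply, Pi.smul_apply, smul_eq_mul]
    rw [sum_eq_single_of_mem B hBmem fun B₀ hB₀ hne => ?_]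
    · rw [prod_basicDelta_of_isBasic hB hB, if_pos rfl, mul_one, sub_self]
    · rw [prod_basicDelta_of_isBasic (by simpa [basicBoxes] using hB₀) hB, if_neg hne.symm,
        mul_zero]

theorem IsAdditive.sum_eq_sum_basicBoxes {f : (∀ i, Finset (X i)) → ℝ} (hf : IsAdditive f)
    (x₀ : ∀ i, X i) {𝓗 : Finset (∀ i, Finset (X i))} (h𝓗 : ∀ A ∈ 𝓗, IsProperBox A) :
    ∑ A ∈ 𝓗, f A =
      ∑ B₀ ∈ basicBoxes x₀, f B₀ * ∑ A ∈ 𝓗, ∏ i, basicDelta (x₀ i) (B₀ i) (A i) := by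
  rw [sum_congr rfl fun A hA => hf.eq_sum_basicBoxes x₀ (h𝓗 A hA), sum_comm]
  simp_rw [mul_sum]

end Additive

theorem stmt_13_general {d : ℕ} (X : Fin d → Type*) [∀ i, Fintype (X i)] [∀ i, DecidableEq (X i)]
    (f : (∀ i, Finset (X i)) → ℝ)
    (hadd : ∀ (i : Fin d) (A C : ∀ i, Finset (X i)),
      (∀ j, (A j).Nonempty ∧ A j ≠ Finset.univ) →
      (∀ j, (C j).Nonempty ∧ C j ≠ Finset.univ) →
      (∀ j, j ≠ i → A j = C j) →
      f A + f (Function.update A i (A i)ᶜ) = f C + f (Function.update C i (C i)ᶜ))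
    (F : Set (∀ i, X i))
    (𝓕 𝓖 : Finset (∀ i, Finset (X i)))
    (h𝓕p : ∀ A ∈ 𝓕, ∀ i, (A i).Nonempty ∧ A i ≠ Finset.univ)
    (h𝓖p : ∀ A ∈ 𝓖, ∀ i, (A i).Nonempty ∧ A i ≠ Finset.univ)
    (h𝓕d : ∀ A ∈ 𝓕, ∀ B ∈ 𝓕, A ≠ B → ∃ i, A i = (B i)ᶜ)
    (h𝓖d : ∀ A ∈ 𝓖, ∀ B ∈ 𝓖, A ≠ B → ∃ i, A i = (B i)ᶜ)
    (h𝓕u : F = {x | ∃ A ∈ 𝓕, ∀ i, x i ∈ A i})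
    (h𝓖u : F = {x | ∃ A ∈ 𝓖, ∀ i, x i ∈ A i}) :
    ∑ A ∈ 𝓕, f A = ∑ A ∈ 𝓖, f A := by
  have h𝓕 : IsProperSuit 𝓕 := ⟨h𝓕p, h𝓕d⟩
  have h𝓖 : IsProperSuit 𝓖 := ⟨h𝓖p, h𝓖d⟩
  rcases isEmpty_or_nonempty (∀ i, X i) with hX | hX
  · have hempty (𝓗 : Finset (∀ i, Finset (X i))) (h𝓗 : ∀ A ∈ 𝓗, IsProperBox A) : 𝓗 = ∅ :=
      eq_empty_of_forall_notMem fun A hA => not_nonempty_iff.2 hX (h𝓗 A hA).nonempty_pi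
    rw [hempty 𝓕 h𝓕p, hempty 𝓖 h𝓖p]
  obtain ⟨x₀⟩ := hX
  rw [IsAdditive.sum_eq_sum_basicBoxes hadd x₀ h𝓕p,
    IsAdditive.sum_eq_sum_basicBoxes hadd x₀ h𝓖p]
  refine sum_congr rfl fun B₀ _ => ?_
  rw [sum_prod_basicDelta_eq_of_boxUnion_eq h𝓕 h𝓖 (h𝓕u.symm.trans h𝓖u)]

/-- for a polybox `F` with two proper suits `𝓕`, `𝓖` and any additive
function `f` on proper boxes, `∑_{A ∈ 𝓕} f A = ∑_{A ∈ 𝓖} f A`. -/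
theorem stmt_13 {d : ℕ} (X : Fin d → Type*) [∀ i, Fintype (X i)] [∀ i, DecidableEq (X i)]
    (hX : ∀ i, 2 ≤ Fintype.card (X i))
    (f : (∀ i, Finset (X i)) → ℝ)
    (hadd : ∀ (i : Fin d) (A C : ∀ i, Finset (X i)),
      (∀ j, (A j).Nonempty ∧ A j ≠ Finset.univ) →
      (∀ j, (C j).Nonempty ∧ C j ≠ Finset.univ) →
      (∀ j, j ≠ i → A j = C j) →
      f A + f (Function.update A i (A i)ᶜ) = f C + f (Function.update C i (C i)ᶜ))
    (F : Set (∀ i, X i))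
    (𝓕 𝓖 : Finset (∀ i, Finset (X i)))
    (h𝓕p : ∀ A ∈ 𝓕, ∀ i, (A i).Nonempty ∧ A i ≠ Finset.univ)
    (h𝓖p : ∀ A ∈ 𝓖, ∀ i, (A i).Nonempty ∧ A i ≠ Finset.univ)
    (h𝓕d : ∀ A ∈ 𝓕, ∀ B ∈ 𝓕, A ≠ B → ∃ i, A i = (B i)ᶜ)
    (h𝓖d : ∀ A ∈ 𝓖, ∀ B ∈ 𝓖, A ≠ B → ∃ i, A i = (B i)ᶜ)
    (h𝓕u : F = {x | ∃ A ∈ 𝓕, ∀ i, x i ∈ A i})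
    (h𝓖u : F = {x | ∃ A ∈ 𝓖, ∀ i, x i ∈ A i}) :
    ∑ A ∈ 𝓕, f A = ∑ A ∈ 𝓖, f A :=
  stmt_13_general X f hadd F 𝓕 𝓖 h𝓕p h𝓖p h𝓕d h𝓖d h𝓕u h𝓖u
end

section
/- Let X be a d-box and λ : {proper boxes of X} → E a dyadic labelling, i.e., a surjection such that whenever A,B and C,D are twin pairs with A∪B = C∪D, one has {λ(A),λ(B)} = {λ(C),λ(D)}. Then for any polybox F ⊆ X and any two proper suits F and G for F, the multiset-independent equality of label sets holds: {λ(A) : A ∈ F} = {λ(A) : A ∈ G}, and moreover for each e ∈ E the number of boxes labelled e is the same in F and G. -/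
/-!
For a dyadic labelling and a label `e`, the indicator `φ` of `lab A = e` is twin-additive:
`φ A + φ A'` is the same for all twin pairs `A, A'` with the same union. It therefore suffices to
show that `∑ A ∈ 𝓕, φ A` is the same for all proper suits `𝓕` of a polybox, for every
twin-additive `φ : boxes → ℚ`.

Call `σ` a polarization of `X i` if it picks exactly one set of each pair `{S, Sᶜ}` of proper
sets. The chessboard lemma says that the number of boxes of a suit whose every coordinate is
picked by a given polarization depends only on the polybox; it is proved by slicing the suit
along one coordinate at a time. Expanding products, the same then holds for
`A ↦ ∏ i, w i (A i)` whenever each `w i` is a combination of two polarization indicators, e.g.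
the constant `1` or a dipole `S ↦ [S = R] - [S = Rᶜ]`. Finally a twin-additive `φ` is a
combination of such products: in each coordinate its part symmetric under `A i ↦ (A i)ᶜ` does
not depend on `A i`, and its antisymmetric part is a combination of dipoles.
-/

open Finset Function

namespace Polybox

section Polarization

lemma exists_nonempty_ne_univ (α : Type*) [Fintype α] [Nontrivial α] :
    ∃ R : Finset α, R.Nonempty ∧ R ≠ univ := by
  obtain ⟨a, b, hab⟩ := exists_pair_ne α
  exact ⟨{a}, singleton_nonempty a, fun h => hab (mem_singleton.mp (h ▸ mem_univ b)).symm⟩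

variable {α : Type*} [Fintype α] [DecidableEq α]

def IsPolarization (σ : Finset α → Bool) : Prop :=
  ∀ S : Finset α, S.Nonempty → S ≠ univ → σ Sᶜ = !σ S

structure IsComplementaryFamily {β : Type*} (𝓗 : Finset β) (f : β → Finset α) : Prop where
  proper : ∀ A ∈ 𝓗, (f A).Nonempty ∧ f A ≠ univ
  eq_compl : ∀ A ∈ 𝓗, ∀ B ∈ 𝓗, A ≠ B → f A = (f B)ᶜ

namespace IsComplementaryFamily

variable {β : Type*} {𝓗 : Finset β} {f : β → Finset α} {σ : Finset α → Bool}

lemma polarized_of_ne (h : IsComplementaryFamily 𝓗 f) (hσ : IsPolarization σ) {A B : β}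
    (hA : A ∈ 𝓗) (hB : B ∈ 𝓗) (hAB : A ≠ B) : σ (f A) = !σ (f B) := by
  rw [h.eq_compl A hA B hB hAB]
  exact hσ _ (h.proper B hB).1 (h.proper B hB).2

lemma card_filter_le_one [DecidableEq β] (h : IsComplementaryFamily 𝓗 f) (hσ : IsPolarization σ) :
    #(𝓗.filter fun A => σ (f A)) ≤ 1 := by
  refine card_le_one.mpr fun A hA B hB => ?_
  rw [mem_filter] at hA hB
  by_contra hAB
  have := h.polarized_of_ne hσ hA.1 hB.1 hAB
  simp [hA.2, hB.2] at this

lemma biUnion_eq_univ_of_ne (h : IsComplementaryFamily 𝓗 f) {A B : β} (hA : A ∈ 𝓗)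
    (hB : B ∈ 𝓗) (hAB : A ≠ B) : 𝓗.biUnion f = univ := by
  refine eq_univ_of_forall fun x => mem_biUnion.mpr ?_
  by_cases hx : x ∈ f B
  · exact ⟨B, hB, hx⟩
  · exact ⟨A, hA, by rw [h.eq_compl A hA B hB hAB]; exact mem_compl.mpr hx⟩

/-- Seen from one coordinate, a complementary family is `∅`, `{S}` or `{S, Sᶜ}`; which
polarized set it contains is therefore read off from its union. -/
lemma exists_polarized_iff [DecidableEq β] (h : IsComplementaryFamily 𝓗 f) (hσ : IsPolarization σ) :
    (∃ A ∈ 𝓗, σ (f A)) ↔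
      (𝓗.biUnion f).Nonempty ∧ (𝓗.biUnion f = univ ∨ σ (𝓗.biUnion f)) := by
  have key : ∀ A ∈ 𝓗, (𝓗 = {A} ∧ 𝓗.biUnion f = f A) ∨
      ((∃ B ∈ 𝓗, σ (f B)) ∧ 𝓗.biUnion f = univ) := by
    intro A hA
    by_cases hne : ∃ B ∈ 𝓗, B ≠ A
    · obtain ⟨B, hB, hBA⟩ := hne
      refine Or.inr ⟨?_, h.biUnion_eq_univ_of_ne hB hA hBA⟩
      cases hσB : σ (f B)
      · exact ⟨A, hA, by simpa [hσB] using h.polarized_of_ne hσ hA hB hBA.symm⟩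
      · exact ⟨B, hB, hσB⟩
    · push Not at hne
      have hsingle : 𝓗 = {A} := eq_singleton_iff_unique_mem.mpr ⟨hA, hne⟩
      exact Or.inl ⟨hsingle, by simp [hsingle]⟩
  constructor
  · rintro ⟨A, hA, hσA⟩
    have hT : (𝓗.biUnion f).Nonempty :=
      (h.proper A hA).1.mono (subset_biUnion_of_mem f hA)
    rcases key A hA with ⟨-, hT'⟩ | ⟨-, hT'⟩
    · exact ⟨hT, Or.inr (hT' ▸ hσA)⟩
    · exact ⟨hT, Or.inl hT'⟩
  · rintro ⟨⟨x, hx⟩, hT⟩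
    obtain ⟨A, hA, -⟩ := mem_biUnion.mp hx
    rcases key A hA with ⟨-, hT'⟩ | ⟨hex, -⟩
    · rw [hT'] at hT
      exact ⟨A, hA, hT.resolve_left (h.proper A hA).2⟩
    · exact hex

lemma card_filter_eq [DecidableEq β] {𝓗' : Finset β} (h : IsComplementaryFamily 𝓗 f)
    (h' : IsComplementaryFamily 𝓗' f) (hσ : IsPolarization σ)
    (hcover : ∀ x, #(𝓗.filter fun A => x ∈ f A) = #(𝓗'.filter fun A => x ∈ f A)) :
    #(𝓗.filter fun A => σ (f A)) = #(𝓗'.filter fun A => σ (f A)) := by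
  have hunion : 𝓗.biUnion f = 𝓗'.biUnion f := by
    ext x
    have := hcover x
    simp only [mem_biUnion, ← filter_nonempty_iff, ← card_pos, this]
  have hpos : 0 < #(𝓗.filter fun A => σ (f A)) ↔ 0 < #(𝓗'.filter fun A => σ (f A)) := by
    simp only [card_pos, filter_nonempty_iff, h.exists_polarized_iff hσ,
      h'.exists_polarized_iff hσ, hunion]
  have := h.card_filter_le_one hσ
  have := h'.card_filter_le_one hσ
  omega

end IsComplementaryFamily

def IsPolarCombination (w : Finset α → ℚ) : Prop :=
  ∃ (σ : Bool → Finset α → Bool) (c : Bool → ℚ), (∀ b, IsPolarization (σ b)) ∧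
    ∀ S : Finset α, S.Nonempty → S ≠ univ → w S = ∑ b, c b * if σ b S then 1 else 0

lemma isPolarization_mem (a : α) : IsPolarization fun S : Finset α => decide (a ∈ S) := by
  intro S _ _
  simp

lemma isPolarCombination_one [Nonempty α] : IsPolarCombination fun _ : Finset α => (1 : ℚ) := by
  obtain ⟨a⟩ := ‹Nonempty α›
  refine ⟨fun b S => b == decide (a ∈ S), fun _ => 1, fun b S _ _ => ?_, fun S _ _ => ?_⟩
  · cases b <;> simp
  · by_cases ha : a ∈ S <;> simp [ha]

def dipole (R S : Finset α) : ℚ :=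
  (if S = R then 1 else 0) - (if S = Rᶜ then 1 else 0)

/-- The two polarizations are `S ↦ a ∈ S` for some `a ∈ R` and its flip on the pair `{R, Rᶜ}`. -/
lemma isPolarCombination_dipole {R : Finset α} (hR : R.Nonempty) :
    IsPolarCombination (dipole R) := by
  obtain ⟨a, ha⟩ := hR
  have hRc : R ≠ Rᶜ := fun h => by
    have : a ∈ Rᶜ := h ▸ ha
    exact mem_compl.mp this ha
  let flip : Finset α → Bool := fun S => if S = R ∨ Sᶜ = R then decide (a ∉ S) else decide (a ∈ S)
  refine ⟨fun b => if b then fun S => decide (a ∈ S) else flip,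
    fun b => if b then 1 else -1, fun b => ?_, fun S _ _ => ?_⟩
  · cases b
    · intro S _ _
      simp only [flip, Bool.false_eq_true, if_false, compl_compl, or_comm (a := Sᶜ = R)]
      split_ifs <;> simp
    · exact isPolarization_mem a
  · by_cases h1 : S = R
    · subst h1; simp [dipole, flip, ha, hRc]
    · by_cases h2 : S = Rᶜ
      · subst h2; simp [dipole, flip, ha, hRc.symm]
      · have h2' : Sᶜ ≠ R := fun h => h2 (by rw [← h, compl_compl])
        by_cases haS : a ∈ S <;> simp [dipole, flip, h1, h2, h2', haS]

lemma compl_nonempty_and_ne_univ {S : Finset α} (hS : S.Nonempty ∧ S ≠ univ) :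
    Sᶜ.Nonempty ∧ Sᶜ ≠ univ :=
  ⟨nonempty_iff_ne_empty.mpr fun h => hS.2 ((compl_eq_empty_iff S).mp h),
    (compl_ne_univ_iff_nonempty S).mpr hS.1⟩

lemma sum_mul_dipole (g : Finset α → ℚ) {S : Finset α} (hS : S.Nonempty ∧ S ≠ univ) :
    ∑ R ∈ univ.filter (fun R : Finset α => R.Nonempty ∧ R ≠ univ), g R * dipole R S
      = g S - g Sᶜ := by
  simp only [dipole, mul_sub, sum_sub_distrib, mul_ite, mul_one, mul_zero, eq_compl_comm (x := S)]
  rw [sum_ite_eq, sum_ite_eq']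
  simp [hS, compl_nonempty_and_ne_univ hS]

end Polarization

section Suits

lemma forall_update_mem_iff {ι : Type*} [DecidableEq ι] {X : ι → Type*} [∀ i, Fintype (X i)]
    {x : ∀ i, X i} {A : ∀ i, Finset (X i)} {i₀ : ι} {x₀ : X i₀} :
    (∀ i, update x i₀ x₀ i ∈ A i) ↔ x₀ ∈ A i₀ ∧ ∀ i, x i ∈ update A i₀ univ i := by
  rw [forall_update_iff (p := fun i y => y ∈ A i), forall_update_iff (p := fun i y => x i ∈ y)]
  simp

variable {ι : Type*} {X : ι → Type*} [∀ i, Fintype (X i)]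

abbrev Box (X : ι → Type*) : Type _ := ∀ i, Finset (X i)

def IsProperBox (A : Box X) : Prop := ∀ i, (A i).Nonempty ∧ A i ≠ univ

lemma IsProperBox.update [DecidableEq ι] {A : Box X} (hA : IsProperBox A) {i : ι} {R : Finset (X i)}
    (hR : R.Nonempty ∧ R ≠ univ) : IsProperBox (update A i R) := by
  intro j
  by_cases hji : j = i
  · subst hji; simpa using hR
  · simpa [update_of_ne hji] using hA j

variable [∀ i, DecidableEq (X i)]

/-- Boxes are proper in the coordinates of `s` and full in the others: the slices of a proper
suit are suits of this kind. -/
structure IsSuit (s : Finset ι) (F : Set (∀ i, X i)) (𝓕 : Finset (Box X)) : Prop where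
  proper : ∀ A ∈ 𝓕, ∀ i ∈ s, (A i).Nonempty ∧ A i ≠ univ
  full : ∀ A ∈ 𝓕, ∀ i ∉ s, A i = univ
  dichotomous : ∀ A ∈ 𝓕, ∀ B ∈ 𝓕, A ≠ B → ∃ i, A i = (B i)ᶜ
  union_eq : F = {x | ∃ A ∈ 𝓕, ∀ i, x i ∈ A i}

def slice [Fintype ι] [DecidableEq ι] (𝓕 : Finset (Box X)) (i₀ : ι) (x₀ : X i₀) : Finset (Box X) :=
  (𝓕.filter fun A => x₀ ∈ A i₀).image fun A => update A i₀ univ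

namespace IsSuit

variable {s : Finset ι} {F : Set (∀ i, X i)} {𝓕 𝓖 : Finset (Box X)}

lemma nonempty [∀ i, Nonempty (X i)] (hF : IsSuit s F 𝓕) {A : Box X} (hA : A ∈ 𝓕) (i : ι) :
    (A i).Nonempty := by
  by_cases hi : i ∈ s
  · exact (hF.proper A hA i hi).1
  · rw [hF.full A hA i hi]
    exact univ_nonempty

lemma exists_ne_eq_compl (hF : IsSuit s F 𝓕) {A B : Box X} (hA : A ∈ 𝓕) (hB : B ∈ 𝓕)
    (hAB : A ≠ B) {i₀ : ι} {x₀ : X i₀} (hxA : x₀ ∈ A i₀) (hxB : x₀ ∈ B i₀) :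
    ∃ i ≠ i₀, A i = (B i)ᶜ := by
  obtain ⟨i, hi⟩ := hF.dichotomous A hA B hB hAB
  refine ⟨i, ?_, hi⟩
  rintro rfl
  exact mem_compl.mp (hi ▸ hxA) hxB

lemma subset_of_empty [∀ i, Nonempty (X i)] (hF : IsSuit ∅ F 𝓕) (hG : IsSuit ∅ F 𝓖) :
    𝓕 ⊆ 𝓖 := by
  have full : ∀ {𝓗}, IsSuit ∅ F 𝓗 → ∀ A ∈ 𝓗, A = fun _ => univ := fun h A hA =>
    funext fun i => h.full A hA i (notMem_empty i)
  intro A hA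
  obtain ⟨x⟩ : Nonempty (∀ i, X i) := inferInstance
  have hx : x ∈ F := hF.union_eq ▸ ⟨A, hA, by simp [full hF A hA]⟩
  rw [hG.union_eq] at hx
  obtain ⟨B, hB, -⟩ := hx
  rwa [full hF A hA, ← full hG B hB]

lemma injOn_update_univ [DecidableEq ι] [∀ i, Nonempty (X i)] (hF : IsSuit s F 𝓕) {i₀ : ι}
    (x₀ : X i₀) :
    Set.InjOn (fun A : Box X => update A i₀ univ) (𝓕.filter fun A => x₀ ∈ A i₀) := by
  intro A hA B hB hAB
  simp only [coe_filter, Set.mem_ofPred_eq] at hA hB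
  by_contra hne
  obtain ⟨i, hi₀, hi⟩ := hF.exists_ne_eq_compl hA.1 hB.1 hne hA.2 hB.2
  have hAi : A i = B i := by simpa [update_of_ne hi₀] using congrFun hAB i
  have hself : B i = (B i)ᶜ := hAi.symm.trans hi
  obtain ⟨x, hx⟩ := hF.nonempty hB.1 i
  have : x ∈ (B i)ᶜ := by rwa [← hself]
  exact mem_compl.mp this hx

lemma card_filter_slice [Fintype ι] [DecidableEq ι] [∀ i, Nonempty (X i)] (hF : IsSuit s F 𝓕)
    {i₀ : ι} (x₀ : X i₀) {P : Box X → Prop} [DecidablePred P]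
    (hP : ∀ A, P (update A i₀ univ) ↔ P A) :
    #((slice 𝓕 i₀ x₀).filter P) = #((𝓕.filter P).filter fun A => x₀ ∈ A i₀) := by
  rw [slice, filter_image, card_image_of_injOn, filter_filter, filter_filter]
  · simp only [hP, and_comm]
  · exact (hF.injOn_update_univ x₀).mono (by simp +contextual [Set.subset_def])

lemma slice [Fintype ι] [DecidableEq ι] {i₀ : ι} (hF : IsSuit (insert i₀ s) F 𝓕) (hi₀ : i₀ ∉ s)
    (x₀ : X i₀) :
    IsSuit s {x | update x i₀ x₀ ∈ F} (slice 𝓕 i₀ x₀) where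
  proper := by
    simp only [Polybox.slice, mem_image, mem_filter, forall_exists_index, and_imp]
    rintro _ A hA - rfl i hi
    rw [update_of_ne (ne_of_mem_of_not_mem hi hi₀)]
    exact hF.proper A hA i (mem_insert_of_mem hi)
  full := by
    simp only [Polybox.slice, mem_image, mem_filter, forall_exists_index, and_imp]
    rintro _ A hA - rfl i hi
    by_cases hii₀ : i = i₀
    · subst hii₀; simp
    · rw [update_of_ne hii₀]
      exact hF.full A hA i (by simp [hii₀, hi])
  dichotomous := by
    simp only [Polybox.slice, mem_image, mem_filter, forall_exists_index, and_imp]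
    rintro _ A hA hxA rfl _ B hB hxB rfl hne
    obtain ⟨i, hi₀, hi⟩ :=
      hF.exists_ne_eq_compl hA hB (fun h => hne (by rw [h])) hxA hxB
    exact ⟨i, by simp [update_of_ne hi₀, hi]⟩
  union_eq := by
    ext x
    simp only [hF.union_eq, Set.mem_ofPred_eq, forall_update_mem_iff, Polybox.slice, mem_image,
      mem_filter, exists_exists_and_eq_and, ← and_assoc]

lemma isComplementaryFamily_filter [Fintype ι] [DecidableEq ι] [∀ i, Nonempty (X i)]
    {i₀ : ι} (hF : IsSuit (insert i₀ s) F 𝓕) {σ : ∀ i, Finset (X i) → Bool}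
    (hσ : ∀ i, IsPolarization (σ i)) :
    IsComplementaryFamily (𝓕.filter fun A => ∀ i ∈ s, σ i (A i)) (· i₀) where
  proper A hA := hF.proper A (mem_filter.mp hA).1 i₀ (mem_insert_self i₀ s)
  eq_compl A hA B hB hAB := by
    rw [mem_filter] at hA hB
    obtain ⟨i, hi⟩ := hF.dichotomous A hA.1 B hB.1 hAB
    by_cases hii₀ : i = i₀
    · exact hii₀ ▸ hi
    by_cases his : i ∈ s
    · have hB' := hF.proper B hB.1 i (mem_insert_of_mem his)
      have := hσ i (B i) hB'.1 hB'.2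
      simp [← hi, hA.2 i his, hB.2 i his] at this
    · have hfull : ∀ C ∈ 𝓕, C i = univ := fun C hC => hF.full C hC i (by simp [hii₀, his])
      obtain ⟨x, hx⟩ := hF.nonempty hA.1 i
      simp [hi, hfull B hB.1] at hx

/-- Induction on `s`: the boxes picked by `σ` on `s` form a complementary family in the
coordinate `i₀`, and the number of its members covering a point `x₀` is a count of the same kind
in the slice at `x₀`, which has one active coordinate less. -/
theorem card_filter_polarized_eq [Fintype ι] [DecidableEq ι] [∀ i, Nonempty (X i)]
    {σ : ∀ i, Finset (X i) → Bool} (hσ : ∀ i, IsPolarization (σ i))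
    (hF : IsSuit s F 𝓕) (hG : IsSuit s F 𝓖) :
    #(𝓕.filter fun A => ∀ i ∈ s, σ i (A i)) = #(𝓖.filter fun A => ∀ i ∈ s, σ i (A i)) := by
  induction s using Finset.induction_on generalizing F 𝓕 𝓖 with
  | empty => rw [(hF.subset_of_empty hG).antisymm (hG.subset_of_empty hF)]
  | @insert i₀ s hi₀ ih =>
    have hsplit : ∀ 𝓗 : Finset (Box X), 𝓗.filter (fun A => ∀ i ∈ insert i₀ s, σ i (A i))
        = (𝓗.filter fun A => ∀ i ∈ s, σ i (A i)).filter fun A => σ i₀ (A i₀) := by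
      intro 𝓗
      simp only [filter_filter, forall_mem_insert, and_comm]
    have hP : ∀ A : Box X, (∀ i ∈ s, σ i (update A i₀ univ i)) ↔ ∀ i ∈ s, σ i (A i) :=
      fun A => forall₂_congr fun i hi => by rw [update_of_ne (ne_of_mem_of_not_mem hi hi₀)]
    rw [hsplit, hsplit]
    refine (hF.isComplementaryFamily_filter hσ).card_filter_eq
      (hG.isComplementaryFamily_filter hσ) (hσ i₀) fun x₀ => ?_
    rw [← hF.card_filter_slice x₀ hP, ← hG.card_filter_slice x₀ hP]
    exact ih (hF.slice hi₀ x₀) (hG.slice hi₀ x₀)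

end IsSuit

def IsTwinAdditive [DecidableEq ι] (φ : Box X → ℚ) : Prop :=
  ∀ i (A C : Box X), IsProperBox A → IsProperBox C → (∀ j ≠ i, A j = C j) →
    φ A + φ (update A i (A i)ᶜ) = φ C + φ (update C i (C i)ᶜ)

lemma IsTwinAdditive.comp_update [DecidableEq ι] {φ : Box X → ℚ} (hφ : IsTwinAdditive φ) {i : ι}
    {R : Finset (X i)} (hR : R.Nonempty ∧ R ≠ univ) :
    IsTwinAdditive fun A => φ (update A i R) := by
  intro j A C hA hC hAC
  by_cases hji : j = i
  · subst hji
    have hAC' : update A j R = update C j R := by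
      ext1 k
      by_cases hkj : k = j
      · subst hkj; simp
      · simp [update_of_ne hkj, hAC k hkj]
    simp only [update_idem, hAC']
  · have hAC' : ∀ k ≠ j, update A i R k = update C i R k := fun k hkj => by
      by_cases hki : k = i
      · subst hki; simp
      · simp [update_of_ne hki, hAC k hkj]
    simpa only [update_of_ne hji, update_comm hji] using
      hφ j _ _ (hA.update hR) (hC.update hR) hAC'

/-- In the coordinate `i`, the symmetric part `φ A + φ (update A i (A i)ᶜ)` can be evaluated at
any proper `R₀`, and the antisymmetric part is expanded in dipoles. -/
lemma IsTwinAdditive.two_mul_eq_add_sum_dipole [DecidableEq ι] {φ : Box X → ℚ}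
    (hφ : IsTwinAdditive φ) {A : Box X} (hA : IsProperBox A) {i : ι} {R₀ : Finset (X i)}
    (hR₀ : R₀.Nonempty ∧ R₀ ≠ univ) :
    2 * φ A = φ (update A i R₀) + φ (update A i R₀ᶜ) +
      ∑ R ∈ univ.filter (fun R : Finset (X i) => R.Nonempty ∧ R ≠ univ),
        φ (update A i R) * dipole R (A i) := by
  have hsym := hφ i A (update A i R₀) hA (hA.update hR₀) fun j hj => (update_of_ne hj _ _).symm
  rw [update_idem, update_self] at hsym
  rw [sum_mul_dipole (fun R => φ (update A i R)) (hA i), update_eq_self]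
  linear_combination hsym

lemma prod_compl_update {ι : Type*} [Fintype ι] [DecidableEq ι] {β : ι → Type*} {M : Type*}
    [CommMonoid M] {s : Finset ι} {i : ι} (hi : i ∉ s) (w : ∀ i, β i → M) (v : β i → M)
    (A : ∀ i, β i) :
    ∏ j ∈ sᶜ, update w i v j (A j) = v (A i) * ∏ j ∈ (insert i s)ᶜ, w j (A j) := by
  rw [← insert_compl_insert hi, prod_insert (by simp), update_self]
  congr 1
  refine prod_congr rfl fun j hj => ?_
  rw [update_of_ne (by rintro rfl; simp at hj)]

end Suits

section Invariants

variable {ι : Type*} [Fintype ι] {X : ι → Type*} [∀ i, Fintype (X i)]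
  [∀ i, DecidableEq (X i)]

def suitInvariants (X : ι → Type*) [∀ i, Fintype (X i)] [∀ i, DecidableEq (X i)] :
    Submodule ℚ (Box X → ℚ) where
  carrier := {φ | ∀ ⦃F 𝓕 𝓖⦄, IsSuit univ F 𝓕 → IsSuit univ F 𝓖 → ∑ A ∈ 𝓕, φ A = ∑ A ∈ 𝓖, φ A}
  add_mem' hφ hψ F 𝓕 𝓖 hF hG := by
    simp only [Pi.add_apply, sum_add_distrib, hφ hF hG, hψ hF hG]
  zero_mem' _ _ _ _ _ := by simp
  smul_mem' c φ hφ F 𝓕 𝓖 hF hG := by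
    simp only [Pi.smul_apply, smul_eq_mul, ← mul_sum, hφ hF hG]

lemma mem_suitInvariants_of_eqOn {φ ψ : Box X → ℚ} (hφ : φ ∈ suitInvariants X)
    (h : ∀ A, IsProperBox A → φ A = ψ A) : ψ ∈ suitInvariants X := by
  intro F 𝓕 𝓖 hF hG
  have hproper : ∀ {𝓗}, IsSuit univ F 𝓗 → ∀ A ∈ 𝓗, φ A = ψ A := fun hH A hA =>
    h A fun i => hH.proper A hA i (mem_univ i)
  rw [← sum_congr rfl (hproper hF), ← sum_congr rfl (hproper hG)]
  exact hφ hF hG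

/-- Expanding the product turns it into a combination of the counts of the chessboard lemma. -/
theorem prod_mem_suitInvariants [DecidableEq ι] [∀ i, Nonempty (X i)] {w : ∀ i, Finset (X i) → ℚ}
    (hw : ∀ i, IsPolarCombination (w i)) :
    (fun A : Box X => ∏ i, w i (A i)) ∈ suitInvariants X := by
  choose σ c hσ hwσ using hw
  have hcount : ∀ p : ι → Bool,
      (fun A : Box X => if ∀ i ∈ univ, σ i (p i) (A i) then (1 : ℚ) else 0)
        ∈ suitInvariants X := by
    intro p F 𝓕 𝓖 hF hG
    simp only [sum_boole, hF.card_filter_polarized_eq (fun i => hσ i (p i)) hG]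
  refine mem_suitInvariants_of_eqOn
    (sum_mem (t := univ) fun p _ => Submodule.smul_mem _ (∏ i, c i (p i)) (hcount p)) fun A hA => ?_
  simp only [Finset.sum_apply, Pi.smul_apply, smul_eq_mul]
  rw [prod_congr rfl fun i _ => hwσ i (A i) (hA i).1 (hA i).2, Fintype.prod_sum]
  refine sum_congr rfl fun p _ => ?_
  rw [prod_mul_distrib, prod_boole]
  congr

/-- Induction on `s`: by `IsTwinAdditive.two_mul_eq_add_sum_dipole`, `2 • φ` is a combination
of the functions `φ (update · i R)`, which depend on the coordinates in `s` only, weighted in the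
coordinate `i` by `1` or by a dipole. -/
theorem mul_prod_compl_mem_suitInvariants [DecidableEq ι] [∀ i, Nontrivial (X i)] (s : Finset ι)
    {φ : Box X → ℚ} (hφ : IsTwinAdditive φ)
    (hs : ∀ A C, IsProperBox A → IsProperBox C → (∀ i ∈ s, A i = C i) → φ A = φ C)
    {w : ∀ i, Finset (X i) → ℚ} (hw : ∀ i, IsPolarCombination (w i)) :
    (fun A => φ A * ∏ i ∈ sᶜ, w i (A i)) ∈ suitInvariants X := by
  induction s using Finset.induction_on generalizing φ w with
  | empty =>
    obtain ⟨c, hc⟩ : ∃ c, ∀ A, IsProperBox A → φ A = c := by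
      by_cases h : ∃ C : Box X, IsProperBox C
      · obtain ⟨C, hC⟩ := h
        exact ⟨φ C, fun A hA => hs A C hA hC (by simp)⟩
      · push Not at h
        exact ⟨0, fun A hA => absurd hA (h A)⟩
    refine mem_suitInvariants_of_eqOn (Submodule.smul_mem _ c (prod_mem_suitInvariants hw))
      fun A hA => ?_
    simp [hc A hA]
  | @insert i s hi ih =>
    have hfrozen : ∀ R : Finset (X i), R.Nonempty ∧ R ≠ univ → ∀ v, IsPolarCombination v →
        (fun A => φ (update A i R) * ∏ j ∈ sᶜ, update w i v j (A j)) ∈ suitInvariants X := by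
      intro R hR v hv
      refine ih (hφ.comp_update hR) (fun A C hA hC hAC => hs _ _ (hA.update hR) (hC.update hR) ?_)
        ((forall_update_iff w (p := fun _ u => IsPolarCombination u)).mpr ⟨hv, fun j _ => hw j⟩)
      intro j hj
      rcases mem_insert.mp hj with rfl | hj
      · simp
      · simp [update_of_ne (ne_of_mem_of_not_mem hj hi), hAC j hj]
    obtain ⟨R₀, hR₀⟩ := exists_nonempty_ne_univ (X i)
    have hsplit := add_mem (add_mem (hfrozen R₀ hR₀ _ isPolarCombination_one)
      (hfrozen R₀ᶜ (compl_nonempty_and_ne_univ hR₀) _ isPolarCombination_one))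
      (sum_mem (t := univ.filter fun R : Finset (X i) => R.Nonempty ∧ R ≠ univ) fun R hR =>
        hfrozen R (mem_filter.mp hR).2 _ (isPolarCombination_dipole (mem_filter.mp hR).2.1))
    refine mem_suitInvariants_of_eqOn (Submodule.smul_mem _ (1 / 2 : ℚ) hsplit) fun A hA => ?_
    simp only [Pi.smul_apply, Pi.add_apply, Finset.sum_apply, smul_eq_mul,
      prod_compl_update hi, ← mul_assoc, ← sum_mul]
    linear_combination -(∏ j ∈ (insert i s)ᶜ, w j (A j)) / 2 *
      hφ.two_mul_eq_add_sum_dipole hA hR₀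

theorem IsTwinAdditive.mem_suitInvariants [DecidableEq ι] [∀ i, Nontrivial (X i)]
    {φ : Box X → ℚ} (hφ : IsTwinAdditive φ) : φ ∈ suitInvariants X := by
  simpa using mul_prod_compl_mem_suitInvariants univ hφ
    (fun A C _ _ h => congrArg φ (funext fun i => h i (mem_univ i)))
    (fun _ => isPolarCombination_one)

end Invariants

lemma indicator_add_eq_of_pair_eq {E : Type*} [DecidableEq E] {a b c d : E}
    (h : ({a, b} : Set E) = {c, d}) (e : E) :
    ((if a = e then 1 else 0) + (if b = e then 1 else 0) : ℚ)
      = (if c = e then 1 else 0) + (if d = e then 1 else 0) := by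
  rcases Set.pair_eq_pair_iff.mp h with ⟨rfl, rfl⟩ | ⟨rfl, rfl⟩
  · rfl
  · exact add_comm _ _

end Polybox

open Polybox in
theorem stmt_14_general {d : ℕ} (X : Fin d → Type*) [∀ i, Fintype (X i)] [∀ i, DecidableEq (X i)]
    (hX : ∀ i, 2 ≤ Fintype.card (X i))
    (E : Type*) [DecidableEq E]
    (lab : (∀ i, Finset (X i)) → E)
    (htwin : ∀ (i : Fin d) (A C : ∀ i, Finset (X i)),
      (∀ j, (A j).Nonempty ∧ A j ≠ Finset.univ) →
      (∀ j, (C j).Nonempty ∧ C j ≠ Finset.univ) →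
      (∀ j, j ≠ i → A j = C j) →
      ({lab A, lab (Function.update A i (A i)ᶜ)} : Set E)
        = {lab C, lab (Function.update C i (C i)ᶜ)})
    (F : Set (∀ i, X i))
    (𝓕 𝓖 : Finset (∀ i, Finset (X i)))
    (h𝓕p : ∀ A ∈ 𝓕, ∀ i, (A i).Nonempty ∧ A i ≠ Finset.univ)
    (h𝓖p : ∀ A ∈ 𝓖, ∀ i, (A i).Nonempty ∧ A i ≠ Finset.univ)
    (h𝓕d : ∀ A ∈ 𝓕, ∀ B ∈ 𝓕, A ≠ B → ∃ i, A i = (B i)ᶜ)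
    (h𝓖d : ∀ A ∈ 𝓖, ∀ B ∈ 𝓖, A ≠ B → ∃ i, A i = (B i)ᶜ)
    (h𝓕u : F = {x | ∃ A ∈ 𝓕, ∀ i, x i ∈ A i})
    (h𝓖u : F = {x | ∃ A ∈ 𝓖, ∀ i, x i ∈ A i}) :
    𝓕.image lab = 𝓖.image lab ∧
    ∀ e : E, (𝓕.filter (fun A => lab A = e)).card
      = (𝓖.filter (fun A => lab A = e)).card := by
  have : ∀ i, Nontrivial (X i) := fun i => Fintype.one_lt_card_iff_nontrivial.mp (hX i)
  have h𝓕 : IsSuit univ F 𝓕 := ⟨fun A hA i _ => h𝓕p A hA i, by simp, h𝓕d, h𝓕u⟩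
  have h𝓖 : IsSuit univ F 𝓖 := ⟨fun A hA i _ => h𝓖p A hA i, by simp, h𝓖d, h𝓖u⟩
  have hcount : ∀ e, #(𝓕.filter fun A => lab A = e) = #(𝓖.filter fun A => lab A = e) := by
    intro e
    have hφ : IsTwinAdditive fun A : Box X => if lab A = e then (1 : ℚ) else 0 :=
      fun i A C hA hC hAC => indicator_add_eq_of_pair_eq (htwin i A C hA hC hAC) e
    have := hφ.mem_suitInvariants h𝓕 h𝓖
    simp only [sum_boole] at this
    exact_mod_cast this
  refine ⟨?_, hcount⟩
  ext e
  simp only [mem_image, ← filter_nonempty_iff, ← card_pos, hcount]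

/-- a dyadic labelling assigns to the boxes of any two proper suits of
the same polybox the same set of labels, and even with the same multiplicities. -/
theorem stmt_14 {d : ℕ} (X : Fin d → Type*) [∀ i, Fintype (X i)] [∀ i, DecidableEq (X i)]
    (hX : ∀ i, 2 ≤ Fintype.card (X i))
    (E : Type*) [DecidableEq E]
    (lab : (∀ i, Finset (X i)) → E)
    (hsurj : ∀ e : E, ∃ A : ∀ i, Finset (X i),
      (∀ i, (A i).Nonempty ∧ A i ≠ Finset.univ) ∧ lab A = e)
    (htwin : ∀ (i : Fin d) (A C : ∀ i, Finset (X i)),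
      (∀ j, (A j).Nonempty ∧ A j ≠ Finset.univ) →
      (∀ j, (C j).Nonempty ∧ C j ≠ Finset.univ) →
      (∀ j, j ≠ i → A j = C j) →
      ({lab A, lab (Function.update A i (A i)ᶜ)} : Set E)
        = {lab C, lab (Function.update C i (C i)ᶜ)})
    (F : Set (∀ i, X i))
    (𝓕 𝓖 : Finset (∀ i, Finset (X i)))
    (h𝓕p : ∀ A ∈ 𝓕, ∀ i, (A i).Nonempty ∧ A i ≠ Finset.univ)
    (h𝓖p : ∀ A ∈ 𝓖, ∀ i, (A i).Nonempty ∧ A i ≠ Finset.univ)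
    (h𝓕d : ∀ A ∈ 𝓕, ∀ B ∈ 𝓕, A ≠ B → ∃ i, A i = (B i)ᶜ)
    (h𝓖d : ∀ A ∈ 𝓖, ∀ B ∈ 𝓖, A ≠ B → ∃ i, A i = (B i)ᶜ)
    (h𝓕u : F = {x | ∃ A ∈ 𝓕, ∀ i, x i ∈ A i})
    (h𝓖u : F = {x | ∃ A ∈ 𝓖, ∀ i, x i ∈ A i}) :
    𝓕.image lab = 𝓖.image lab ∧
    ∀ e : E, (𝓕.filter (fun A => lab A = e)).card
      = (𝓖.filter (fun A => lab A = e)).card :=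
  stmt_14_general X hX E lab htwin F 𝓕 𝓖 h𝓕p h𝓖p h𝓕d h𝓖d h𝓕u h𝓖u
end

section
/- Let X be a d-box, and let F be a partition of the box ∏_i P'(X_i) (where P'(X_i) is the set of nonempty proper subsets of X_i) into equicomplementary boxes, i.e., boxes B such that for each i and each nonempty proper C ⊆ X_i, exactly one of C and X_i\C lies in B_i. Then the map λ_F assigning to each proper box A of X the unique member of F containing it is a dyadic labelling: it is surjective and for twin pairs A,B and C,D with A∪B = C∪D, {λ_F(A),λ_F(B)} = {λ_F(C),λ_F(D)}. -/
/-- A box `ℬ` in `∏ᵢ P'(Xᵢ)` is equicomplementary if each factor `ℬᵢ` consists of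
nonempty proper subsets of `Xᵢ` and contains exactly one of `C`, `Xᵢ \ C` for each
nonempty proper `C ⊆ Xᵢ`. -/
def Equicomplementary {d : ℕ} (X : Fin d → Type*) [∀ i, Fintype (X i)]
    [∀ i, DecidableEq (X i)] (ℬ : ∀ i, Set (Finset (X i))) : Prop :=
  (∀ i, ∀ D ∈ ℬ i, D.Nonempty ∧ D ≠ Finset.univ) ∧
  (∀ i, ∀ C : Finset (X i), C.Nonempty → C ≠ Finset.univ → (C ∈ ℬ i ↔ Cᶜ ∉ ℬ i))

/-- if `𝓕` is a partition of the box `∏ᵢ P'(Xᵢ)` into equicomplementary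
boxes and `lab` assigns to each proper box of `X` the member of `𝓕` containing it, then
`lab` is a dyadic labelling: it is surjective onto `𝓕` and respects twin pairs. -/
theorem stmt_15 {d : ℕ} (X : Fin d → Type*) [∀ i, Fintype (X i)] [∀ i, DecidableEq (X i)]
    (hX : ∀ i, 2 ≤ Fintype.card (X i))
    (𝓕 : Set (∀ i, Set (Finset (X i))))
    (hequi : ∀ ℬ ∈ 𝓕, Equicomplementary X ℬ)
    (hpart : ∀ A : ∀ i, Finset (X i), (∀ i, (A i).Nonempty ∧ A i ≠ Finset.univ) →
      ∃! ℬ, ℬ ∈ 𝓕 ∧ ∀ i, A i ∈ ℬ i)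
    (lab : (∀ i, Finset (X i)) → (∀ i, Set (Finset (X i))))
    (hlab : ∀ A : ∀ i, Finset (X i), (∀ i, (A i).Nonempty ∧ A i ≠ Finset.univ) →
      lab A ∈ 𝓕 ∧ ∀ i, A i ∈ lab A i) :
    (∀ ℬ ∈ 𝓕, ∃ A : ∀ i, Finset (X i),
      (∀ i, (A i).Nonempty ∧ A i ≠ Finset.univ) ∧ lab A = ℬ) ∧
    (∀ (i : Fin d) (A C : ∀ i, Finset (X i)),
      (∀ j, (A j).Nonempty ∧ A j ≠ Finset.univ) →
      (∀ j, (C j).Nonempty ∧ C j ≠ Finset.univ) →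
      (∀ j, j ≠ i → A j = C j) →
      ({lab A, lab (Function.update A i (A i)ᶜ)} : Set (∀ i, Set (Finset (X i))))
        = {lab C, lab (Function.update C i (C i)ᶜ)}) := by
  classical
  -- complement of a nonempty proper set is nonempty proper
  have hcompl : ∀ (i : Fin d) (C : Finset (X i)), C.Nonempty → C ≠ Finset.univ →
      (Cᶜ).Nonempty ∧ Cᶜ ≠ Finset.univ := by
    intro i C h1 h2
    constructor
    · rw [Finset.nonempty_iff_ne_empty]
      simp only [ne_eq, Finset.compl_eq_empty_iff]
      exact h2
    · simp only [ne_eq, Finset.compl_eq_univ_iff]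
      exact h1.ne_empty
  -- uniqueness: lab A is the only member of 𝓕 containing a proper box A
  have huniq : ∀ (A : ∀ i, Finset (X i)), (∀ i, (A i).Nonempty ∧ A i ≠ Finset.univ) →
      ∀ ℬ ∈ 𝓕, (∀ i, A i ∈ ℬ i) → lab A = ℬ := by
    intro A hA ℬ hℬ hmem
    obtain ⟨B, hB, hBu⟩ := hpart A hA
    have h1 := hBu _ (hlab A hA)
    have h2 := hBu _ ⟨hℬ, hmem⟩
    rw [h1, h2]
  -- properness of the twin
  have htwin : ∀ (i : Fin d) (A : ∀ i, Finset (X i)),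
      (∀ j, (A j).Nonempty ∧ A j ≠ Finset.univ) →
      (∀ j, ((Function.update A i (A i)ᶜ) j).Nonempty ∧
        (Function.update A i (A i)ᶜ) j ≠ Finset.univ) := by
    intro i A hA j
    rcases eq_or_ne j i with rfl | hj
    · simpa using hcompl j (A j) (hA j).1 (hA j).2
    · simpa [Function.update_of_ne hj] using hA j
  constructor
  · -- surjectivity
    intro ℬ hℬ
    obtain ⟨h1, h2⟩ := hequi ℬ hℬ
    have hex : ∀ i, ∃ C : Finset (X i), (C.Nonempty ∧ C ≠ Finset.univ) ∧ C ∈ ℬ i := by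
      intro i
      have hpos : 0 < Fintype.card (X i) := lt_of_lt_of_le (by norm_num) (hX i)
      obtain ⟨x⟩ := Fintype.card_pos_iff.mp hpos
      have hxne : ({x} : Finset (X i)) ≠ Finset.univ := by
        intro h
        have : Fintype.card (X i) = 1 := by
          rw [← Finset.card_univ, ← h, Finset.card_singleton]
        have := hX i; omega
      have hxnonempty : ({x} : Finset (X i)).Nonempty := Finset.singleton_nonempty x
      by_cases hmem : ({x} : Finset (X i)) ∈ ℬ i
      · exact ⟨{x}, ⟨hxnonempty, hxne⟩, hmem⟩
      · refine ⟨({x} : Finset (X i))ᶜ, hcompl i _ hxnonempty hxne, ?_⟩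
        by_contra hc
        exact hmem ((h2 i {x} hxnonempty hxne).mpr hc)
    choose A hA1 hA2 using hex
    exact ⟨A, hA1, huniq A hA1 ℬ hℬ hA2⟩
  · -- twin pairs
    intro i A C hA hC hAC
    set A' := Function.update A i (A i)ᶜ with hA'def
    set C' := Function.update C i (C i)ᶜ with hC'def
    have hA' := htwin i A hA
    have hC' := htwin i C hC
    -- core: if B, E are proper boxes agreeing off i, then lab E = lab B or lab E' = lab B
    have core : ∀ (B E : ∀ i, Finset (X i)),
        (∀ j, (B j).Nonempty ∧ B j ≠ Finset.univ) →
        (∀ j, (E j).Nonempty ∧ E j ≠ Finset.univ) →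
        (∀ j, j ≠ i → B j = E j) →
        lab E = lab B ∨ lab (Function.update E i (E i)ᶜ) = lab B := by
      intro B E hB hE hBE
      obtain ⟨hlabB, hlabBmem⟩ := hlab B hB
      obtain ⟨hBpr, hBiff⟩ := hequi (lab B) hlabB
      by_cases hcase : E i ∈ lab B i
      · left
        refine huniq E hE (lab B) hlabB ?_
        intro j
        rcases eq_or_ne j i with rfl | hj
        · exact hcase
        · rw [← hBE j hj]; exact hlabBmem j
      · right
        have hEcompl : (E i)ᶜ ∈ lab B i := by
          by_contra hc
          exact hcase ((hBiff i (E i) (hE i).1 (hE i).2).mpr hc)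
        refine huniq _ (htwin i E hE) (lab B) hlabB ?_
        intro j
        rcases eq_or_ne j i with rfl | hj
        · simpa using hEcompl
        · rw [Function.update_of_ne hj, ← hBE j hj]; exact hlabBmem j
    have hACsymm : ∀ j, j ≠ i → C j = A j := fun j hj => (hAC j hj).symm
    have hA'C : ∀ j, j ≠ i → A' j = C j := fun j hj => by
      rw [hA'def, Function.update_of_ne hj]; exact hAC j hj
    have hC'A : ∀ j, j ≠ i → C' j = A j := fun j hj => by
      rw [hC'def, Function.update_of_ne hj]; exact (hAC j hj).symm
    have k1 := core A C hA hC hAC          -- lab C = lab A ∨ lab C' = lab A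
    have k2 := core A' C hA' hC hA'C       -- lab C = lab A' ∨ lab C' = lab A'
    have k3 := core C A hC hA hACsymm      -- lab A = lab C ∨ lab A' = lab C
    have k4 := core C' A hC' hA hC'A       -- lab A = lab C' ∨ lab A' = lab C'
    apply Set.eq_of_subset_of_subset
    · intro x hx
      rcases hx with rfl | hx
      · rcases k1 with h | h
        · exact Or.inl h.symm
        · exact Or.inr (by simp [← hC'def, h.symm])
      · simp only [Set.mem_singleton_iff] at hx
        subst hx
        rcases k2 with h | h
        · exact Or.inl h.symm
        · exact Or.inr (by simp [← hC'def, h.symm])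
    · intro x hx
      rcases hx with rfl | hx
      · rcases k3 with h | h
        · exact Or.inl h.symm
        · exact Or.inr (by simp [← hA'def, h.symm])
      · simp only [Set.mem_singleton_iff] at hx
        subst hx
        rcases k4 with h | h
        · exact Or.inl h.symm
        · exact Or.inr (by simp [← hA'def, h.symm])
end

section
/- For each proper suit F of a d-box X (a partition of X into pairwise dichotomous proper boxes) and each box C = C_1 × ... × C_d with some C_i ≠ X_i: the index of F relative to C, defined as Σ_{A∈F} Π_i ([A_i = C_i] − [A_i = X_i\C_i] + [C_i = X_i]), equals 0. In particular, if C is a proper box, the number of boxes of F belonging to {C^ε : ε ∈ {0,1}^d} (where C^ε flips the i-th factor to its complement whenever ε_i = 1) is even. -/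
/-!
With `χ_V(R) = (-1)^|V ∩ R|`, test a suit `𝓕` against boxes `R` all of whose factors have odd
size. The boxes `A ∩ R`, `A ∈ 𝓕`, partition `R`, so an odd number of them have all factors odd;
two such `A ≠ B` are dichotomous in some coordinate `i`, which would split `Rᵢ` into two odd
parts. Hence exactly one `A ∈ 𝓕` meets `R` oddly in every coordinate, i.e.
`∑_{A ∈ 𝓕} ∏ᵢ [|Rᵢ| odd ∧ |Aᵢ ∩ Rᵢ| odd] = ∏ᵢ [|Rᵢ| odd]` for every box `R`.
This identity is multilinear, so it persists after averaging each coordinate against a weight.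
By orthogonality of the characters `χ_V`, the weight `4 χ_{Cᵢᶜ}` turns the `i`-th factor into
`2^|Xᵢ|` times the `i`-th factor of the index, and the right-hand side becomes
`∏ᵢ 2^|Xᵢ| (2 [Cᵢ = Xᵢ])`, which vanishes as soon as some `Cᵢ ≠ Xᵢ`.
For proper `C`, the terms of the index are `±1` on the boxes `C^ε` and `0` elsewhere.
-/

open Finset
open scoped symmDiff

section ParityChar

variable {α : Type*} [DecidableEq α]

def parityChar (V R : Finset α) : ℤ := (-1) ^ #(V ∩ R)

lemma parityChar_eq_prod (V R : Finset α) :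
    parityChar V R = ∏ x ∈ R, if x ∈ V then -1 else 1 := by
  rw [parityChar, prod_ite_mem, prod_const, inter_comm]

@[simp]
lemma parityChar_empty (R : Finset α) : parityChar ∅ R = 1 := by
  simp [parityChar]

lemma parityChar_mul (V W R : Finset α) :
    parityChar V R * parityChar W R = parityChar (V ∆ W) R := by
  simp only [parityChar_eq_prod, ← prod_mul_distrib]
  refine prod_congr rfl fun x _ => ?_
  by_cases hV : x ∈ V <;> by_cases hW : x ∈ W <;> simp [mem_symmDiff, hV, hW]

variable [Fintype α]

lemma sum_parityChar (V : Finset α) :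
    ∑ R, parityChar V R = if V = ∅ then 2 ^ Fintype.card α else 0 := by
  simp only [parityChar_eq_prod]
  rw [← powerset_univ, ← prod_one_add]
  split_ifs with hV
  · simp [hV, one_add_one_eq_two]
  · obtain ⟨a, ha⟩ := nonempty_iff_ne_empty.2 hV
    exact prod_eq_zero (mem_univ a) (by simp [ha])

lemma sum_parityChar_mul (V W : Finset α) :
    ∑ R, parityChar V R * parityChar W R = if V = W then 2 ^ Fintype.card α else 0 := by
  simp only [parityChar_mul, sum_parityChar, ← bot_eq_empty, symmDiff_eq_bot]

lemma univ_symmDiff (S : Finset α) : univ ∆ S = Sᶜ := by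
  ext x; simp [mem_symmDiff]

def oddTest (S R : Finset α) : ℤ := if Odd #R ∧ Odd #(S ∩ R) then 1 else 0

lemma two_mul_ite_odd (n : ℕ) : 2 * (if Odd n then 1 else 0 : ℤ) = 1 - (-1) ^ n := by
  rcases Nat.even_or_odd n with h | h
  · simp [h.neg_one_pow, Nat.not_odd_iff_even.2 h]
  · simp [h.neg_one_pow, h]

lemma four_mul_oddTest (S R : Finset α) :
    4 * oddTest S R = (1 - parityChar univ R) * (1 - parityChar S R) := by
  rw [parityChar, parityChar, univ_inter, ← two_mul_ite_odd, ← two_mul_ite_odd, oddTest, ite_and]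
  split_ifs <;> norm_num

lemma sum_parityChar_mul_oddTest (V S : Finset α) :
    ∑ R, 4 * parityChar V R * oddTest S R = 2 ^ Fintype.card α *
      ((if V = ∅ then 1 else 0) - (if V = univ then 1 else 0) - (if V = S then 1 else 0)
        + (if V = Sᶜ then 1 else 0)) := by
  have hexpand : ∀ R, 4 * parityChar V R * oddTest S R =
      parityChar V R * parityChar ∅ R - parityChar V R * parityChar univ R
        - parityChar V R * parityChar S R + parityChar V R * parityChar Sᶜ R := by
    intro R
    rw [mul_comm 4, mul_assoc, four_mul_oddTest, parityChar_empty, ← univ_symmDiff, ← parityChar_mul]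
    ring
  simp only [hexpand, sum_add_distrib, sum_sub_distrib, sum_parityChar_mul]
  split_ifs <;> ring

end ParityChar

section IndexFactor

variable {α : Type*} [Fintype α] [DecidableEq α]

def indexFactor (C S : Finset α) : ℤ :=
  (if S = C then 1 else 0) - (if S = Cᶜ then 1 else 0) + (if C = univ then 1 else 0)

lemma sum_parityChar_compl_mul_oddTest {C : Finset α} (hC : C.Nonempty) (S : Finset α) :
    ∑ R, 4 * parityChar Cᶜ R * oddTest S R = 2 ^ Fintype.card α * indexFactor C S := by
  have hCc : Cᶜ ≠ univ := by rw [Ne, compl_eq_univ_iff]; exact hC.ne_empty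
  rw [sum_parityChar_mul_oddTest, indexFactor]
  simp only [compl_eq_empty_iff, hCc, if_false, compl_inj_iff, eq_comm (a := Cᶜ) (b := S),
    eq_comm (a := C) (b := S)]
  ring

lemma indexFactor_univ {C : Finset α} (hC : C.Nonempty) (hCU : C ≠ univ) :
    indexFactor C univ = 0 := by
  have hCc : univ ≠ Cᶜ := fun h => hC.ne_empty ((compl_eq_univ_iff C).1 h.symm)
  simp [indexFactor, hCU, Ne.symm hCU, hCc]

lemma indexFactor_eq_zero {C S : Finset α} (hCU : C ≠ univ) (hSC : S ≠ C) (hSCc : S ≠ Cᶜ) :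
    indexFactor C S = 0 := by
  simp [indexFactor, hCU, hSC, hSCc]

lemma odd_indexFactor {C S : Finset α} (hC : C.Nonempty) (hCU : C ≠ univ)
    (hS : S = C ∨ S = Cᶜ) : Odd (indexFactor C S) := by
  have hCc : C ≠ Cᶜ := by
    obtain ⟨x, hx⟩ := hC
    exact fun h => (mem_compl.1 (h ▸ hx)) hx
  rcases hS with rfl | rfl
  · simp [indexFactor, hCc, hCU]
  · simp [indexFactor, hCc.symm, hCU]

end IndexFactor

lemma Nat.odd_prod_iff {ι : Type*} {s : Finset ι} {f : ι → ℕ} :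
    Odd (∏ i ∈ s, f i) ↔ ∀ i ∈ s, Odd (f i) := by
  simp only [← Nat.not_even_iff_odd, even_iff_two_dvd, Nat.prime_two.prime.dvd_finsetProd_iff]
  push Not
  rfl

lemma Finset.even_card_of_sum_eq_zero {ι : Type*} {s : Finset ι} {t : ι → ℤ}
    (hodd : ∀ i ∈ s, Odd (t i)) (hsum : ∑ i ∈ s, t i = 0) : Even #s := by
  have hcard : (#s : ℤ) = ∑ i ∈ s, (1 - t i) := by
    rw [sum_sub_distrib, hsum, sub_zero, sum_const, nsmul_one]
  exact Int.even_coe_nat _ |>.1 <| hcard ▸ even_sum _ fun i hi => odd_one.sub_odd (hodd i hi)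

section Suit

variable {ι : Type*} [Fintype ι] [DecidableEq ι] {X : ι → Type*} [∀ i, Fintype (X i)]
  [∀ i, DecidableEq (X i)]

structure IsSuit (𝓕 : Finset (∀ i, Finset (X i))) : Prop where
  dichotomous : ∀ A ∈ 𝓕, ∀ B ∈ 𝓕, A ≠ B → ∃ i, A i = (B i)ᶜ
  covers : ∀ x : ∀ i, X i, ∃ A ∈ 𝓕, ∀ i, x i ∈ A i

namespace IsSuit

variable {𝓕 : Finset (∀ i, Finset (X i))}

lemma sum_prod_card_inter (h𝓕 : IsSuit 𝓕) (R : ∀ i, Finset (X i)) :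
    ∑ A ∈ 𝓕, ∏ i, #(A i ∩ R i) = ∏ i, #(R i) := by
  have hpart : 𝓕.biUnion (fun A => Fintype.piFinset fun i => A i ∩ R i) = Fintype.piFinset R := by
    ext x
    simp only [mem_biUnion, Fintype.mem_piFinset, mem_inter]
    refine ⟨fun ⟨_, _, hx⟩ i => (hx i).2, fun hx => ?_⟩
    obtain ⟨A, hA, hxA⟩ := h𝓕.covers x
    exact ⟨A, hA, fun i => ⟨hxA i, hx i⟩⟩
  have hdisj : (𝓕 : Set (∀ i, Finset (X i))).PairwiseDisjoint
      (fun A => Fintype.piFinset fun i => A i ∩ R i) := by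
    intro A hA B hB hAB
    obtain ⟨i, hi⟩ := h𝓕.dichotomous A hA B hB hAB
    refine disjoint_left.2 fun x hxA hxB => ?_
    have hxAi := (mem_inter.1 (Fintype.mem_piFinset.1 hxA i)).1
    rw [hi, mem_compl] at hxAi
    exact hxAi (mem_inter.1 (Fintype.mem_piFinset.1 hxB i)).1
  simp_rw [← Fintype.card_piFinset, ← card_biUnion hdisj, hpart]

lemma card_filter_odd_inter (h𝓕 : IsSuit 𝓕) {R : ∀ i, Finset (X i)} (hR : ∀ i, Odd #(R i)) :
    #{A ∈ 𝓕 | ∀ i, Odd #(A i ∩ R i)} = 1 := by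
  have hodd : Odd #{A ∈ 𝓕 | ∀ i, Odd #(A i ∩ R i)} := by
    have : Odd (∏ i, #(R i)) := Nat.odd_prod_iff.2 fun i _ => hR i
    rw [← h𝓕.sum_prod_card_inter, odd_sum_iff_odd_card_odd] at this
    simpa only [Nat.odd_prod_iff, mem_univ, true_imp_iff] using this
  refine le_antisymm (card_le_one.2 fun A hA B hB => ?_) hodd.pos
  rw [mem_filter] at hA hB
  by_contra hAB
  obtain ⟨i, hi⟩ := h𝓕.dichotomous A hA.1 B hB.1 hAB
  have hsplit : #(A i ∩ R i) + #(B i ∩ R i) = #(R i) := by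
    rw [hi, ← card_union_of_disjoint (disjoint_compl_left.mono inter_subset_left inter_subset_left),
      ← union_inter_distrib_right, union_comm, union_compl, univ_inter]
  have := hsplit ▸ (hA.2 i).add_odd (hB.2 i)
  exact Nat.not_even_iff_odd.2 (hR i) this

lemma sum_prod_oddTest (h𝓕 : IsSuit 𝓕) (R : ∀ i, Finset (X i)) :
    ∑ A ∈ 𝓕, ∏ i, oddTest (A i) (R i) = ∏ i, oddTest univ (R i) := by
  by_cases hR : ∀ i, Odd #(R i)
  · have hprod : ∀ A : ∀ i, Finset (X i),
        ∏ i, oddTest (A i) (R i) = if ∀ i, Odd #(A i ∩ R i) then 1 else 0 := by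
      intro A
      simp only [oddTest, hR, true_and, prod_boole, mem_univ, true_imp_iff]
    simp only [hprod, sum_boole, h𝓕.card_filter_odd_inter hR, univ_inter, hR, implies_true,
      if_true, Nat.cast_one]
  · obtain ⟨i, hi⟩ := not_forall.1 hR
    have hzero : ∀ S, oddTest S (R i) = 0 := fun S => if_neg fun h => hi h.1
    rw [prod_eq_zero (mem_univ i) (hzero univ)]
    exact sum_eq_zero fun A _ => prod_eq_zero (mem_univ i) (hzero (A i))

lemma sum_prod_sum_oddTest (h𝓕 : IsSuit 𝓕) (w : ∀ i, Finset (X i) → ℤ) :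
    ∑ A ∈ 𝓕, ∏ i, ∑ R, w i R * oddTest (A i) R = ∏ i, ∑ R, w i R * oddTest univ R := by
  simp only [Fintype.prod_sum, prod_mul_distrib]
  rw [sum_comm]
  simp only [← mul_sum, h𝓕.sum_prod_oddTest]

lemma sum_prod_indexFactor_eq_zero (h𝓕 : IsSuit 𝓕) {C : ∀ i, Finset (X i)}
    (hCne : ∀ i, (C i).Nonempty) (hC : ∃ i, C i ≠ univ) :
    ∑ A ∈ 𝓕, ∏ i, indexFactor (C i) (A i) = 0 := by
  obtain ⟨i₀, hi₀⟩ := hC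
  have hscaled := h𝓕.sum_prod_sum_oddTest fun i R => 4 * parityChar (C i)ᶜ R
  simp only [sum_parityChar_compl_mul_oddTest (hCne _), prod_mul_distrib, ← mul_sum] at hscaled
  have hunivFactor : ∏ i, indexFactor (C i) univ = 0 :=
    prod_eq_zero (mem_univ i₀) (indexFactor_univ (hCne i₀) hi₀)
  rw [hunivFactor, mul_zero] at hscaled
  exact (mul_eq_zero.1 hscaled).resolve_left (prod_ne_zero_iff.2 fun i _ => by positivity)

end IsSuit

end Suit

theorem stmt_16_general {d : ℕ} (X : Fin d → Type*) [∀ i, Fintype (X i)] [∀ i, DecidableEq (X i)]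
    (𝓕 : Finset (∀ i, Finset (X i)))
    (h𝓕d : ∀ A ∈ 𝓕, ∀ B ∈ 𝓕, A ≠ B → ∃ i, A i = (B i)ᶜ)
    (h𝓕u : ∀ x : ∀ i, X i, ∃ A ∈ 𝓕, ∀ i, x i ∈ A i)
    (C : ∀ i, Finset (X i)) (hCne : ∀ i, (C i).Nonempty) (hC : ∃ i, C i ≠ Finset.univ) :
    (∑ A ∈ 𝓕, ∏ i,
        ((if A i = C i then (1 : ℤ) else 0) - (if A i = (C i)ᶜ then 1 else 0)
          + (if C i = Finset.univ then 1 else 0))) = 0 ∧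
    ((∀ i, C i ≠ Finset.univ) →
      Even (𝓕.filter (fun A => ∀ i, A i = C i ∨ A i = (C i)ᶜ)).card) := by
  have hindex : ∑ A ∈ 𝓕, ∏ i, indexFactor (C i) (A i) = 0 :=
    IsSuit.sum_prod_indexFactor_eq_zero ⟨h𝓕d, h𝓕u⟩ hCne hC
  refine ⟨hindex, fun hCU => ?_⟩
  have hfilter : ∑ A ∈ 𝓕.filter (fun A => ∀ i, A i = C i ∨ A i = (C i)ᶜ),
      ∏ i, indexFactor (C i) (A i) = 0 := by
    rw [sum_filter_of_ne, hindex]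
    intro A _ hA i
    by_contra hAi
    push Not at hAi
    exact hA (prod_eq_zero (mem_univ i) (indexFactor_eq_zero (hCU i) hAi.1 hAi.2))
  refine even_card_of_sum_eq_zero (fun A hA => ?_) hfilter
  exact prod_induction _ Odd (fun _ _ => Odd.mul) odd_one fun i _ =>
    odd_indexFactor (hCne i) (hCU i) ((mem_filter.1 hA).2 i)

/-- for a proper suit `𝓕` of the whole `d`-box `X` and any box
`C` (nonempty factors) with some `Cᵢ ≠ Xᵢ`, the index of `𝓕` relative to `C`
vanishes; in particular when `C` is proper, the number of members of `𝓕` of the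
form `C^ε` is even. -/
theorem stmt_16 {d : ℕ} (X : Fin d → Type*) [∀ i, Fintype (X i)] [∀ i, DecidableEq (X i)]
    (hX : ∀ i, 2 ≤ Fintype.card (X i))
    (𝓕 : Finset (∀ i, Finset (X i)))
    (h𝓕p : ∀ A ∈ 𝓕, ∀ i, (A i).Nonempty ∧ A i ≠ Finset.univ)
    (h𝓕d : ∀ A ∈ 𝓕, ∀ B ∈ 𝓕, A ≠ B → ∃ i, A i = (B i)ᶜ)
    (h𝓕u : ∀ x : ∀ i, X i, ∃ A ∈ 𝓕, ∀ i, x i ∈ A i)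
    (C : ∀ i, Finset (X i)) (hCne : ∀ i, (C i).Nonempty) (hC : ∃ i, C i ≠ Finset.univ) :
    (∑ A ∈ 𝓕, ∏ i,
        ((if A i = C i then (1 : ℤ) else 0) - (if A i = (C i)ᶜ then 1 else 0)
          + (if C i = Finset.univ then 1 else 0))) = 0 ∧
    ((∀ i, C i ≠ Finset.univ) →
      Even (𝓕.filter (fun A => ∀ i, A i = C i ∨ A i = (C i)ᶜ)).card) :=
  stmt_16_general X 𝓕 h𝓕d h𝓕u C hCne hC
end
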